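/- arXiv:1912.12102 — 3 statements merged into one kernel-verified Lean document; each statement's English description precedes it below -/
import Mathlib

section
/- If D is a balanced quadriculated disk and N ≥ 4|D|, then all entries of the N-th power of the adjacency matrix A_D of the complex C_D are strictly positive. -/
/-- Unit squares of the plane, identified with their lower-left lattice corner. -/
abbrev Sq : Type := ℤ × ℤ
/-- Unit cubes of space, identified with their lower corner. -/
abbrev Cell : Type := ℤ × ℤ × ℤ

/-- Two unit squares are adjacent (share an edge). -/
def adj2 (s t : Sq) : Prop := (s.1 - t.1).natAbs + (s.2 - t.2).natAbs = 1

instance (s t : Sq) : Decidable (adj2 s t) := by unfold adj2; infer_instance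

/-- Two unit cubes are adjacent (share a face). -/
def adj3 (a b : Cell) : Prop :=
  (a.1 - b.1).natAbs + (a.2.1 - b.2.1).natAbs + (a.2.2 - b.2.2).natAbs = 1

/-- A finite set of squares is (edge-)connected. -/
def Conn2 (S : Finset Sq) : Prop :=
  ∀ a ∈ S, ∀ b ∈ S, Relation.ReflTransGen (fun x y => x ∈ S ∧ y ∈ S ∧ adj2 x y) a b

/-- A finite set of squares is simply connected: its complement is connected. -/
def SimplyConn (D : Finset Sq) : Prop :=
  ∀ a b : Sq, a ∉ D → b ∉ D →
    Relation.ReflTransGen (fun x y => x ∉ D ∧ y ∉ D ∧ adj2 x y) a b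

/-- A quadriculated disk: nonempty, connected and simply connected region. -/
def IsQuadDisk (D : Finset Sq) : Prop := D.Nonempty ∧ Conn2 D ∧ SimplyConn D

/-- A region is balanced if it has as many black as white squares. -/
def BalancedRegion (p : Finset Sq) : Prop :=
  (p.filter (fun s => (s.1 + s.2) % 2 = 0)).card
    = (p.filter (fun s => ¬((s.1 + s.2) % 2 = 0))).card

instance : DecidablePred BalancedRegion := fun p => by unfold BalancedRegion; infer_instance

/-- The plugs of `D`: balanced subregions of `D`. -/
def plugs (D : Finset Sq) : Finset (Finset Sq) := D.powerset.filter BalancedRegion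

/-- A domino tiling of a planar region `S`: a set of dominoes (pairs of adjacent
squares) covering each square of `S` exactly once. -/
def IsTiling2 (S : Finset Sq) (T : Finset (Sym2 Sq)) : Prop :=
  (∀ e ∈ T, ∃ a b : Sq, a ∈ S ∧ b ∈ S ∧ adj2 a b ∧ e = s(a, b)) ∧
  (∀ x ∈ S, ∃! e, e ∈ T ∧ x ∈ e)

/-- A domino tiling of a spatial region `R`. -/
def IsTiling3 (R : Finset Cell) (T : Finset (Sym2 Cell)) : Prop :=
  (∀ e ∈ T, ∃ a b : Cell, a ∈ R ∧ b ∈ R ∧ adj3 a b ∧ e = s(a, b)) ∧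
  (∀ x ∈ R, ∃! e, e ∈ T ∧ x ∈ e)

/-- The cork: cells of `D × [zlo, zhi]` (floors indexed by `zlo ≤ z ≤ zhi`),
with the plug `p` removed from the bottom floor and `q` from the top floor. -/
noncomputable def cork (D p q : Finset Sq) (zlo zhi : ℤ) : Finset Cell :=
  ((D ×ˢ Finset.Icc zlo zhi).filter
      (fun sz => ¬(sz.2 = zlo ∧ sz.1 ∈ p) ∧ ¬(sz.2 = zhi ∧ sz.1 ∈ q))).image
    (fun sz => (sz.1.1, sz.1.2, sz.2))

/-- The adjacency matrix of the complex `C_D`, indexed by plugs: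
`A p q` is the number of domino tilings of `D` minus `p ∪ q` when the plugs
are disjoint, and `0` otherwise. -/
noncomputable def corkMatrix (D : Finset Sq) :
    Matrix {p // p ∈ plugs D} {p // p ∈ plugs D} ℕ :=
  fun p q =>
    if Disjoint p.1 q.1 then Set.ncard {T | IsTiling2 (D \ (p.1 ∪ q.1)) T} else 0

/-- Unit vectors in space. -/
def unit3 (u : Cell) : Prop := u.1.natAbs + u.2.1.natAbs + u.2.2.natAbs = 1

/-- A flip: two parallel adjacent dominoes filling a `2 × 2 × 1` box are removed
and placed back in the other position. -/
def Flip3 (T T' : Finset (Sym2 Cell)) : Prop :=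
  ∃ a u v : Cell, unit3 u ∧ unit3 v ∧ u ≠ v ∧ u ≠ -v ∧
    s(a, a + u) ∈ T ∧ s(a + v, a + u + v) ∈ T ∧
    T' = (T \ {s(a, a + u), s(a + v, a + u + v)}) ∪ {s(a, a + v), s(a + u, a + u + v)}

/-- Two 3D tilings are joined by a finite sequence of flips. -/
def FlipEquiv3 (T T' : Finset (Sym2 Cell)) : Prop :=
  Relation.ReflTransGen (fun t t' => Flip3 t t' ∨ Flip3 t' t) T T'

/-- A planar flip inside a `2 × 2` square. -/
def Flip2 (T T' : Finset (Sym2 Sq)) : Prop :=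
  ∃ a : Sq, s(a, a + ((1 : ℤ), (0 : ℤ))) ∈ T ∧
    s(a + ((0 : ℤ), (1 : ℤ)), a + ((1 : ℤ), (1 : ℤ))) ∈ T ∧
    T' = (T \ {s(a, a + ((1 : ℤ), (0 : ℤ))),
               s(a + ((0 : ℤ), (1 : ℤ)), a + ((1 : ℤ), (1 : ℤ)))})
         ∪ {s(a, a + ((0 : ℤ), (1 : ℤ))),
            s(a + ((1 : ℤ), (0 : ℤ)), a + ((1 : ℤ), (1 : ℤ)))}

/-- Two planar tilings are joined by a finite sequence of flips. -/
def FlipEquiv2 (T T' : Finset (Sym2 Sq)) : Prop :=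
  Relation.ReflTransGen (fun t t' => Flip2 t t' ∨ Flip2 t' t) T T'

/-- Reflection of space in the `xy`-plane, on cells. -/
def reflZ (c : Cell) : Cell := (c.1, c.2.1, -1 - c.2.2)

/-- A vertical domino. -/
def VertDomino (e : Sym2 Cell) : Prop :=
  ∃ x y z : ℤ, e = s(((x, y, z) : Cell), ((x, y, z + 1) : Cell))
/-! Section A: basics -/

def White (s : Sq) : Prop := (s.1 + s.2) % 2 = 0

instance : DecidablePred White := fun s => by unfold White; infer_instance

lemma adj2_ne {a b : Sq} (h : adj2 a b) : a ≠ b := by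
  rintro rfl; unfold adj2 at h; omega

lemma adj2_symm {a b : Sq} (h : adj2 a b) : adj2 b a := by
  unfold adj2 at *; omega

lemma adj2_color {a b : Sq} (h : adj2 a b) : White a ↔ ¬ White b := by
  unfold adj2 at h; unfold White; omega

lemma tiling_empty : IsTiling2 ∅ ∅ := by
  constructor
  · intro e he; simp at he
  · intro x hx; simp at hx

lemma tiling_add {S : Finset Sq} {T : Finset (Sym2 Sq)} (hT : IsTiling2 S T)
    {a b : Sq} (hab : adj2 a b) (ha : a ∉ S) (hb : b ∉ S) :
    IsTiling2 (insert a (insert b S)) (insert s(a, b) T) := by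
  obtain ⟨h1, h2⟩ := hT
  have hmemS : ∀ e ∈ T, ∀ x, x ∈ e → x ∈ S := by
    intro e he x hx
    obtain ⟨c, d, hc, hd, -, rfl⟩ := h1 e he
    rcases Sym2.mem_iff.mp hx with rfl | rfl <;> assumption
  constructor
  · intro e he
    rcases Finset.mem_insert.mp he with rfl | he'
    · exact ⟨a, b, by simp, by simp [Finset.mem_insert], hab, rfl⟩
    · obtain ⟨c, d, hc, hd, hcd, rfl⟩ := h1 e he'
      exact ⟨c, d, by simp [hc], by simp [hd], hcd, rfl⟩
  · intro x hx
    rcases Finset.mem_insert.mp hx with rfl | hx'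
    · refine ⟨s(x, b), ⟨Finset.mem_insert_self _ _, by simp⟩, ?_⟩
      rintro e ⟨he, hxe⟩
      rcases Finset.mem_insert.mp he with rfl | he'
      · rfl
      · exact absurd (hmemS e he' x hxe) ha
    rcases Finset.mem_insert.mp hx' with rfl | hx''
    · refine ⟨s(a, x), ⟨Finset.mem_insert_self _ _, by simp⟩, ?_⟩
      rintro e ⟨he, hxe⟩
      rcases Finset.mem_insert.mp he with rfl | he'
      · rfl
      · exact absurd (hmemS e he' x hxe) hb
    · obtain ⟨e, ⟨heT, hxe⟩, huniq⟩ := h2 x hx''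
      refine ⟨e, ⟨Finset.mem_insert_of_mem heT, hxe⟩, ?_⟩
      rintro e' ⟨he', hxe'⟩
      rcases Finset.mem_insert.mp he' with rfl | he''
      · rcases Sym2.mem_iff.mp hxe' with rfl | rfl
        · exact absurd hx'' ha
        · exact absurd hx'' hb
      · exact huniq e' ⟨he'', hxe'⟩
/-! Section B: tiling and balancedness of even nodup paths -/

lemma path_step (n : ℕ) :
    ∀ l : List Sq, l.length = n → l.Chain' adj2 → l.Nodup → Even l.length →
      (∃ T, IsTiling2 l.toFinset T) ∧ BalancedRegion l.toFinset := by
  induction n using Nat.strong_induction_on with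
  | _ n ih =>
    rintro (_ | ⟨a, _ | ⟨b, rest⟩⟩) hlen hchain hnodup heven
    · refine ⟨⟨∅, ?_⟩, ?_⟩
      · simpa using tiling_empty
      · simp [BalancedRegion]
    · exact absurd heven (by simp [Nat.even_iff])
    · have hab : adj2 a b := (List.isChain_cons_cons.mp hchain).1
      have hchain' : rest.Chain' adj2 := ((List.isChain_cons_cons.mp hchain).2).tail
      have hnod' : rest.Nodup := (hnodup.of_cons).of_cons
      have ha : a ∉ rest := by
        have := hnodup; simp [List.nodup_cons] at this; tauto
      have hb : b ∉ rest := by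
        have := hnodup; simp [List.nodup_cons] at this; tauto
      have hne : a ≠ b := adj2_ne hab
      have heven' : Even rest.length := by
        simp only [List.length_cons] at heven ⊢
        rcases heven with ⟨k, hk⟩
        exact ⟨k - 1, by omega⟩
      obtain ⟨⟨T, hT⟩, hbalr⟩ := ih rest.length
        (by simp only [List.length_cons] at hlen; omega) rest rfl hchain' hnod' heven'
      have hset : (a :: b :: rest).toFinset = insert a (insert b rest.toFinset) := by
        simp
      have ha' : a ∉ rest.toFinset := by simpa using ha
      have hb' : b ∉ rest.toFinset := by simpa using hb
      constructor
      · refine ⟨insert s(a, b) T, ?_⟩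
        rw [hset]
        exact tiling_add hT hab (by simp [ha', hne]) hb'
      · rw [hset]
        have hcol := adj2_color hab
        unfold BalancedRegion at hbalr ⊢
        rw [Finset.filter_insert, Finset.filter_insert, Finset.filter_insert,
          Finset.filter_insert]
        have hma : a ∉ rest.toFinset.filter (fun s => (s.1 + s.2) % 2 = 0) := by
          simp [ha']
        have hma' : a ∉ rest.toFinset.filter (fun s => ¬((s.1 + s.2) % 2 = 0)) := by
          simp [ha']
        have hmb : b ∉ rest.toFinset.filter (fun s => (s.1 + s.2) % 2 = 0) := by
          simp [hb']
        have hmb' : b ∉ rest.toFinset.filter (fun s => ¬((s.1 + s.2) % 2 = 0)) := by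
          simp [hb']
        by_cases h1 : (a.1 + a.2) % 2 = 0 <;> by_cases h2 : (b.1 + b.2) % 2 = 0
        · exact absurd hcol (by simp [White, h1, h2])
        · rw [if_pos h1, if_neg h2, if_neg (not_not_intro h1), if_pos h2,
            Finset.card_insert_of_notMem hma, Finset.card_insert_of_notMem hmb']
          omega
        · rw [if_neg h1, if_pos h2, if_pos h1, if_neg (not_not_intro h2),
            Finset.card_insert_of_notMem hmb, Finset.card_insert_of_notMem hma']
          omega
        · exact absurd hcol (by simp [White, h1, h2])
/-! Section C: balanced set operations -/

lemma filter_sdiff' (D X : Finset Sq) (P : Sq → Prop) [DecidablePred P] :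
    (D \ X).filter P = D.filter P \ X.filter P := by
  ext s; simp only [Finset.mem_filter, Finset.mem_sdiff]; tauto

lemma balReg_empty : BalancedRegion (∅ : Finset Sq) := by simp [BalancedRegion]

lemma balanced_card_even {S : Finset Sq} (h : BalancedRegion S) : Even S.card := by
  have := Finset.card_filter_add_card_filter_not
    (s := S) (p := fun s : Sq => (s.1 + s.2) % 2 = 0)
  unfold BalancedRegion at h
  exact ⟨(S.filter (fun s : Sq => (s.1 + s.2) % 2 = 0)).card, by omega⟩

lemma balanced_sdiff {D X : Finset Sq} (hD : BalancedRegion D) (hX : BalancedRegion X)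
    (hXD : X ⊆ D) : BalancedRegion (D \ X) := by
  unfold BalancedRegion at *
  rw [filter_sdiff', filter_sdiff',
    Finset.card_sdiff_of_subset (Finset.filter_subset_filter _ hXD),
    Finset.card_sdiff_of_subset (Finset.filter_subset_filter _ hXD)]
  have h1 := Finset.card_le_card (Finset.filter_subset_filter
    (fun s : Sq => (s.1 + s.2) % 2 = 0) hXD)
  omega

lemma balanced_union {S E : Finset Sq} (hd : Disjoint S E) (hS : BalancedRegion S)
    (hE : BalancedRegion E) : BalancedRegion (S ∪ E) := by
  unfold BalancedRegion at *
  rw [Finset.filter_union, Finset.filter_union,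
    Finset.card_union_of_disjoint (hd.mono (Finset.filter_subset _ _) (Finset.filter_subset _ _)),
    Finset.card_union_of_disjoint (hd.mono (Finset.filter_subset _ _) (Finset.filter_subset _ _))]
  omega

lemma balanced_both_colors {S : Finset Sq} (hS : BalancedRegion S) (hne : S.Nonempty) :
    ∃ a ∈ S, ∃ b ∈ S, White a ∧ ¬ White b := by
  unfold BalancedRegion at hS
  have hsum := Finset.card_filter_add_card_filter_not
    (s := S) (p := fun s : Sq => (s.1 + s.2) % 2 = 0)
  have hcard : 0 < S.card := Finset.card_pos.mpr hne
  have h1 : 0 < (S.filter (fun s : Sq => (s.1 + s.2) % 2 = 0)).card := by omega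
  have h2 : 0 < (S.filter (fun s : Sq => ¬((s.1 + s.2) % 2 = 0))).card := by omega
  obtain ⟨a, ha⟩ := Finset.card_pos.mp h1
  obtain ⟨b, hb⟩ := Finset.card_pos.mp h2
  rw [Finset.mem_filter] at ha hb
  exact ⟨a, ha.1, b, hb.1, ha.2, hb.2⟩

lemma mem_plugs {D p : Finset Sq} : p ∈ plugs D ↔ p ⊆ D ∧ BalancedRegion p := by
  unfold plugs
  rw [Finset.mem_filter, Finset.mem_powerset]
/-! Section D: edges, walks and matrix positivity -/

def PEdge (D p q : Finset Sq) : Prop :=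
  Disjoint p q ∧ ∃ T, IsTiling2 (D \ (p ∪ q)) T

lemma PEdge.symm {D p q : Finset Sq} (h : PEdge D p q) : PEdge D q p := by
  obtain ⟨hd, T, hT⟩ := h
  exact ⟨hd.symm, T, by rwa [Finset.union_comm]⟩

lemma tilings_finite (S : Finset Sq) : {T : Finset (Sym2 Sq) | IsTiling2 S T}.Finite := by
  apply Set.Finite.subset (((S ×ˢ S).image (fun ab => s(ab.1, ab.2))).powerset.finite_toSet)
  intro T hT
  simp only [Finset.coe_powerset, Set.mem_preimage, Set.mem_powerset_iff,
    Finset.coe_image, Finset.coe_product]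
  intro e he
  obtain ⟨a, b, ha, hb, -, rfl⟩ := hT.1 e he
  exact ⟨(a, b), Set.mem_prod.mpr ⟨ha, hb⟩, rfl⟩

lemma corkMatrix_pos_of_edge {D : Finset Sq} (p q : {p // p ∈ plugs D})
    (h : PEdge D p.1 q.1) : 0 < corkMatrix D p q := by
  obtain ⟨hd, T, hT⟩ := h
  unfold corkMatrix
  rw [if_pos hd]
  exact (Set.ncard_pos (tilings_finite _)).mpr ⟨T, hT⟩

def ReachN (D : Finset Sq) : ℕ → {p // p ∈ plugs D} → {p // p ∈ plugs D} → Prop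
  | 0, p, q => p = q
  | n + 1, p, q => ∃ r, PEdge D p.1 r.1 ∧ ReachN D n r q

lemma ReachN.trans {D : Finset Sq} :
    ∀ {m n : ℕ} {p r q : {p // p ∈ plugs D}},
      ReachN D m p r → ReachN D n r q → ReachN D (m + n) p q := by
  intro m
  induction m with
  | zero => intro n p r q h1 h2; cases h1; simpa using h2
  | succ m ih =>
    intro n p r q h1 h2
    obtain ⟨s, hs, h1'⟩ := h1
    rw [Nat.succ_add]
    exact ⟨s, hs, ih h1' h2⟩

lemma ReachN.single {D : Finset Sq} {p q : {p // p ∈ plugs D}} (h : PEdge D p.1 q.1) :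
    ReachN D 1 p q := ⟨q, h, rfl⟩

lemma ReachN.symm {D : Finset Sq} :
    ∀ {n : ℕ} {p q : {p // p ∈ plugs D}}, ReachN D n p q → ReachN D n q p := by
  intro n
  induction n with
  | zero => intro p q h; exact (show q = p from (show p = q from h).symm)
  | succ n ih =>
    intro p q h
    obtain ⟨r, hr, h'⟩ := h
    have : ReachN D (n + 1) q p := ReachN.trans (ih h') (ReachN.single hr.symm)
    exact this

lemma pow_pos_of_reach {D : Finset Sq} :
    ∀ {n : ℕ} {p q : {p // p ∈ plugs D}}, ReachN D n p q →
      0 < (corkMatrix D ^ n) p q := by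
  intro n
  induction n with
  | zero =>
    intro p q h; cases h
    simp [Matrix.one_apply_eq]
  | succ n ih =>
    intro p q h
    obtain ⟨r, hr, h'⟩ := h
    rw [pow_succ']
    rw [Matrix.mul_apply]
    have hterm : 0 < corkMatrix D p r * (corkMatrix D ^ n) r q :=
      Nat.mul_pos (corkMatrix_pos_of_edge p r hr) (ih h')
    calc 0 < corkMatrix D p r * (corkMatrix D ^ n) r q := hterm
      _ ≤ ∑ j, corkMatrix D p j * (corkMatrix D ^ n) j q :=
        Finset.single_le_sum (f := fun j => corkMatrix D p j * (corkMatrix D ^ n) j q)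
          (fun j _ => Nat.zero_le _) (Finset.mem_univ r)
/-! Section E: paths in D -/

lemma conn_to_list {D : Finset Sq} (hconn : Conn2 D) {a b : Sq} (ha : a ∈ D) (hb : b ∈ D) :
    ∃ l : List Sq, l.Chain' adj2 ∧ (∀ x ∈ l, x ∈ D) ∧
      l.head? = some a ∧ l.getLast? = some b := by
  have h := hconn a ha b hb
  clear hb
  induction h with
  | refl => exact ⟨[a], List.isChain_singleton _, by simpa using ha, rfl, rfl⟩
  | @tail b' c' hab hbc ih =>
    obtain ⟨l, hch, hmem, hhd, hlast⟩ := ih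
    refine ⟨l ++ [c'], ?_, ?_, ?_, ?_⟩
    · refine List.isChain_append.mpr ?_
      refine ⟨hch, List.isChain_singleton _, ?_⟩
      intro x hx y hy
      simp at hy
      subst hy
      rw [hlast] at hx
      simp at hx
      subst hx
      exact hbc.2.2
    · intro x hx
      rcases List.mem_append.mp hx with h | h
      · exact hmem x h
      · simp at h; subst h; exact hbc.2.1
    · rw [List.head?_append_of_ne_nil]  -- head of append when l ≠ []
      · exact hhd
      · intro h; subst h; simp at hhd
    · rw [List.getLast?_append_of_ne_nil _ (by simp)]
      simp
/-! shorten a non-nodup chain -/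

lemma chain_shorten :
    ∀ l : List Sq, l.Chain' adj2 → ¬ l.Nodup →
      ∃ l' : List Sq, l'.length < l.length ∧ l'.Chain' adj2 ∧
        l'.head? = l.head? ∧ l'.getLast? = l.getLast? ∧ ∀ x ∈ l', x ∈ l := by
  intro l
  induction l with
  | nil => intro _ h; exact absurd List.nodup_nil h
  | cons x xs ih =>
    intro hch hnd
    by_cases hx : x ∈ xs
    · obtain ⟨ys, zs, rfl⟩ := List.append_of_mem hx
      have heq : x :: (ys ++ x :: zs) = (x :: ys) ++ (x :: zs) := by simp
      refine ⟨x :: zs, by simp, ?_, rfl, ?_, ?_⟩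
      · rw [heq] at hch
        exact (List.isChain_append.mp hch).2.1
      · rw [show ((x :: (ys ++ x :: zs)).getLast? = ((x :: ys) ++ (x :: zs)).getLast?) from by rw [heq],
          List.getLast?_append_of_ne_nil _ (by simp)]
      · intro y hy
        rcases List.mem_cons.mp hy with rfl | hy'
        · simp
        · simp [hy']
    · have hxs : ¬ xs.Nodup := by
        intro h; exact hnd (List.nodup_cons.mpr ⟨hx, h⟩)
      have hchxs : xs.Chain' adj2 := hch.tail
      obtain ⟨l', hlen, hch', hhd, hlast, hmem⟩ := ih hchxs hxs
      have hne : xs ≠ [] := by rintro rfl; exact hxs List.nodup_nil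
      have hne' : l' ≠ [] := by
        rintro rfl
        exact hne (List.head?_eq_none_iff.mp (by simpa using hhd.symm))
      refine ⟨x :: l', by simpa using hlen, ?_, rfl, ?_, ?_⟩
      · refine List.isChain_cons.mpr ?_
        refine ⟨?_, hch'⟩
        intro y hy
        rw [hhd] at hy
        have := (List.isChain_cons.mp hch).1
        exact this y hy
      · obtain ⟨y, t, rfl⟩ := List.exists_cons_of_ne_nil hne'
        obtain ⟨z, t2, rfl⟩ := List.exists_cons_of_ne_nil hne
        rw [List.getLast?_cons_cons, List.getLast?_cons_cons]
        simpa using hlast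
      · intro y hy
        rcases List.mem_cons.mp hy with rfl | hy'
        · simp
        · simp [hmem y hy']
/-! parity along a chain -/

lemma chain_parity :
    ∀ (l : List Sq) (a b : Sq), l.Chain' adj2 → l.head? = some a →
      l.getLast? = some b → (¬(White a ↔ White b) ↔ Even l.length) := by
  intro l
  induction l with
  | nil => intro a b _ h; simp at h
  | cons x xs ih =>
    intro a b hch hhd hlast
    have hax : x = a := by simpa using hhd
    subst hax
    cases xs with
    | nil =>
      have : x = b := by simpa using hlast
      subst this
      simp [Nat.even_iff]
    | cons y rest =>
      have hxy : adj2 x y := (List.isChain_cons_cons.mp hch).1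
      have hcol := adj2_color hxy
      have hlast' : (y :: rest).getLast? = some b := by
        rwa [List.getLast?_cons_cons] at hlast
      have hIH := ih y b (List.isChain_cons_cons.mp hch).2 rfl hlast'
      simp only [List.length_cons] at hIH ⊢
      rw [Nat.even_add_one]
      rw [← hIH]
      tauto

/-! the clean geodesic pair -/

lemma exists_clean_path {D S : Finset Sq} (hconn : Conn2 D) (hSD : S ⊆ D)
    (hbal : BalancedRegion S) (hne : S.Nonempty) :
    ∃ (a : Sq) (mid : List Sq) (b : Sq),
      (a :: mid ++ [b]).Chain' adj2 ∧ (a :: mid ++ [b]).Nodup ∧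
      (∀ x ∈ a :: mid ++ [b], x ∈ D) ∧ a ∈ S ∧ b ∈ S ∧ (∀ x ∈ mid, x ∉ S) ∧
      ¬(White a ↔ White b) := by
  classical
  set Cand : ℕ → Prop := fun n =>
    ∃ (l : List Sq) (a b : Sq), l.Chain' adj2 ∧ (∀ x ∈ l, x ∈ D) ∧
      l.head? = some a ∧ l.getLast? = some b ∧ a ∈ S ∧ b ∈ S ∧
      ¬(White a ↔ White b) ∧ l.length = n with hCand
  have hex : ∃ n, Cand n := by
    obtain ⟨a, haS, b, hbS, hWa, hWb⟩ := balanced_both_colors hbal hne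
    obtain ⟨l, hch, hmem, hhd, hlast⟩ := conn_to_list hconn (hSD haS) (hSD hbS)
    exact ⟨l.length, l, a, b, hch, hmem, hhd, hlast, haS, hbS, by tauto, rfl⟩
  obtain ⟨l, a, b, hch, hmem, hhd, hlast, haS, hbS, hcol, hlen⟩ := Nat.find_spec hex
  have hmin := fun m (hm : m < Nat.find hex) => Nat.find_min hex hm
  have hab : a ≠ b := by
    intro h; subst h; exact hcol (Iff.rfl)
  -- l has length ≥ 2
  have hlen2 : 2 ≤ l.length := by
    match l, hhd, hlast with
    | [], hhd, _ => simp at hhd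
    | [x], hhd, hlast => simp at hhd hlast; exact absurd (hhd.symm.trans hlast) hab
    | x :: y :: t, _, _ => simp
  -- l is nodup
  have hnodup : l.Nodup := by
    by_contra hnd
    obtain ⟨l', hl1, hl2, hl3, hl4, hl5⟩ := chain_shorten l hch hnd
    exact hmin l'.length (by omega) ⟨l', a, b, hl2, fun x hx => hmem x (hl5 x hx),
      hl3.trans hhd, hl4.trans hlast, haS, hbS, hcol, rfl⟩
  -- decompose l = a :: mid ++ [b]
  obtain ⟨a', tail, rfl⟩ := List.exists_cons_of_ne_nil
    (show l ≠ [] by rintro rfl; simp at hhd)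
  have ha' : a' = a := by simpa using hhd
  subst ha'
  rcases List.eq_nil_or_concat tail with rfl | ⟨mid, b', htail⟩
  · simp at hlen2
  subst htail
  simp only [List.concat_eq_append] at hch hmem hnodup hhd hlast hlen hlen2
  have hb' : b' = b := by
    have hgl : (a' :: (mid ++ [b'])).getLast? = some b' := by
      rw [show (a' :: (mid ++ [b']) : List Sq) = (a' :: mid) ++ [b'] by simp,
        List.getLast?_append_of_ne_nil _ (by simp)]
      simp
    rw [hgl] at hlast
    simpa using hlast
  subst hb'
  refine ⟨a', mid, b', hch, hnodup, hmem, haS, hbS, ?_, hcol⟩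
  -- interior avoids S
  intro x hx hxS
  obtain ⟨m1, m2, hmm⟩ := List.append_of_mem hx
  subst hmm
  have hsplit : (a' :: ((m1 ++ x :: m2) ++ [b']) : List Sq)
      = (a' :: m1) ++ (x :: (m2 ++ [b'])) := by simp
  rw [hsplit] at hch
  have hparts := List.isChain_append.mp hch
  have hlenl : (a' :: ((m1 ++ x :: m2) ++ [b'])).length = Nat.find hex := by
    simpa using hlen
  by_cases hWx : White x ↔ White b'
  · -- use prefix a' :: m1 ++ [x]
    have hchp : ((a' :: m1) ++ [x]).Chain' adj2 := by
      refine List.isChain_append.mpr ?_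
      refine ⟨hparts.1, List.isChain_singleton _, ?_⟩
      intro u hu v hv
      simp at hv
      subst hv
      exact hparts.2.2 u hu x rfl
    refine hmin ((a' :: m1) ++ [x]).length ?_ ⟨(a' :: m1) ++ [x], a', x, hchp, ?_, ?_, ?_,
      haS, hxS, by tauto, rfl⟩
    · simp only [List.length_cons, List.length_append, List.length_singleton] at hlenl ⊢; omega
    · intro y hy
      apply hmem
      simp at hy ⊢
      tauto
    · rw [List.head?_append_of_ne_nil]
      · rfl
      · simp
    · rw [List.getLast?_append_of_ne_nil _ (by simp)]
      simp
  · -- use suffix x :: m2 ++ [b']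
    have hchs : (x :: (m2 ++ [b'])).Chain' adj2 := hparts.2.1
    refine hmin (x :: (m2 ++ [b'])).length ?_ ⟨x :: (m2 ++ [b']), x, b', hchs, ?_, rfl, ?_,
      hxS, hbS, by tauto, rfl⟩
    · simp only [List.length_cons, List.length_append, List.length_singleton] at hlenl ⊢; omega
    · intro y hy
      apply hmem
      simp at hy ⊢
      tauto
    · rw [show (x :: (m2 ++ [b']) : List Sq) = (x :: m2) ++ [b'] by simp,
        List.getLast?_append_of_ne_nil _ (by simp)]
      simp
/-! Section F: the two-step pair removal -/

lemma balanced_pair {a b : Sq} (hne : a ≠ b) (hcol : ¬(White a ↔ White b)) :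
    BalancedRegion ({a, b} : Finset Sq) := by
  unfold BalancedRegion
  rw [show ({a, b} : Finset Sq) = insert a {b} from rfl, Finset.filter_insert,
    Finset.filter_insert, Finset.filter_singleton, Finset.filter_singleton]
  by_cases h1 : (a.1 + a.2) % 2 = 0 <;> by_cases h2 : (b.1 + b.2) % 2 = 0
  · exact absurd hcol (by simp [White, h1, h2])
  · simp [h1, h2]
  · simp [h1, h2]
  · exact absurd hcol (by simp [White, h1, h2])

set_option maxHeartbeats 1000000 in
lemma pair_removal {D : Finset Sq} (hconn : Conn2 D) (hDbal : BalancedRegion D)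
    {S : Finset Sq} (hSD : S ⊆ D) (hbal : BalancedRegion S) (hne : S.Nonempty) :
    ∃ (r S' : Finset Sq), r ∈ plugs D ∧ S' ∈ plugs D ∧ PEdge D S r ∧ PEdge D r S' ∧
      S'.card + 2 = S.card := by
  obtain ⟨a, mid, b, hch, hnodup, hmem, haS, hbS, hmidS, hcol⟩ :=
    exists_clean_path hconn hSD hbal hne
  set l : List Sq := a :: mid ++ [b] with hl
  have hhd : l.head? = some a := rfl
  have hlast : l.getLast? = some b := by
    rw [show l = (a :: mid) ++ [b] by simp [hl],
      List.getLast?_append_of_ne_nil _ (by simp)]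
    simp
  have hlenl : l.length = mid.length + 2 := by simp [hl]
  have hevenl : Even l.length := (chain_parity l a b hch hhd hlast).mp hcol
  have hevenmid : Even mid.length := by
    rcases hevenl with ⟨k, hk⟩
    rw [hlenl] at hk
    exact ⟨k - 1, by omega⟩
  have hch' : ((a :: mid) ++ [b]).Chain' adj2 := by
    rw [List.cons_append]
    exact hch
  have hchmid : mid.Chain' adj2 := ((List.isChain_append.mp hch').1).tail
  have hnodmid : mid.Nodup := by
    have hsub : List.Sublist mid l := by
      rw [hl]
      exact ((mid.sublist_append_left [b]).cons a)
    exact hnodup.sublist hsub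
  have hab : a ≠ b := by intro h; subst h; exact hcol Iff.rfl
  have haE : a ∉ mid := by
    have := hnodup
    simp [hl, List.nodup_cons] at this
    tauto
  have hbE : b ∉ mid := by
    have := hnodup
    rw [hl, show (a :: mid ++ [b] : List Sq) = (a :: mid) ++ [b] by simp] at this
    have := List.disjoint_of_nodup_append this
    intro hbmid
    exact this (show b ∈ a :: mid by simp [hbmid]) (show b ∈ [b] by simp)
  obtain ⟨⟨TE, hTE⟩, hbalE⟩ := path_step mid.length mid rfl hchmid hnodmid hevenmid
  obtain ⟨⟨TF, hTF⟩, hbalF⟩ := path_step l.length l rfl hch hnodup hevenl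
  obtain ⟨E, hE⟩ : ∃ E : Finset Sq, E = mid.toFinset := ⟨_, rfl⟩
  obtain ⟨F, hF⟩ : ∃ F : Finset Sq, F = l.toFinset := ⟨_, rfl⟩
  rw [← hE] at hbalE hTE
  rw [← hF] at hbalF hTF
  have hmemE : ∀ x, x ∈ E ↔ x ∈ mid := by intro x; rw [hE, List.mem_toFinset]
  have hmemF : ∀ x, x ∈ F ↔ (x = a ∨ x ∈ E ∨ x = b) := by
    intro x
    rw [hF, List.mem_toFinset, hl, hmemE]
    simp only [List.mem_cons, List.mem_append, List.mem_singleton]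
    tauto
  have hED : E ⊆ D := fun x hx => hmem x (by rw [hl]; simp [(hmemE x).mp hx])
  have hES : ∀ x, x ∈ E → x ∉ S := fun x hx => hmidS x ((hmemE x).mp hx)
  have hdisjSE : Disjoint S E := Finset.disjoint_right.mpr (fun x hx => hES x hx)
  obtain ⟨r, hr⟩ : ∃ r : Finset Sq, r = D \ (S ∪ E) := ⟨_, rfl⟩
  obtain ⟨S', hS'⟩ : ∃ S' : Finset Sq, S' = S \ ({a, b} : Finset Sq) := ⟨_, rfl⟩
  have hmemr : ∀ x, x ∈ r ↔ (x ∈ D ∧ ¬(x ∈ S ∨ x ∈ E)) := by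
    intro x; rw [hr]; simp only [Finset.mem_sdiff, Finset.mem_union]
  have hmemS' : ∀ x, x ∈ S' ↔ (x ∈ S ∧ ¬(x = a ∨ x = b)) := by
    intro x; rw [hS']
    simp only [Finset.mem_sdiff, Finset.mem_insert, Finset.mem_singleton]
  have haD : a ∈ D := hSD haS
  have hbD : b ∈ D := hSD hbS
  have hpairS : ({a, b} : Finset Sq) ⊆ S := by
    intro x hx
    rcases Finset.mem_insert.mp hx with rfl | hx
    · exact haS
    · rw [Finset.mem_singleton] at hx; subst hx; exact hbS
  have hcard2 : ({a, b} : Finset Sq).card = 2 := by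
    rw [Finset.card_insert_of_notMem (by simpa using hab), Finset.card_singleton]
  -- plug facts
  have hrplug : r ∈ plugs D := by
    rw [mem_plugs, hr]
    refine ⟨Finset.sdiff_subset, balanced_sdiff hDbal ?_ (Finset.union_subset hSD hED)⟩
    exact balanced_union hdisjSE hbal hbalE
  have hS'plug : S' ∈ plugs D := by
    rw [mem_plugs, hS']
    refine ⟨(Finset.sdiff_subset).trans hSD, balanced_sdiff hbal (balanced_pair hab hcol) hpairS⟩
  -- interface identities
  have hid1 : D \ (S ∪ r) = E := by
    ext x
    have h1 : x ∈ E → x ∈ D := fun h => hED h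
    have h2 : x ∈ E → x ∉ S := hES x
    rw [Finset.mem_sdiff, Finset.mem_union, hmemr x]
    constructor
    · rintro ⟨hxD, hn⟩
      by_cases hxE : x ∈ E
      · exact hxE
      · by_cases hxS : x ∈ S
        · exact absurd (Or.inl hxS) hn
        · exact absurd (Or.inr ⟨hxD, fun hor => hor.elim hxS hxE⟩) hn
    · intro hxE
      exact ⟨h1 hxE, fun hor => hor.elim (h2 hxE) (fun h => h.2 (Or.inr hxE))⟩
  have hid2 : D \ (r ∪ S') = F := by
    ext x
    have h1 : x ∈ E → x ∈ D := fun h => hED h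
    have h2 : x ∈ E → x ∉ S := hES x
    have h3 : x ∈ S → x ∈ D := fun h => hSD h
    have h5 : x = a → x ∈ S := fun h => h ▸ haS
    have h6 : x = b → x ∈ S := fun h => h ▸ hbS
    rw [Finset.mem_sdiff, Finset.mem_union, hmemr x, hmemS' x, hmemF x]
    constructor
    · rintro ⟨hxD, hn⟩
      by_cases hxS : x ∈ S
      · by_cases hxa : x = a
        · exact Or.inl hxa
        · by_cases hxb : x = b
          · exact Or.inr (Or.inr hxb)
          · exact absurd (Or.inr ⟨hxS, fun hor => hor.elim hxa hxb⟩) hn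
      · by_cases hxE : x ∈ E
        · exact Or.inr (Or.inl hxE)
        · exact absurd (Or.inl ⟨hxD, fun hor => hor.elim hxS hxE⟩) hn
    · rintro (rfl | hxE | rfl)
      · refine ⟨haD, fun hor => ?_⟩
        rcases hor with ⟨-, hn⟩ | ⟨-, hn⟩
        · exact hn (Or.inl haS)
        · exact hn (Or.inl rfl)
      · refine ⟨h1 hxE, fun hor => ?_⟩
        rcases hor with ⟨-, hn⟩ | ⟨hxS, -⟩
        · exact hn (Or.inr hxE)
        · exact h2 hxE hxS
      · refine ⟨hbD, fun hor => ?_⟩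
        rcases hor with ⟨-, hn⟩ | ⟨-, hn⟩
        · exact hn (Or.inl hbS)
        · exact hn (Or.inr rfl)
  -- edges
  have hedge1 : PEdge D S r := by
    refine ⟨Finset.disjoint_left.mpr (fun x hx hx' => ?_), TE, ?_⟩
    · exact ((hmemr x).mp hx').2 (Or.inl hx)
    · rwa [hid1]
  have hedge2 : PEdge D r S' := by
    refine ⟨Finset.disjoint_left.mpr (fun x hx hx' => ?_), TF, ?_⟩
    · exact ((hmemr x).mp hx).2 (Or.inl ((hmemS' x).mp hx').1)
    · rwa [hid2]
  refine ⟨r, S', hrplug, hS'plug, hedge1, hedge2, ?_⟩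
  have hle : ({a, b} : Finset Sq).card ≤ S.card := Finset.card_le_card hpairS
  rw [hS', Finset.card_sdiff_of_subset hpairS]
  omega
/-! Section G: emptying, padding, final assembly -/

lemma empty_plug (D : Finset Sq) : ∅ ∈ plugs D :=
  mem_plugs.mpr ⟨Finset.empty_subset _, balReg_empty⟩

lemma full_plug {D : Finset Sq} (hDbal : BalancedRegion D) : D ∈ plugs D :=
  mem_plugs.mpr ⟨Finset.Subset.refl _, hDbal⟩

lemma compl_plug {D p : Finset Sq} (hDbal : BalancedRegion D) (hp : p ∈ plugs D) :
    D \ p ∈ plugs D :=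
  mem_plugs.mpr ⟨Finset.sdiff_subset,
    balanced_sdiff hDbal (mem_plugs.mp hp).2 (mem_plugs.mp hp).1⟩

lemma edge_compl {D p : Finset Sq} (hp : p ⊆ D) : PEdge D p (D \ p) := by
  refine ⟨Finset.disjoint_sdiff, ∅, ?_⟩
  rw [Finset.union_sdiff_of_subset hp, Finset.sdiff_self]
  exact tiling_empty

lemma edge_empty_full (D : Finset Sq) : PEdge D ∅ D := by
  refine ⟨Finset.disjoint_empty_left _, ∅, ?_⟩
  rw [Finset.empty_union, Finset.sdiff_self]
  exact tiling_empty

lemma empty_reach {D : Finset Sq} (hconn : Conn2 D) (hDbal : BalancedRegion D) :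
    ∀ (n : ℕ) (S : Finset Sq) (h : S ∈ plugs D), S.card = n →
      ReachN D n ⟨S, h⟩ ⟨∅, empty_plug D⟩ := by
  intro n
  induction n using Nat.strong_induction_on with
  | _ n ih =>
    intro S h hcard
    rcases eq_or_ne S ∅ with rfl | hne
    · have : n = 0 := by simpa using hcard.symm
      subst this
      exact (rfl : (⟨∅, h⟩ : {p // p ∈ plugs D}) = ⟨∅, h⟩)
    · obtain ⟨hSD, hbal⟩ := mem_plugs.mp h
      obtain ⟨r, S', hrplug, hS'plug, hedge1, hedge2, hcard2⟩ :=
        pair_removal hconn hDbal hSD hbal (Finset.nonempty_of_ne_empty hne)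
      have hlt : S'.card < n := by omega
      have hreach' := ih S'.card hlt S' hS'plug rfl
      have htwo : ReachN D 2 (⟨S, h⟩ : {p // p ∈ plugs D}) ⟨S', hS'plug⟩ :=
        ⟨⟨r, hrplug⟩, hedge1, ⟨S', hS'plug⟩, hedge2, rfl⟩
      have := htwo.trans hreach'
      have heq : 2 + S'.card = n := by omega
      rwa [heq] at this
lemma pad_reach {D : Finset Sq} (hDbal : BalancedRegion D) :
    ∀ k : ℕ, ReachN D (2 * k) (⟨∅, empty_plug D⟩ : {p // p ∈ plugs D}) ⟨∅, empty_plug D⟩ := by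
  intro k
  induction k with
  | zero => rfl
  | succ k ih =>
    have htwo : ReachN D 2 (⟨∅, empty_plug D⟩ : {p // p ∈ plugs D}) ⟨∅, empty_plug D⟩ :=
      ⟨⟨D, full_plug hDbal⟩, edge_empty_full D, ⟨∅, empty_plug D⟩,
        (edge_empty_full D).symm, rfl⟩
    have := htwo.trans ih
    rwa [show 2 + 2 * k = 2 * (k + 1) by omega] at this
/-- if `D` is a balanced quadriculated disk and `N ≥ 4|D|`, then
all entries of the `N`-th power of the adjacency matrix `A_D` of the complex
`C_D` are strictly positive. -/
theorem corkMatrix_pow_pos (D : Finset Sq) (hD : IsQuadDisk D)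
    (hbal : BalancedRegion D) (N : ℕ) (hN : 4 * D.card ≤ N)
    (p q : {p // p ∈ plugs D}) :
    0 < (corkMatrix D ^ N) p q := by
  obtain ⟨hDne, hconn, -⟩ := hD
  obtain ⟨hpD, hpbal⟩ := mem_plugs.mp p.2
  obtain ⟨hqD, hqbal⟩ := mem_plugs.mp q.2
  have hcp : p.1.card ≤ D.card := Finset.card_le_card hpD
  have hcq : q.1.card ≤ D.card := Finset.card_le_card hqD
  obtain ⟨i, hi⟩ := balanced_card_even hpbal
  obtain ⟨j, hj⟩ := balanced_card_even hqbal
  obtain ⟨d, hd⟩ := balanced_card_even hbal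
  have hDpos : 0 < D.card := Finset.card_pos.mpr hDne
  have R1 : ReachN D p.1.card p ⟨∅, empty_plug D⟩ :=
    empty_reach hconn hbal p.1.card p.1 p.2 rfl
  have R2 : ReachN D q.1.card (⟨∅, empty_plug D⟩ : {p // p ∈ plugs D}) q :=
    (empty_reach hconn hbal q.1.card q.1 q.2 rfl).symm
  apply pow_pos_of_reach
  rcases Nat.even_or_odd N with ⟨m, hm⟩ | ⟨m, hm⟩
  · -- even case
    obtain ⟨k, hk⟩ : ∃ k, N = p.1.card + (2 * k + q.1.card) :=
      ⟨m - i - j, by omega⟩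
    rw [hk]
    exact R1.trans ((pad_reach hbal k).trans R2)
  · -- odd case: go through the complement of p
    have hdp : D \ p.1 ∈ plugs D := compl_plug hbal p.2
    have hcdp : (D \ p.1).card = D.card - p.1.card := Finset.card_sdiff_of_subset hpD
    have R0 : ReachN D 1 p ⟨D \ p.1, hdp⟩ := ReachN.single (edge_compl hpD)
    have R1' : ReachN D (D.card - p.1.card) (⟨D \ p.1, hdp⟩ : {p // p ∈ plugs D})
        ⟨∅, empty_plug D⟩ := empty_reach hconn hbal _ (D \ p.1) hdp hcdp
    obtain ⟨k, hk⟩ : ∃ k, N = 1 + ((D.card - p.1.card) + (2 * k + q.1.card)) :=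
      ⟨(N - 1 - (D.card - p.1.card) - q.1.card) / 2, by omega⟩
    rw [hk]
    exact R0.trans (R1'.trans ((pad_reach hbal k).trans R2))
end

section
/- For a balanced quadriculated disk D and any plug p, if N ≥ 2|D| then the cork R_{0,N; empty, p} (the cylinder D×[0,N] with the plug p removed from the top floor) admits a domino tiling. -/
namespace CorkProof

/-- default square -/
def dsq : Sq := (0, 0)

/-- color of a square -/
def col (s : Sq) : ℤ := (s.1 + s.2) % 2

lemma col01 (s : Sq) : col s = 0 ∨ col s = 1 := by unfold col; omega

lemma adj2_symm {s t : Sq} (h : adj2 s t) : adj2 t s := by unfold adj2 at *; omega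

lemma adj2_ne {s t : Sq} (h : adj2 s t) : s ≠ t := by
  unfold adj2 at h
  intro he; subst he; omega

lemma adj2_col {s t : Sq} (h : adj2 s t) : col s + col t = 1 := by
  unfold adj2 at h; unfold col; omega

lemma adj3_horiz {s t : Sq} (h : adj2 s t) (z : ℤ) :
    adj3 (s.1, s.2, z) (t.1, t.2, z) := by
  unfold adj2 at h; unfold adj3; simp; omega

lemma adj3_vert (x y z : ℤ) : adj3 (x, y, z) (x, y, z + 1) := by
  unfold adj3; simp

lemma adj3_vert' (x y z : ℤ) : adj3 (x, y, z) (x, y, z - 1) := by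
  unfold adj3; simp

/-- Master lemma: a fixed-point free adjacency involution yields a tiling. -/
lemma tiling_of_involution (R : Finset Cell) (f : Cell → Cell)
    (h1 : ∀ x ∈ R, f x ∈ R) (h2 : ∀ x ∈ R, f (f x) = x)
    (h3 : ∀ x ∈ R, f x ≠ x) (h4 : ∀ x ∈ R, adj3 x (f x)) :
    ∃ T, IsTiling3 R T := by
  refine ⟨R.image (fun x => s(x, f x)), ?_, ?_⟩
  · intro e he
    rw [Finset.mem_image] at he
    obtain ⟨x, hx, rfl⟩ := he
    exact ⟨x, f x, hx, h1 x hx, h4 x hx, rfl⟩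
  · intro x hx
    refine ⟨s(x, f x), ⟨Finset.mem_image_of_mem _ hx, by simp⟩, ?_⟩
    rintro e ⟨he, hxe⟩
    rw [Finset.mem_image] at he
    obtain ⟨y, hy, rfl⟩ := he
    rw [Sym2.mem_iff] at hxe
    rcases hxe with rfl | rfl
    · rfl
    · rw [h2 y hy, Sym2.eq_swap]

/-- cork membership characterization -/
lemma mem_cork (D p : Finset Sq) (N : ℕ) (c : Cell) :
    c ∈ cork D ∅ p 0 ((N : ℤ) - 1) ↔
      ((c.1, c.2.1) ∈ D ∧ 0 ≤ c.2.2 ∧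
        c.2.2 < (if (c.1, c.2.1) ∈ p then (N : ℤ) - 1 else (N : ℤ))) := by
  obtain ⟨x, y, z⟩ := c
  simp only [cork, Finset.mem_image, Finset.mem_filter, Finset.mem_product, Finset.mem_Icc]
  constructor
  · rintro ⟨⟨⟨u, v⟩, zz⟩, ⟨⟨⟨hu, hz1, hz2⟩, _, htop⟩, he⟩⟩
    simp only [Prod.mk.injEq] at he
    obtain ⟨rfl, rfl, rfl⟩ := he
    refine ⟨hu, hz1, ?_⟩
    by_cases hup : (u, v) ∈ p
    · simp only [hup, if_pos]
      rcases lt_or_eq_of_le hz2 with h | h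
      · exact h
      · exact absurd ⟨h, hup⟩ htop
    · simp only [hup, if_neg, not_false_iff]; omega
  · rintro ⟨hu, hz1, hz2⟩
    refine ⟨⟨(x, y), z⟩, ⟨⟨hu, hz1, ?_⟩, by simp, ?_⟩, rfl⟩
    · by_cases hup : (x, y) ∈ p <;> simp [hup] at hz2 <;> omega
    · rintro ⟨hz, hp⟩
      simp [hp] at hz2; omega

section PerColumn

variable (R : Sq → Finset ℤ)

/-- number of horizontal-levels below `z` in column `s` -/
def cnt (s : Sq) (z : ℤ) : ℤ := (((R s).filter (fun x => x < z)).card : ℤ)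

lemma cnt_succ {s : Sq} {z : ℤ} (hz : z ∉ R s) : cnt R s (z + 1) = cnt R s z := by
  unfold cnt
  congr 2
  ext r
  simp only [Finset.mem_filter, and_congr_right_iff]
  intro hr
  constructor
  · intro h
    rcases lt_or_eq_of_le (Int.lt_add_one_iff.mp h) with h' | h'
    · exact h'
    · exact absurd (h' ▸ hr) hz
  · omega

lemma cnt_of_mem {s : Sq} {z : ℤ} (hz : z ∈ R s) : cnt R s (z + 1) = cnt R s z + 1 := by
  unfold cnt
  have : (R s).filter (fun x => x < z + 1) = insert z ((R s).filter (fun x => x < z)) := by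
    ext r
    simp only [Finset.mem_filter, Finset.mem_insert]
    constructor
    · rintro ⟨hr, hlt⟩
      rcases lt_or_eq_of_le (Int.lt_add_one_iff.mp hlt) with h' | h'
      · exact Or.inr ⟨hr, h'⟩
      · exact Or.inl h'
    · rintro (rfl | ⟨hr, hlt⟩)
      · exact ⟨hz, by omega⟩
      · exact ⟨hr, by omega⟩
  rw [this, Finset.card_insert_of_notMem (by simp)]
  push_cast; ring

end PerColumn

/-- Assembly: given the per-column data, the cork is tileable. -/
lemma assembly (D p : Finset Sq) (N : ℕ) (hD1 : 1 ≤ D.card) (hDN : 2 * D.card ≤ N)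
    (B : ℤ) (hB : B ≤ (N : ℤ) - 1)
    (R : Sq → Finset ℤ) (pf : Sq → ℤ → Sq)
    (hbound : ∀ s, R s ⊆ Finset.Ico 0 B)
    (hC3 : ∀ s ∈ D, ((R s).card : ℤ) % 2 = (if s ∈ p then (N : ℤ) - 1 else (N : ℤ)) % 2)
    (hC2 : ∀ s, ∀ r ∈ R s, r % 2 = cnt R s r % 2)
    (hpart : ∀ s ∈ D, ∀ z ∈ R s,
      pf s z ∈ D ∧ adj2 s (pf s z) ∧ z ∈ R (pf s z) ∧ pf (pf s z) z = s) :
    ∃ T, IsTiling3 (cork D ∅ p 0 ((N : ℤ) - 1)) T := by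
  set h : Sq → ℤ := fun s => if s ∈ p then (N : ℤ) - 1 else N with hh
  have hhN : ∀ s, (N : ℤ) - 1 ≤ h s := by
    intro s; simp only [hh]; split <;> omega
  -- key step lemmas
  have key1 : ∀ s ∈ D, ∀ z : ℤ, 0 ≤ z → z < h s → z ∉ R s → (z - cnt R s z) % 2 = 0 →
      z + 1 < h s ∧ z + 1 ∉ R s ∧ cnt R s (z + 1) = cnt R s z := by
    intro s hs z _ hzh hzR hpar
    have hcs := cnt_succ R hzR
    have htop : z + 1 < h s := by
      by_contra hcon
      have hze : z = h s - 1 := by omega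
      have hfil : (R s).filter (fun x => x < z) = R s := by
        apply Finset.filter_true_of_mem
        intro r hr
        have hrB := hbound s hr
        simp only [Finset.mem_Ico] at hrB
        have : r ≤ h s - 1 := by have := hhN s; omega
        have : r ≠ z := fun he => hzR (he ▸ hr)
        omega
      have hcz : cnt R s z = ((R s).card : ℤ) := by unfold cnt; rw [hfil]
      have := hC3 s hs
      simp only [hh] at hze this
      omega
    refine ⟨htop, ?_, hcs⟩
    intro hmem
    have := hC2 s (z + 1) hmem
    omega
  have key2 : ∀ s : Sq, ∀ z : ℤ, 0 ≤ z → z ∉ R s → (z - cnt R s z) % 2 = 1 →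
      1 ≤ z ∧ z - 1 ∉ R s ∧ cnt R s (z - 1) = cnt R s z := by
    intro s z hz0 hzR hpar
    have hz1 : 1 ≤ z := by
      rcases lt_or_ge 0 z with h | h
      · omega
      · exfalso
        have hze : z = 0 := by omega
        have : (R s).filter (fun x => x < z) = ∅ := by
          apply Finset.filter_false_of_mem
          intro r hr
          have hrB := hbound s hr
          simp only [Finset.mem_Ico] at hrB
          omega
        have : cnt R s z = 0 := by unfold cnt; rw [this]; simp
        omega
    have hzm : z - 1 ∉ R s := by
      intro hmem
      have h1 := hC2 s (z - 1) hmem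
      have h2 := cnt_of_mem R hmem
      have : z - 1 + 1 = z := by ring
      rw [this] at h2
      omega
    have hcp : cnt R s (z - 1) = cnt R s z := by
      have := cnt_succ R hzm
      have he : z - 1 + 1 = z := by ring
      rw [he] at this
      omega
    exact ⟨hz1, hzm, hcp⟩
  -- the involution
  set f : Cell → Cell := fun c =>
    if c.2.2 ∈ R (c.1, c.2.1) then
      ((pf (c.1, c.2.1) c.2.2).1, (pf (c.1, c.2.1) c.2.2).2, c.2.2)
    else if (c.2.2 - cnt R (c.1, c.2.1) c.2.2) % 2 = 0 then (c.1, c.2.1, c.2.2 + 1)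
    else (c.1, c.2.1, c.2.2 - 1) with hf
  have hmemiff : ∀ x y z : ℤ, ((x, y, z) : Cell) ∈ cork D ∅ p 0 ((N : ℤ) - 1) ↔
      ((x, y) ∈ D ∧ 0 ≤ z ∧ z < h (x, y)) := fun x y z => mem_cork D p N (x, y, z)
  -- horizontal levels are below h
  have hRlt : ∀ s t : Sq, ∀ z ∈ R s, 0 ≤ z ∧ z < h t := by
    intro s t z hz
    have := hbound s hz
    simp only [Finset.mem_Ico] at this
    have := hhN t
    omega
  apply tiling_of_involution _ f
  · -- membership
    rintro ⟨x, y, z⟩ hc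
    rw [hmemiff x y z] at hc
    obtain ⟨hs, hz0, hzh⟩ := hc
    simp only [hf]
    by_cases hzR : z ∈ R (x, y)
    · simp only [hzR, if_pos]
      obtain ⟨hD', hadj, hzR', _⟩ := hpart (x, y) hs z hzR
      rw [hmemiff]
      have := hRlt (x, y) (pf (x, y) z) z hzR
      exact ⟨hD', this⟩
    · simp only [hzR, if_neg, not_false_iff]
      by_cases hpar : (z - cnt R (x, y) z) % 2 = 0
      · simp only [hpar, if_pos]
        obtain ⟨h1, h2, _⟩ := key1 (x, y) hs z hz0 hzh hzR hpar
        rw [hmemiff]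
        exact ⟨hs, by omega, h1⟩
      · simp only [hpar, if_neg, not_false_iff]
        obtain ⟨h1, h2, _⟩ := key2 (x, y) z hz0 hzR (by omega)
        rw [hmemiff]
        exact ⟨hs, by omega, by omega⟩
  · -- involution
    rintro ⟨x, y, z⟩ hc
    rw [hmemiff x y z] at hc
    obtain ⟨hs, hz0, hzh⟩ := hc
    simp only [hf]
    by_cases hzR : z ∈ R (x, y)
    · simp only [hzR, if_pos]
      obtain ⟨hD', hadj, hzR', hinv⟩ := hpart (x, y) hs z hzR
      have hp2 : ((pf (x, y) z).1, (pf (x, y) z).2) = pf (x, y) z := rfl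
      simp only [hp2, hzR', if_pos, hinv]
    · simp only [hzR, if_neg, not_false_iff]
      by_cases hpar : (z - cnt R (x, y) z) % 2 = 0
      · simp only [hpar, if_pos]
        obtain ⟨h1, h2, h3⟩ := key1 (x, y) hs z hz0 hzh hzR hpar
        simp only [h2, if_neg, not_false_iff]
        have : (z + 1 - cnt R (x, y) (z + 1)) % 2 = 1 := by omega
        simp only [this]
        norm_num
      · simp only [hpar, if_neg, not_false_iff]
        obtain ⟨h1, h2, h3⟩ := key2 (x, y) z hz0 hzR (by omega)
        simp only [h2, if_neg, not_false_iff]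
        have : (z - 1 - cnt R (x, y) (z - 1)) % 2 = 0 := by omega
        simp only [this]
        norm_num
  · -- no fixed point
    rintro ⟨x, y, z⟩ hc
    rw [hmemiff x y z] at hc
    obtain ⟨hs, hz0, hzh⟩ := hc
    simp only [hf]
    by_cases hzR : z ∈ R (x, y)
    · simp only [hzR, if_pos]
      obtain ⟨hD', hadj, _, _⟩ := hpart (x, y) hs z hzR
      intro he
      have h1 : (pf (x, y) z).1 = x := congrArg Prod.fst he
      have h2 : (pf (x, y) z).2 = y := by
        have := congrArg (fun c : Cell => c.2.1) he
        simpa using this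
      have hpe : pf (x, y) z = (x, y) := Prod.ext h1 h2
      exact adj2_ne hadj hpe.symm
    · simp only [hzR, if_neg, not_false_iff]
      by_cases hpar : (z - cnt R (x, y) z) % 2 = 0
      · simp only [hpar, if_pos]
        intro he
        have h3 : z + 1 = z := by simpa using congrArg (fun c : Cell => c.2.2) he
        omega
      · simp only [hpar, if_neg, not_false_iff]
        intro he
        have h3 : z - 1 = z := by simpa using congrArg (fun c : Cell => c.2.2) he
        omega
  · -- adjacency
    rintro ⟨x, y, z⟩ hc
    rw [hmemiff x y z] at hc
    obtain ⟨hs, hz0, hzh⟩ := hc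
    simp only [hf]
    by_cases hzR : z ∈ R (x, y)
    · simp only [hzR, if_pos]
      obtain ⟨hD', hadj, _, _⟩ := hpart (x, y) hs z hzR
      exact adj3_horiz hadj z
    · simp only [hzR, if_neg, not_false_iff]
      by_cases hpar : (z - cnt R (x, y) z) % 2 = 0
      · simp only [hpar, if_pos]; exact adj3_vert x y z
      · simp only [hpar, if_neg, not_false_iff]; exact adj3_vert' x y z


lemma getLast_eq_of_eq {α : Type*} {l1 l2 : List α} (h : l1 = l2) (h1 : l1 ≠ []) :
    l1.getLast h1 = l2.getLast (h ▸ h1) := by subst h; rfl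

/-- adjacency-within-`D` relation -/
def radj (D : Finset Sq) (x y : Sq) : Prop := x ∈ D ∧ y ∈ D ∧ adj2 x y

/-- the scan lemma: from a walk between opposite-colored elements of `O`,
extract a sub-walk between opposite-colored elements of `O` with interior
avoiding `O`. -/
lemma scan (D O : Finset Sq) :
    ∀ (l lp : List Sq) (a z : Sq), a ∈ O → z ∈ O → col z ≠ col a →
      List.Chain (radj D) a (lp ++ (l ++ [z])) →
      (∀ x ∈ lp, x ∉ O) →
      ∃ b w lq, b ∈ O ∧ w ∈ O ∧ col b ≠ col w ∧
        List.Chain (radj D) b (lq ++ [w]) ∧ ∀ x ∈ lq, x ∉ O := by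
  intro l
  induction l with
  | nil =>
    intro lp a z ha hz hcol hch hlp
    exact ⟨a, z, lp, ha, hz, fun h => hcol h.symm, hch, hlp⟩
  | cons c t ih =>
    intro lp a z ha hz hcol hch hlp
    by_cases hcO : c ∈ O
    · by_cases hcc : col c = col a
      · have hch' : List.Chain (radj D) a (lp ++ c :: (t ++ [z])) := by
          simpa using hch
        have := (List.isChain_cons_split.mp hch').2
        exact ih [] c z hcO hz (by rw [hcc]; exact hcol) (by show List.IsChain (radj D) (c :: ([] ++ (t ++ [z]))); simpa using this) (by simp)
      · have hch' : List.Chain (radj D) a (lp ++ c :: (t ++ [z])) := by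
          simpa using hch
        have := (List.isChain_cons_split.mp hch').1
        exact ⟨a, c, lp, ha, hcO, fun h => hcc h.symm, this, hlp⟩
    · apply ih (lp ++ [c]) a z ha hz hcol
      · simpa using hch
      · intro x hx
        rcases List.mem_append.mp hx with h | h
        · exact hlp x h
        · rcases List.mem_singleton.mp h with rfl
          exact hcO

/-- color parity along a chain -/
lemma chain_col_parity :
    ∀ (l : List Sq) (a : Sq), List.Chain (radj D') a l →
      (col a + l.length) % 2 = col ((a :: l).getLast (List.cons_ne_nil _ _)) % 2 := by
  intro l
  induction l with
  | nil => intro a _; simp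
  | cons c t ih =>
    intro a hch
    rw [List.getLast_cons_cons]
    have h1 := ih c (List.chain_cons.mp hch).2
    have h2 : col a + col c = 1 := adj2_col (List.chain_cons.mp hch).1.2.2
    have hc1 := col01 a
    have hc2 := col01 c
    simp only [List.length_cons] at *
    omega

/-- the graph on `D` avoiding `O` except at `b`, `w` -/
def pGraph (D O : Finset Sq) (b w : Sq) : SimpleGraph Sq where
  Adj x y := x ∈ D ∧ y ∈ D ∧ (x ∉ O ∨ x = b ∨ x = w) ∧ (y ∉ O ∨ y = b ∨ y = w) ∧ adj2 x y
  symm := by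
    constructor
    rintro x y ⟨h1, h2, h3, h4, h5⟩
    exact ⟨h2, h1, h4, h3, adj2_symm h5⟩
  loopless := by
    constructor
    rintro x ⟨_, _, _, _, h⟩
    exact adj2_ne h rfl

lemma chain_reachable {V : Type*} (G : SimpleGraph V) :
    ∀ (l : List V) (a : V), List.Chain G.Adj a l →
      G.Reachable a ((a :: l).getLast (List.cons_ne_nil _ _)) := by
  intro l
  induction l with
  | nil => intro a _; exact SimpleGraph.Reachable.refl a
  | cons c t ih =>
    intro a hch
    rw [List.getLast_cons_cons]
    exact ((List.chain_cons.mp hch).1.reachable).trans (ih c (List.chain_cons.mp hch).2)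

lemma chain_strengthen (D O : Finset Sq) (b w : Sq) :
    ∀ (l : List Sq) (a : Sq), List.Chain (radj D) a l →
      (∀ x ∈ a :: l, x ∉ O ∨ x = b ∨ x = w) →
      List.Chain (pGraph D O b w).Adj a l := by
  intro l
  induction l with
  | nil => intro a _ _; exact List.Chain.nil
  | cons c t ih =>
    intro a hch hcond
    obtain ⟨⟨h1, h2, h3⟩, hrest⟩ := List.chain_cons.mp hch
    refine List.chain_cons.mpr ⟨⟨h1, h2, hcond a (by simp), hcond c (by simp), h3⟩,
      ih c hrest ?_⟩
    intro x hx
    exact hcond x (by simp only [List.mem_cons] at hx ⊢; tauto)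

/-- main path-finding lemma -/
lemma find_path (D : Finset Sq) (hconn : Conn2 D) (O : Finset Sq) (hOD : O ⊆ D)
    (hbal : BalancedRegion O) (hne : O.Nonempty) :
    ∃ L : List Sq, 2 ≤ L.length ∧ L.length % 2 = 0 ∧ L.Nodup ∧
      (∀ i, i + 1 < L.length →
        L.getD i dsq ∈ D ∧ L.getD (i + 1) dsq ∈ D ∧
          adj2 (L.getD i dsq) (L.getD (i + 1) dsq)) ∧
      L.getD 0 dsq ∈ O ∧ L.getD (L.length - 1) dsq ∈ O ∧
      col (L.getD 0 dsq) ≠ col (L.getD (L.length - 1) dsq) ∧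
      (∀ x ∈ L, x ∉ O ∨ x = L.getD 0 dsq ∨ x = L.getD (L.length - 1) dsq) := by
  classical
  -- find elements of both colors in O
  have hcards := Finset.card_filter_add_card_filter_not
    (s := O) (p := fun s => (s.1 + s.2) % 2 = 0)
  unfold BalancedRegion at hbal
  have hone : 1 ≤ (O.filter (fun s => (s.1 + s.2) % 2 = 0)).card := by
    have := Finset.card_pos.mpr hne
    omega
  have honeW : 1 ≤ (O.filter (fun s => ¬((s.1 + s.2) % 2 = 0))).card := by omega
  obtain ⟨b0, hb0⟩ := Finset.card_pos.mp (by omega :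
    0 < (O.filter (fun s => (s.1 + s.2) % 2 = 0)).card)
  obtain ⟨w0, hw0⟩ := Finset.card_pos.mp (by omega :
    0 < (O.filter (fun s => ¬((s.1 + s.2) % 2 = 0))).card)
  rw [Finset.mem_filter] at hb0 hw0
  have hb0O := hb0.1
  have hw0O := hw0.1
  have hcolb : col b0 = 0 := by unfold col; omega
  have hcolw : col w0 = 1 := by
    have := col01 w0
    unfold col at *; omega
  -- a walk from b0 to w0 within D
  have hrt := hconn b0 (hOD hb0O) w0 (hOD hw0O)
  obtain ⟨l, hl1, hl2⟩ := List.exists_isChain_cons_of_relationReflTransGen hrt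
  -- put it in the form l' ++ [w0]
  have hlne : l ≠ [] := by
    intro h
    subst h
    simp at hl2
    rw [hl2] at hcolb
    omega
  have hldec : l = l.dropLast ++ [l.getLast hlne] := (List.dropLast_append_getLast hlne).symm
  have hlast : l.getLast hlne = w0 := by
    rw [← hl2, List.getLast_cons hlne]
  -- scan for a good pair
  obtain ⟨b, w, lq, hbO, hwO, hbw, hch, hlq⟩ :=
    scan D O l.dropLast [] b0 w0 hb0O hw0O (by omega)
      (by have hl1' : List.IsChain (radj D) (b0 :: l) := hl1; show List.IsChain (radj D) (b0 :: ([] ++ (l.dropLast ++ [w0]))); simpa [← hlast, ← hldec] using hl1') (by simp)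
  -- dedupe via the graph
  have hbne : b ≠ w := fun h => hbw (h ▸ rfl)
  set G := pGraph D O b w with hG
  have hchG : List.Chain G.Adj b (lq ++ [w]) := by
    have hmemcond : ∀ x ∈ b :: (lq ++ [w]), x ∉ O ∨ x = b ∨ x = w := by
      intro x hx
      simp only [List.mem_cons, List.mem_append, List.mem_singleton, List.not_mem_nil, or_false] at hx
      rcases hx with rfl | hx | rfl
      · right; left; rfl
      · left; exact hlq x hx
      · right; right; rfl
    exact chain_strengthen D O b w _ b hch hmemcond
  have hreach : G.Reachable b w := by
    have := chain_reachable G (lq ++ [w]) b hchG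
    have hgl : ((b :: (lq ++ [w])).getLast (List.cons_ne_nil _ _)) = w := by
      simp
    rwa [hgl] at this
  obtain ⟨wk⟩ := hreach
  set P := wk.toPath with hP
  set L := P.1.support with hL
  have hnd : L.Nodup := P.2.support_nodup
  have hchainL : List.Chain' G.Adj L := P.1.isChain_adj_support
  have hLne : L ≠ [] := SimpleGraph.Walk.support_ne_nil _
  have hhead : L.getD 0 dsq = b := by
    rw [hL, SimpleGraph.Walk.support_eq_cons]
    rfl
  have hlenpos : 0 < L.length := List.length_pos_iff.mpr hLne
  have hlastL : L.getD (L.length - 1) dsq = w := by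
    rw [List.getD_eq_getElem L dsq (by omega), ← List.getLast_eq_getElem hLne]
    exact SimpleGraph.Walk.getLast_support P.1
  have hlen2 : 2 ≤ L.length := by
    rcases Nat.lt_or_ge L.length 2 with h | h
    · exfalso
      have h1 : L.length = 1 := by omega
      apply hbne
      rw [← hhead, ← hlastL, h1]
    · exact h
  -- L = b :: tail and the chain on the tail
  have hcons : L = b :: L.tail := by
    conv_lhs => rw [hL, SimpleGraph.Walk.support_eq_cons]
  have hchainT : List.Chain G.Adj b L.tail := by
    have : List.Chain' G.Adj (b :: L.tail) := hcons ▸ hchainL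
    exact this
  have hchainT' : List.Chain (radj D) b L.tail :=
    List.Chain.imp (fun ⦃x y⦄ hxy => ⟨hxy.1, hxy.2.1, hxy.2.2.2.2⟩) hchainT
  -- length parity
  have hpar := chain_col_parity (D' := D) L.tail b hchainT'
  have hglast : (b :: L.tail).getLast (List.cons_ne_nil _ _) = w := by
    rw [getLast_eq_of_eq hcons.symm (List.cons_ne_nil _ _)]
    exact SimpleGraph.Walk.getLast_support P.1
  rw [hglast] at hpar
  have hcolbw : col b ≠ col w := hbw
  have hlentail : L.length = L.tail.length + 1 := by
    rw [hcons]; simp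
  have hlenparity : L.length % 2 = 0 := by
    have := col01 b
    have := col01 w
    omega
  -- step conditions
  have hsteps : ∀ i, i + 1 < L.length →
      (pGraph D O b w).Adj (L.getD i dsq) (L.getD (i + 1) dsq) := by
    intro i hi
    have := List.isChain_iff_getElem.mp hchainL i (by omega)
    rwa [← List.getD_eq_getElem L dsq (by omega),
      ← List.getD_eq_getElem L dsq (by omega)] at this
  refine ⟨L, hlen2, hlenparity, hnd, ?_, ?_, ?_, ?_, ?_⟩
  · intro i hi
    have := hsteps i hi
    exact ⟨this.1, this.2.1, this.2.2.2.2⟩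
  · rw [hhead]; exact hbO
  · rw [hlastL]; exact hwO
  · rw [hhead, hlastL]; exact hbw
  · intro x hx
    rw [hhead, hlastL]
    obtain ⟨i, hi, hxi⟩ := List.mem_iff_getElem.mp hx
    have hxd : L.getD i dsq = x := by rw [List.getD_eq_getElem L dsq hi]; exact hxi
    rcases Nat.lt_or_ge (i + 1) L.length with h | h
    · have := hsteps i h
      rw [hxd] at this
      exact this.2.2.1
    · have hie : i = L.length - 1 := by omega
      have h2 : 0 + 1 < L.length := by omega
      have := hsteps (L.length - 2) (by omega)
      have he2 : L.length - 2 + 1 = i := by omega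
      rw [he2, hxd] at this
      exact this.2.2.2.1

lemma balanced_card_even {O : Finset Sq} (h : BalancedRegion O) : O.card % 2 = 0 := by
  have := Finset.card_filter_add_card_filter_not
    (s := O) (p := fun s => (s.1 + s.2) % 2 = 0)
  unfold BalancedRegion at h
  omega

lemma balanced_sdiff {O : Finset Sq} (h : BalancedRegion O) {b w : Sq}
    (hb : b ∈ O) (hw : w ∈ O) (hcol : col b ≠ col w) :
    BalancedRegion (O \ {b, w}) ∧ (O \ {b, w}).card = O.card - 2 := by
  classical
  have hbw : b ≠ w := fun he => hcol (he ▸ rfl)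
  have hfilt : ∀ q : Sq → Prop, ∀ _ : DecidablePred q,
      (O \ {b, w}).filter q = (O.filter q) \ {b, w} := by
    intro q _
    ext x
    simp only [Finset.mem_filter, Finset.mem_sdiff, Finset.mem_insert, Finset.mem_singleton]
    tauto
  have hcard1 : ∀ (X : Finset Sq), b ∈ X → w ∉ X → (X \ {b, w}).card = X.card - 1 := by
    intro X hbX hwX
    have : X \ {b, w} = X.erase b := by
      ext x
      simp only [Finset.mem_sdiff, Finset.mem_erase, Finset.mem_insert, Finset.mem_singleton]
      constructor
      · rintro ⟨h1, h2⟩; exact ⟨fun he => h2 (Or.inl he), h1⟩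
      · rintro ⟨h1, h2⟩
        refine ⟨h2, ?_⟩
        rintro (rfl | rfl)
        · exact h1 rfl
        · exact hwX h2
    rw [this, Finset.card_erase_of_mem hbX]
  have hcard2 : ∀ (X : Finset Sq), w ∈ X → b ∉ X → (X \ {b, w}).card = X.card - 1 := by
    intro X hwX hbX
    have : X \ {b, w} = X.erase w := by
      ext x
      simp only [Finset.mem_sdiff, Finset.mem_erase, Finset.mem_insert, Finset.mem_singleton]
      constructor
      · rintro ⟨h1, h2⟩; exact ⟨fun he => h2 (Or.inr he), h1⟩
      · rintro ⟨h1, h2⟩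
        refine ⟨h2, ?_⟩
        rintro (rfl | rfl)
        · exact hbX h2
        · exact h1 rfl
    rw [this, Finset.card_erase_of_mem hwX]
  unfold BalancedRegion at h ⊢
  have hOcard := Finset.card_filter_add_card_filter_not
    (s := O) (p := fun s => (s.1 + s.2) % 2 = 0)
  -- which of b, w is black?
  have hcases : (col b = 0 ∧ col w = 1) ∨ (col b = 1 ∧ col w = 0) := by
    rcases col01 b with h1 | h1 <;> rcases col01 w with h2 | h2 <;> simp [h1, h2] at hcol ⊢
  have hcol0 : ∀ x : Sq, col x = 0 ↔ (x.1 + x.2) % 2 = 0 := by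
    intro x; unfold col; omega
  have hcol1 : ∀ x : Sq, col x = 1 ↔ ¬((x.1 + x.2) % 2 = 0) := by
    intro x; unfold col; omega
  rw [hfilt _ _, hfilt _ _]
  have hsd : (O \ {b, w}).card = O.card - 2 := by
    have h1 : {b, w} ⊆ O := by
      intro x hx
      rcases Finset.mem_insert.mp hx with rfl | hx
      · exact hb
      · rw [Finset.mem_singleton] at hx; exact hx ▸ hw
    rw [Finset.card_sdiff_of_subset h1, Finset.card_pair hbw]
  rcases hcases with ⟨h1, h2⟩ | ⟨h1, h2⟩
  · rw [hcol0] at h1; rw [hcol1] at h2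
    have e1 := hcard1 (O.filter (fun s => (s.1 + s.2) % 2 = 0))
      (Finset.mem_filter.mpr ⟨hb, h1⟩) (fun hc => h2 (Finset.mem_filter.mp hc).2)
    have e2 := hcard2 (O.filter (fun s => ¬((s.1 + s.2) % 2 = 0)))
      (Finset.mem_filter.mpr ⟨hw, h2⟩) (fun hc => (Finset.mem_filter.mp hc).2 h1)
    constructor
    · rw [e1, e2, h]
    · exact hsd
  · rw [hcol1] at h1; rw [hcol0] at h2
    have e1 := hcard2 (O.filter (fun s => (s.1 + s.2) % 2 = 0))
      (Finset.mem_filter.mpr ⟨hw, h2⟩) (fun hc => h1 (Finset.mem_filter.mp hc).2)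
    have e2 := hcard1 (O.filter (fun s => ¬((s.1 + s.2) % 2 = 0)))
      (Finset.mem_filter.mpr ⟨hb, h1⟩) (fun hc => (Finset.mem_filter.mp hc).2 h2)
    constructor
    · rw [e1, e2, h]
    · exact hsd

/-- index of an element in a list (with the `DecidableEq`-derived `BEq`) -/
def lidx (L : List Sq) (s : Sq) : ℕ := @List.idxOf Sq instBEqOfDecidableEq s L

lemma lidx_getElem {L : List Sq} (hnd : L.Nodup) (i : ℕ) (hi : i < L.length) :
    lidx L L[i] = i := @List.Nodup.idxOf_getElem Sq instBEqOfDecidableEq _ L hnd i hi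

lemma lidx_lt_length {L : List Sq} {s : Sq} (hs : s ∈ L) : lidx L s < L.length :=
  (@List.idxOf_lt_length_iff Sq instBEqOfDecidableEq _ L s).mpr hs

lemma getElem_lidx {L : List Sq} {s : Sq} (hs : s ∈ L) : L[lidx L s]'(lidx_lt_length hs) = s :=
  @List.getElem_idxOf Sq instBEqOfDecidableEq _ s L (lidx_lt_length hs)

/-- The main construction: horizontal levels and partner functions from a
balanced subregion. -/
lemma build (D : Finset Sq) (hconn : Conn2 D) :
    ∀ (n : ℕ) (O : Finset Sq), O.card = n → O ⊆ D → BalancedRegion O →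
    ∃ (R : Sq → Finset ℤ) (pf : Sq → ℤ → Sq),
      (∀ s, R s ⊆ Finset.Ico 0 (O.card : ℤ)) ∧
      (∀ s ∈ D, ((R s).card : ℤ) % 2 = if s ∈ O then 1 else 0) ∧
      (∀ s, ∀ r ∈ R s, r % 2 = cnt R s r % 2) ∧
      (∀ s ∈ D, ∀ z ∈ R s,
        pf s z ∈ D ∧ adj2 s (pf s z) ∧ z ∈ R (pf s z) ∧ pf (pf s z) z = s) := by
  classical
  intro n
  induction n using Nat.strong_induction_on with
  | _ n ih =>
  intro O hcard hOD hObal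
  rcases Finset.eq_empty_or_nonempty O with rfl | hOne
  · exact ⟨fun _ => ∅, fun _ _ => dsq, by simp, by simp, by simp, by simp⟩
  -- find a path
  obtain ⟨L, hlen2, hlenpar, hnd, hstep, hbO, hwO, hbw, hintO⟩ :=
    find_path D hconn O hOD hObal hOne
  set len := L.length with hlendef
  set b := L.getD 0 dsq with hbdef
  set w := L.getD (len - 1) dsq with hwdef
  have hbwne : b ≠ w := fun he => hbw (he ▸ rfl)
  -- the smaller problem
  set O' := O \ {b, w} with hO'def
  obtain ⟨hO'bal, hO'card⟩ := balanced_sdiff hObal hbO hwO hbw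
  have hOeven : O.card % 2 = 0 := balanced_card_even hObal
  have hOcard2 : 2 ≤ O.card := by
    have := Finset.card_pos.mpr hOne
    omega
  have hO'lt : O'.card < n := by
    rw [hO'card, ← hcard]
    omega
  obtain ⟨R', pf', hbound', hpar', hC2', hpart'⟩ :=
    ih O'.card (by omega) O' rfl (fun x hx => hOD (Finset.mem_sdiff.mp hx).1) hO'bal
  set ℓ : ℤ := (O.card : ℤ) - 2 with hℓdef
  have hℓ0 : 0 ≤ ℓ := by simp only [hℓdef]; omega
  have hℓeven : ℓ % 2 = 0 := by simp only [hℓdef]; omega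
  have hO'cast : ((O'.card : ℕ) : ℤ) = ℓ := by
    have h2 : O'.card = O.card - 2 := by convert hO'card
    simp only [hℓdef, hO'card]; omega
  have hbound'' : ∀ s, R' s ⊆ Finset.Ico 0 ℓ := by
    intro s
    rw [← hO'cast]
    exact hbound' s
  have hnotin : ∀ s, ℓ ∉ R' s ∧ ℓ + 1 ∉ R' s := by
    intro s
    constructor <;> intro hmem <;> have := hbound'' s hmem <;>
      simp only [Finset.mem_Ico] at this <;> omega
  -- basic list facts
  have hgetD_mem : ∀ i, i < len → L.getD i dsq ∈ L := by
    intro i hi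
    rw [List.getD_eq_getElem L dsq hi]
    exact List.getElem_mem hi
  have hidxOf : ∀ i, i < len → lidx L (L.getD i dsq) = i := by
    intro i hi
    rw [List.getD_eq_getElem L dsq hi]
    exact lidx_getElem hnd i hi
  have hmemidx : ∀ s ∈ L, lidx L s < len := fun s hs => lidx_lt_length hs
  have hgetidx : ∀ s ∈ L, L.getD (lidx L s) dsq = s := by
    intro s hs
    rw [List.getD_eq_getElem L dsq (hmemidx s hs)]
    exact getElem_lidx hs
  have hLD : ∀ s ∈ L, s ∈ D := by
    intro s hs
    have hi := hmemidx s hs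
    rcases Nat.lt_or_ge (lidx L s + 1) len with h | h
    · have := (hstep _ h).1
      rwa [hgetidx s hs] at this
    · have hie : lidx L s = len - 1 := by omega
      have := (hstep (len - 2) (by omega)).2.1
      have he2 : len - 2 + 1 = lidx L s := by omega
      rw [he2, hgetidx s hs] at this
      exact this
  have hidx_b : ∀ s ∈ L, (lidx L s = 0 ↔ s = b) := by
    intro s hs
    constructor
    · intro h
      rw [← hgetidx s hs, h]
    · intro h
      rw [h, hbdef, hidxOf 0 (by omega)]
  have hidx_w : ∀ s ∈ L, (lidx L s = len - 1 ↔ s = w) := by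
    intro s hs
    constructor
    · intro h
      rw [← hgetidx s hs, h]
    · intro h
      rw [h, hwdef, hidxOf (len - 1) (by omega)]
  have hbinL : b ∈ L := hgetD_mem 0 (by omega)
  have hwinL : w ∈ L := hgetD_mem (len - 1) (by omega)
  -- interior elements are not in O
  have hint : ∀ s ∈ L, lidx L s ≠ 0 → lidx L s ≠ len - 1 → s ∉ O := by
    intro s hs h0 h1
    rcases hintO s hs with h | h | h
    · exact h
    · exact absurd ((hidx_b s hs).mpr h) h0
    · exact absurd ((hidx_w s hs).mpr h) h1
  have hbw_notO' : b ∉ O' ∧ w ∉ O' := by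
    constructor <;> simp [hO'def]
  have hLnotO' : ∀ s ∈ L, s ∉ O' := by
    intro s hs
    by_cases h0 : lidx L s = 0
    · rw [(hidx_b s hs).mp h0]; exact hbw_notO'.1
    by_cases h1 : lidx L s = len - 1
    · rw [(hidx_w s hs).mp h1]; exact hbw_notO'.2
    · intro hmem
      exact hint s hs h0 h1 (Finset.mem_sdiff.mp hmem).1
  have hR'even : ∀ s ∈ L, (R' s).card % 2 = 0 := by
    intro s hs
    have := hpar' s (hLD s hs)
    rw [if_neg (hLnotO' s hs)] at this
    omega
  -- new data
  set R : Sq → Finset ℤ := fun s =>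
    if s ∈ L then
      (if lidx L s = 0 ∨ lidx L s = len - 1 then insert ℓ (R' s)
       else insert ℓ (insert (ℓ + 1) (R' s)))
    else R' s with hRdef
  set pf : Sq → ℤ → Sq := fun s z =>
    if z = ℓ then
      (if lidx L s % 2 = 0 then L.getD (lidx L s + 1) dsq
       else L.getD (lidx L s - 1) dsq)
    else if z = ℓ + 1 then
      (if lidx L s % 2 = 0 then L.getD (lidx L s - 1) dsq
       else L.getD (lidx L s + 1) dsq)
    else pf' s z with hpfdef
  have hRmem : ∀ s z, z ∈ R s ↔ (z ∈ R' s ∨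
      (s ∈ L ∧ z = ℓ) ∨
      (s ∈ L ∧ lidx L s ≠ 0 ∧ lidx L s ≠ len - 1 ∧ z = ℓ + 1)) := by
    intro s z
    simp only [hRdef]
    by_cases hs : s ∈ L
    · simp only [hs, if_pos, true_and]
      by_cases hend : lidx L s = 0 ∨ lidx L s = len - 1
      · simp only [hend, if_pos, Finset.mem_insert]
        constructor
        · rintro (rfl | h)
          · exact Or.inr (Or.inl rfl)
          · exact Or.inl h
        · rintro (h | rfl | ⟨h1, h2, rfl⟩)
          · exact Or.inr h
          · exact Or.inl rfl
          · exact absurd hend (by tauto)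
      · rw [if_neg hend, Finset.mem_insert, Finset.mem_insert]
        push_neg at hend
        constructor
        · rintro (rfl | rfl | h)
          · exact Or.inr (Or.inl rfl)
          · exact Or.inr (Or.inr ⟨hend.1, hend.2, rfl⟩)
          · exact Or.inl h
        · rintro (h | rfl | ⟨h1, h2, rfl⟩)
          · exact Or.inr (Or.inr h)
          · exact Or.inl rfl
          · exact Or.inr (Or.inl rfl)
    · simp only [hs, if_neg, not_false_iff, false_and, or_false]
  -- set computations for cnt
  have hfilter_lt : ∀ s : Sq, ∀ r : ℤ, r < ℓ →
      (R s).filter (fun x => x < r) = (R' s).filter (fun x => x < r) := by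
    intro s r hr
    ext x
    simp only [Finset.mem_filter]
    constructor
    · rintro ⟨hx, hlt⟩
      rcases (hRmem s x).mp hx with h | ⟨_, rfl⟩ | ⟨_, _, _, rfl⟩
      · exact ⟨h, hlt⟩
      · omega
      · omega
    · rintro ⟨hx, hlt⟩
      exact ⟨(hRmem s x).mpr (Or.inl hx), hlt⟩
  have hfilter_l : ∀ s : Sq, (R s).filter (fun x => x < ℓ) = R' s := by
    intro s
    ext x
    simp only [Finset.mem_filter]
    constructor
    · rintro ⟨hx, hlt⟩
      rcases (hRmem s x).mp hx with h | ⟨_, rfl⟩ | ⟨_, _, _, rfl⟩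
      · exact h
      · omega
      · omega
    · intro hx
      have := hbound'' s hx
      simp only [Finset.mem_Ico] at this
      exact ⟨(hRmem s x).mpr (Or.inl hx), by omega⟩
  have hfilter_l1 : ∀ s ∈ L, (R s).filter (fun x => x < ℓ + 1) = insert ℓ (R' s) := by
    intro s hs
    ext x
    simp only [Finset.mem_filter, Finset.mem_insert]
    constructor
    · rintro ⟨hx, hlt⟩
      rcases (hRmem s x).mp hx with h | ⟨_, rfl⟩ | ⟨_, _, _, rfl⟩
      · exact Or.inr h
      · exact Or.inl rfl
      · omega
    · rintro (rfl | hx)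
      · exact ⟨(hRmem s ℓ).mpr (Or.inr (Or.inl ⟨hs, rfl⟩)), by omega⟩
      · have := hbound'' s hx
        simp only [Finset.mem_Ico] at this
        exact ⟨(hRmem s x).mpr (Or.inl hx), by omega⟩
  refine ⟨R, pf, ?_, ?_, ?_, ?_⟩
  · -- bound
    intro s z hz
    simp only [Finset.mem_Ico]
    rcases (hRmem s z).mp hz with h | ⟨_, rfl⟩ | ⟨_, _, _, rfl⟩
    · have := hbound'' s h
      simp only [Finset.mem_Ico] at this
      omega
    · omega
    · omega
  · -- card parity
    intro s hsD
    by_cases hsL : s ∈ L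
    · by_cases hend : lidx L s = 0 ∨ lidx L s = len - 1
      · have hRs : R s = insert ℓ (R' s) := by
          simp only [hRdef, if_pos hsL, if_pos hend]
        have hsO : s ∈ O := by
          rcases hend with h | h
          · rw [(hidx_b s hsL).mp h]; exact hbO
          · rw [(hidx_w s hsL).mp h]; exact hwO
        rw [hRs, Finset.card_insert_of_notMem (hnotin s).1, if_pos hsO]
        have := hR'even s hsL
        push_cast
        omega
      · have hRs : R s = insert ℓ (insert (ℓ + 1) (R' s)) := by
          simp only [hRdef, if_pos hsL, if_neg hend]
        push_neg at hend
        have hsO : s ∉ O := hint s hsL hend.1 hend.2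
        have hni : ℓ ∉ insert (ℓ + 1) (R' s) := by
          simp only [Finset.mem_insert]
          push_neg
          exact ⟨by omega, (hnotin s).1⟩
        rw [hRs, Finset.card_insert_of_notMem hni,
          Finset.card_insert_of_notMem (hnotin s).2, if_neg hsO]
        have := hR'even s hsL
        push_cast
        omega
    · have hRs : R s = R' s := by simp only [hRdef, if_neg hsL]
      have h1 : s ≠ b := fun he => hsL (he ▸ hbinL)
      have h2 : s ≠ w := fun he => hsL (he ▸ hwinL)
      have hOO' : s ∈ O ↔ s ∈ O' := by
        simp only [hO'def, Finset.mem_sdiff, Finset.mem_insert, Finset.mem_singleton]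
        constructor
        · intro h
          exact ⟨h, by tauto⟩
        · intro h
          exact h.1
      have hthis := hpar' s hsD
      rw [hRs]
      by_cases hsO : s ∈ O
      · rw [if_pos hsO]
        rw [if_pos (hOO'.mp hsO)] at hthis
        exact hthis
      · rw [if_neg hsO]
        rw [if_neg (fun hc => hsO (hOO'.mpr hc))] at hthis
        exact hthis
  · -- alternation
    intro s r hr
    rcases (hRmem s r).mp hr with h | ⟨hsL, rfl⟩ | ⟨hsL, h0, h1, rfl⟩
    · have hrl : r < ℓ := by
        have := hbound'' s h
        simp only [Finset.mem_Ico] at this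
        omega
      have : cnt R s r = cnt R' s r := by
        unfold cnt
        rw [hfilter_lt s r hrl]
      rw [this]
      exact hC2' s r h
    · have : cnt R s ℓ = ((R' s).card : ℤ) := by
        unfold cnt
        rw [hfilter_l s]
      rw [this]
      have := hR'even s hsL
      omega
    · have : cnt R s (ℓ + 1) = ((R' s).card : ℤ) + 1 := by
        unfold cnt
        rw [hfilter_l1 s hsL, Finset.card_insert_of_notMem (hnotin s).1]
        push_cast
        ring
      rw [this]
      have := hR'even s hsL
      omega
  · -- partner
    intro s hsD z hz
    rcases (hRmem s z).mp hz with h | ⟨hsL, rfl⟩ | ⟨hsL, h0, h1, rfl⟩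
    · -- old level
      have hzlt : z < ℓ := by
        have := hbound'' s h
        simp only [Finset.mem_Ico] at this
        omega
      obtain ⟨q1, q2, q3, q4⟩ := hpart' s hsD z h
      have hpfz : pf s z = pf' s z := by
        simp only [hpfdef, eq_self_iff_true, if_true]
        rw [if_neg (by omega), if_neg (by omega)]
      have hpfz2 : pf (pf' s z) z = pf' (pf' s z) z := by
        simp only [hpfdef, eq_self_iff_true, if_true]
        rw [if_neg (by omega), if_neg (by omega)]
      rw [hpfz]
      exact ⟨q1, q2, (hRmem _ z).mpr (Or.inl q3), by rw [hpfz2]; exact q4⟩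
    · -- level ℓ
      have hi := hmemidx s hsL
      have hseq := hgetidx s hsL
      by_cases hpar2 : lidx L s % 2 = 0
      · have hi1 : lidx L s + 1 < len := by omega
        have hpfz : pf s ℓ = L.getD (lidx L s + 1) dsq := by
          simp only [hpfdef, eq_self_iff_true, if_true]
          rw [if_pos hpar2]
        set t := L.getD (lidx L s + 1) dsq with htdef
        have htL : t ∈ L := hgetD_mem _ hi1
        have hti : lidx L t = lidx L s + 1 := hidxOf _ hi1
        have hadj : adj2 s t := by
          have := (hstep _ hi1).2.2
          rwa [hseq] at this
        have hback : pf t ℓ = s := by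
          simp only [hpfdef, eq_self_iff_true, if_true]
          rw [if_neg (by rw [hti]; omega), hti]
          simpa using hseq
        rw [hpfz]
        exact ⟨hLD t htL, hadj, (hRmem t ℓ).mpr (Or.inr (Or.inl ⟨htL, rfl⟩)), hback⟩
      · have hi1 : lidx L s - 1 < len := by omega
        have him : lidx L s - 1 + 1 = lidx L s := by omega
        have hpfz : pf s ℓ = L.getD (lidx L s - 1) dsq := by
          simp only [hpfdef, eq_self_iff_true, if_true]
          rw [if_neg hpar2]
        set t := L.getD (lidx L s - 1) dsq with htdef
        have htL : t ∈ L := hgetD_mem _ hi1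
        have hti : lidx L t = lidx L s - 1 := hidxOf _ hi1
        have hadj : adj2 s t := by
          have := (hstep _ (by omega : lidx L s - 1 + 1 < len)).2.2
          rw [him, hseq] at this
          exact adj2_symm this
        have hback : pf t ℓ = s := by
          simp only [hpfdef, eq_self_iff_true, if_true]
          rw [if_pos (by rw [hti]; omega), hti, him]
          simpa using hseq
        rw [hpfz]
        exact ⟨hLD t htL, hadj, (hRmem t ℓ).mpr (Or.inr (Or.inl ⟨htL, rfl⟩)), hback⟩
    · -- level ℓ+1 (interior)
      have hi := hmemidx s hsL
      have hseq := hgetidx s hsL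
      have hl1ne : ℓ + 1 ≠ ℓ := by omega
      by_cases hpar2 : lidx L s % 2 = 0
      · -- partner is previous
        have hige : 2 ≤ lidx L s := by omega
        have hi1 : lidx L s - 1 < len := by omega
        have him : lidx L s - 1 + 1 = lidx L s := by omega
        have hpfz : pf s (ℓ + 1) = L.getD (lidx L s - 1) dsq := by
          simp only [hpfdef, eq_self_iff_true, if_true]
          rw [if_neg hl1ne, if_pos hpar2]
        set t := L.getD (lidx L s - 1) dsq with htdef
        have htL : t ∈ L := hgetD_mem _ hi1
        have hti : lidx L t = lidx L s - 1 := hidxOf _ hi1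
        have hadj : adj2 s t := by
          have := (hstep _ (by omega : lidx L s - 1 + 1 < len)).2.2
          rw [him, hseq] at this
          exact adj2_symm this
        have hback : pf t (ℓ + 1) = s := by
          simp only [hpfdef, eq_self_iff_true, if_true]
          rw [if_neg hl1ne, if_neg (by rw [hti]; omega), hti, him]
          simpa using hseq
        have htmem : ℓ + 1 ∈ R t :=
          (hRmem t (ℓ + 1)).mpr (Or.inr (Or.inr ⟨htL, by omega, by omega, rfl⟩))
        rw [hpfz]
        exact ⟨hLD t htL, hadj, htmem, hback⟩
      · -- partner is next
        have hi1 : lidx L s + 1 < len := by omega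
        have hpfz : pf s (ℓ + 1) = L.getD (lidx L s + 1) dsq := by
          simp only [hpfdef, eq_self_iff_true, if_true]
          rw [if_neg hl1ne, if_neg hpar2]
        set t := L.getD (lidx L s + 1) dsq with htdef
        have htL : t ∈ L := hgetD_mem _ hi1
        have hti : lidx L t = lidx L s + 1 := hidxOf _ hi1
        have hadj : adj2 s t := by
          have := (hstep _ hi1).2.2
          rwa [hseq] at this
        have hback : pf t (ℓ + 1) = s := by
          simp only [hpfdef, eq_self_iff_true, if_true]
          rw [if_neg hl1ne, if_pos (by rw [hti]; omega), hti]
          simpa using hseq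
        have htmem : ℓ + 1 ∈ R t :=
          (hRmem t (ℓ + 1)).mpr (Or.inr (Or.inr ⟨htL, by omega, by omega, rfl⟩))
        rw [hpfz]
        exact ⟨hLD t htL, hadj, htmem, hback⟩

lemma balanced_diff {D p : Finset Sq} (hbal : BalancedRegion D) (hpbal : BalancedRegion p)
    (hsub : p ⊆ D) : BalancedRegion (D \ p) := by
  classical
  have hfilt : ∀ q : Sq → Prop, ∀ _ : DecidablePred q,
      (D \ p).filter q = (D.filter q) \ (p.filter q) := by
    intro q _
    ext x
    simp only [Finset.mem_filter, Finset.mem_sdiff]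
    constructor
    · rintro ⟨⟨h1, h2⟩, h3⟩
      exact ⟨⟨h1, h3⟩, fun hc => h2 hc.1⟩
    · rintro ⟨⟨h1, h3⟩, h2⟩
      exact ⟨⟨h1, fun hc => h2 ⟨hc, h3⟩⟩, h3⟩
  unfold BalancedRegion at hbal hpbal ⊢
  rw [hfilt _ _, hfilt _ _,
    Finset.card_sdiff_of_subset (Finset.filter_subset_filter _ hsub),
    Finset.card_sdiff_of_subset (Finset.filter_subset_filter _ hsub), hbal, hpbal]

end CorkProof

/-- for a balanced quadriculated disk `D` and any plug `p`, if
`N ≥ 2|D|` then the cork `R_{0,N;∅,p}` (the cylinder `D × [0,N]` with `p`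
removed from the top floor) admits a domino tiling. -/
theorem cork_empty_plug_tileable (D : Finset Sq) (hD : IsQuadDisk D)
    (hbal : BalancedRegion D) (p : Finset Sq) (hp : p ∈ plugs D)
    (N : ℕ) (hN : 2 * D.card ≤ N) :
    ∃ T : Finset (Sym2 Cell), IsTiling3 (cork D ∅ p 0 ((N : ℤ) - 1)) T := by
  classical
  obtain ⟨hDne, hconn, _⟩ := hD
  have hp' := hp
  simp only [plugs, Finset.mem_filter, Finset.mem_powerset] at hp'
  obtain ⟨hpsub, hpbal⟩ := hp'
  have hD1 : 1 ≤ D.card := Finset.card_pos.mpr hDne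
  set O : Finset Sq := if N % 2 = 0 then p else D \ p with hOdef
  have hOD : O ⊆ D := by
    simp only [hOdef]
    split
    · exact hpsub
    · exact Finset.sdiff_subset
  have hObal : BalancedRegion O := by
    simp only [hOdef]
    split
    · exact hpbal
    · exact CorkProof.balanced_diff hbal hpbal hpsub
  obtain ⟨R, pf, hbound, hpar, hC2, hpart⟩ :=
    CorkProof.build D hconn O.card O rfl hOD hObal
  have hOcard : O.card ≤ D.card := Finset.card_le_card hOD
  apply CorkProof.assembly D p N hD1 hN (O.card : ℤ) (by omega) R pf hbound ?_ hC2 hpart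
  intro s hs
  have hthis := hpar s hs
  by_cases hNpar : N % 2 = 0
  · have hOp : O = p := by simp [hOdef, hNpar]
    by_cases hsp : s ∈ p
    · rw [if_pos hsp]
      rw [if_pos (hOp ▸ hsp : s ∈ O)] at hthis
      omega
    · rw [if_neg hsp]
      rw [if_neg (fun hc => hsp (hOp ▸ hc))] at hthis
      omega
  · have hOp : O = D \ p := by simp [hOdef, hNpar]
    by_cases hsp : s ∈ p
    · rw [if_pos hsp]
      have hsO : s ∉ O := by
        rw [hOp]
        simp [hsp]
      rw [if_neg hsO] at hthis
      omega
    · rw [if_neg hsp]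
      have hsO : s ∈ O := by
        rw [hOp]
        simp [hs, hsp]
      rw [if_pos hsO] at hthis
      omega
end

section
/- In a simply connected planar quadriculated region, any two domino tilings can be joined by a finite sequence of flips. -/
namespace PFC

noncomputable section
open Classical

def ind (p : Prop) : ℤ := if p then 1 else 0

lemma ind_nonneg (p : Prop) : 0 ≤ ind p := by unfold ind; split <;> omega
lemma ind_le_one (p : Prop) : ind p ≤ 1 := by unfold ind; split <;> omega
lemma ind_eq_one (p : Prop) (h : p) : ind p = 1 := by simp [ind, h]
lemma ind_eq_zero (p : Prop) (h : ¬ p) : ind p = 0 := by simp [ind, h]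
lemma ind_one_iff (p : Prop) : ind p = 1 ↔ p := by unfold ind; split <;> simp_all
lemma ind_zero_iff (p : Prop) : ind p = 0 ↔ ¬ p := by unfold ind; split <;> simp_all

def chi (c : Sq) : ℤ := if (c.1 + c.2) % 2 = 0 then 1 else -1

lemma chi_sq (c : Sq) : chi c = 1 ∨ chi c = -1 := by unfold chi; split <;> simp

lemma chi_E (c : Sq) : chi (c.1 + 1, c.2) = - chi c := by
  unfold chi; rcases c with ⟨x, y⟩; simp only
  rcases Int.emod_two_eq_zero_or_one (x + y) with h | h <;>
    rcases Int.emod_two_eq_zero_or_one (x + 1 + y) with h2 | h2 <;> simp [h, h2] <;> omega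

lemma chi_N (c : Sq) : chi (c.1, c.2 + 1) = - chi c := by
  unfold chi; rcases c with ⟨x, y⟩; simp only
  rcases Int.emod_two_eq_zero_or_one (x + y) with h | h <;>
    rcases Int.emod_two_eq_zero_or_one (x + (y + 1)) with h2 | h2 <;> simp [h, h2] <;> omega

/-- crossing indicator of the horizontal (east) grid edge at vertex `v`:
the two flanking cells are `(v.1, v.2-1)` (south) and `(v.1, v.2)` (north). -/
def cE (T : Finset (Sym2 Sq)) (v : Sq) : ℤ := ind (s(((v.1, v.2 - 1) : Sq), (v : Sq)) ∈ T)

/-- crossing indicator of the vertical (north) grid edge at vertex `v`: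
flanking cells `(v.1-1, v.2)` (west) and `(v.1, v.2)` (east). -/
def cN (T : Finset (Sym2 Sq)) (v : Sq) : ℤ := ind (s(((v.1 - 1, v.2) : Sq), (v : Sq)) ∈ T)

/-- edge value of the height 1-form of tiling `T` on the east edge at `v`. -/
def oE (T : Finset (Sym2 Sq)) (v : Sq) : ℤ := chi v * (1 - 4 * cE T v)
/-- edge value on the north edge at `v`. -/
def oN (T : Finset (Sym2 Sq)) (v : Sq) : ℤ := - chi v * (1 - 4 * cN T v)

/-- height-difference increments for a pair of tilings. -/
def dE (T0 T1 : Finset (Sym2 Sq)) (v : Sq) : ℤ := chi v * (cE T1 v - cE T0 v)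
def dN (T0 T1 : Finset (Sym2 Sq)) (v : Sq) : ℤ := chi v * (cN T0 v - cN T1 v)

/-- signed sum of `g` over `[0, n)` (or `-(sum over [n,0))` for `n < 0`). -/
def intSum (g : ℤ → ℤ) (n : ℤ) : ℤ :=
  if 0 ≤ n then ∑ i ∈ Finset.range n.toNat, g i
  else - ∑ i ∈ Finset.range (-n).toNat, g (-(i + 1 : ℕ))

lemma intSum_succ (g : ℤ → ℤ) (n : ℤ) : intSum g (n + 1) = intSum g n + g n := by
  unfold intSum
  rcases le_or_gt 0 n with h | h
  · rw [if_pos (by omega), if_pos h]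
    have : (n + 1).toNat = n.toNat + 1 := by omega
    rw [this, Finset.sum_range_succ]
    have h3 : ((n.toNat : ℤ)) = n := by omega
    rw [h3]
  · rcases eq_or_lt_of_le (by omega : n + 1 ≤ 0) with h1 | h1
    · rw [if_pos (by omega), if_neg (by omega)]
      have hn : n = -1 := by omega
      subst hn
      simp [intSum]
    · rw [if_neg (by omega), if_neg (by omega)]
      have h2 : (-n).toNat = (-(n + 1)).toNat + 1 := by omega
      rw [h2, Finset.sum_range_succ]
      have : (-((-(n + 1)).toNat + 1 : ℕ) : ℤ) = n := by omega
      rw [this]; ring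

lemma intSum_pred (g : ℤ → ℤ) (n : ℤ) : intSum g (n - 1) = intSum g n - g (n - 1) := by
  have := intSum_succ g (n - 1)
  simp only [sub_add_cancel] at this
  omega

/-- the height-difference function of a pair of tilings. -/
def Del (T0 T1 : Finset (Sym2 Sq)) (v : Sq) : ℤ :=
  intSum (fun i => dE T0 T1 (i, 0)) v.1 + intSum (fun j => dN T0 T1 (v.1, j)) v.2

lemma Del_up (T0 T1 : Finset (Sym2 Sq)) (v : Sq) :
    Del T0 T1 (v.1, v.2 + 1) = Del T0 T1 v + dN T0 T1 v := by
  unfold Del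
  simp only
  rw [intSum_succ]
  ring

lemma adj2_cases {a b : Sq} (h : adj2 a b) :
    b = (a.1 + 1, a.2) ∨ b = (a.1 - 1, a.2) ∨ b = (a.1, a.2 + 1) ∨ b = (a.1, a.2 - 1) := by
  unfold adj2 at h
  rcases a with ⟨x, y⟩; rcases b with ⟨x', y'⟩
  simp only [Prod.mk.injEq]
  omega

lemma adj2_of_E (a : Sq) : adj2 a (a.1 + 1, a.2) := by unfold adj2; simp
lemma adj2_of_N (a : Sq) : adj2 a (a.1, a.2 + 1) := by unfold adj2; simp

/-- number of neighbours of cell `c` matched with `c` in `T`. -/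
def cnt (T : Finset (Sym2 Sq)) (c : Sq) : ℤ :=
  ind (s(c, ((c.1 + 1, c.2) : Sq)) ∈ T) + ind (s(c, ((c.1 - 1, c.2) : Sq)) ∈ T)
  + ind (s(c, ((c.1, c.2 + 1) : Sq)) ∈ T) + ind (s(c, ((c.1, c.2 - 1) : Sq)) ∈ T)

lemma mem_of_mem_tiling {D : Finset Sq} {T : Finset (Sym2 Sq)} (hT : IsTiling2 D T)
    {a b : Sq} (h : s(a, b) ∈ T) : a ∈ D ∧ b ∈ D ∧ adj2 a b := by
  obtain ⟨x, y, hx, hy, hxy, he⟩ := hT.1 _ h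
  rw [Sym2.eq_iff] at he
  rcases he with ⟨rfl, rfl⟩ | ⟨rfl, rfl⟩
  · exact ⟨hx, hy, hxy⟩
  · refine ⟨hy, hx, ?_⟩
    unfold adj2 at hxy ⊢; omega

lemma cnt_tiling {D : Finset Sq} {T : Finset (Sym2 Sq)} (hT : IsTiling2 D T) (c : Sq) :
    cnt T c = ind (c ∈ D) := by
  by_cases hc : c ∈ D
  · rw [ind_eq_one _ hc]
    obtain ⟨e, ⟨heT, hce⟩, huniq⟩ := hT.2 c hc
    obtain ⟨a, b, ha, hb, hab, rfl⟩ := hT.1 _ heT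
    -- the unique neighbour d with s(c,d) ∈ T
    have hd : ∃ d, adj2 c d ∧ s(c, d) ∈ T := by
      rw [Sym2.mem_iff] at hce
      rcases hce with rfl | rfl
      · exact ⟨b, hab, heT⟩
      · refine ⟨a, ?_, by rwa [Sym2.eq_swap]⟩
        unfold adj2 at hab ⊢; omega
    obtain ⟨d, hcd, hdT⟩ := hd
    -- every neighbour pair in T must equal s(c,d)
    have hcc : c ≠ d := by
      intro h; rw [h] at hcd; unfold adj2 at hcd; omega
    have key : ∀ d' : Sq, s(c, d') ∈ T → d' = d := by
      intro d' hd'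
      have h1 := huniq _ ⟨hd', Sym2.mem_iff.mpr (Or.inl rfl)⟩
      have h2 := huniq _ ⟨hdT, Sym2.mem_iff.mpr (Or.inl rfl)⟩
      rw [← h2] at h1
      rw [Sym2.eq_iff] at h1
      rcases h1 with ⟨-, h⟩ | ⟨h, -⟩
      · exact h
      · exact absurd h hcc
    have hone : ∀ d' : Sq, d' ≠ d → ind (s(c, d') ∈ T) = 0 := by
      intro d' hne
      exact ind_eq_zero _ (fun h => hne (key _ h))
    unfold cnt
    rcases adj2_cases hcd with hd2 | hd2 | hd2 | hd2 <;> subst hd2 <;>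
      rw [ind_eq_one _ hdT] <;>
      rw [hone, hone, hone] <;>
        first
          | (intro h; rw [Prod.mk.injEq] at h; omega)
          | ring1
  · rw [ind_eq_zero _ hc]
    have hz : ∀ d : Sq, ind (s(c, d) ∈ T) = 0 := by
      intro d
      apply ind_eq_zero
      intro h
      exact hc (mem_of_mem_tiling hT h).1
    unfold cnt
    rw [hz, hz, hz, hz]; ring

lemma chi_E' (x y : ℤ) : chi (x + 1, y) = - chi (x, y) := chi_E (x, y)
lemma chi_N' (x y : ℤ) : chi (x, y + 1) = - chi (x, y) := chi_N (x, y)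

lemma closed_cell {D : Finset Sq} {T0 T1 : Finset (Sym2 Sq)}
    (hT0 : IsTiling2 D T0) (hT1 : IsTiling2 D T1) (x y : ℤ) :
    dE T0 T1 (x, y) + dN T0 T1 (x + 1, y) = dN T0 T1 (x, y) + dE T0 T1 (x, y + 1) := by
  have h0 := cnt_tiling hT0 (x, y)
  have h1 := cnt_tiling hT1 (x, y)
  unfold cnt at h0 h1
  simp only at h0 h1
  unfold dE dN cE cN
  simp only
  have hxx : (x + 1 - 1 : ℤ) = x := by ring
  rw [hxx, chi_E' x y, chi_N' x y]
  have e1 : (s(((x, y - 1) : Sq), ((x, y) : Sq))) = s(((x, y) : Sq), ((x, y - 1) : Sq)) :=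
    Sym2.eq_swap
  have e2 : (s(((x - 1, y) : Sq), ((x, y) : Sq))) = s(((x, y) : Sq), ((x - 1, y) : Sq)) :=
    Sym2.eq_swap
  rw [e1, e2]
  have hyy : (y + 1 - 1 : ℤ) = y := by ring
  rw [hyy]
  rcases chi_sq (x, y) with hc | hc <;> rw [hc] <;> ring_nf <;> ring_nf at h0 h1 <;> omega

lemma Del_right {D : Finset Sq} {T0 T1 : Finset (Sym2 Sq)}
    (hT0 : IsTiling2 D T0) (hT1 : IsTiling2 D T1) (x y : ℤ) :
    Del T0 T1 (x + 1, y) = Del T0 T1 (x, y) + dE T0 T1 (x, y) := by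
  induction y using Int.induction_on with
  | zero =>
    unfold Del
    simp only
    rw [intSum_succ]
    have z1 : intSum (fun j => dN T0 T1 (x + 1, j)) 0 = 0 := by simp [intSum]
    have z2 : intSum (fun j => dN T0 T1 (x, j)) 0 = 0 := by simp [intSum]
    rw [z1, z2]; ring
  | succ k ih =>
    have u1 := Del_up T0 T1 (x + 1, (k : ℤ))
    have u2 := Del_up T0 T1 (x, (k : ℤ))
    simp only at u1 u2
    have cc := closed_cell hT0 hT1 x (k : ℤ)
    omega
  | pred k ih =>
    have u1 := Del_up T0 T1 (x + 1, (-(k : ℤ) - 1))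
    have u2 := Del_up T0 T1 (x, (-(k : ℤ) - 1))
    simp only at u1 u2
    have hh : (-(k : ℤ) - 1 + 1) = -(k : ℤ) := by ring
    rw [hh] at u1 u2
    have cc := closed_cell hT0 hT1 x (-(k : ℤ) - 1)
    rw [hh] at cc
    omega

lemma pot_unique (F G : Sq → ℤ) (h0 : F (0, 0) = G (0, 0))
    (hE : ∀ x y : ℤ, F (x + 1, y) - F (x, y) = G (x + 1, y) - G (x, y))
    (hN : ∀ x y : ℤ, F (x, y + 1) - F (x, y) = G (x, y + 1) - G (x, y)) :
    ∀ v, F v = G v := by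
  have row : ∀ x : ℤ, F (x, 0) = G (x, 0) := by
    intro x
    induction x using Int.induction_on with
    | zero => exact h0
    | succ k ih => have := hE (k : ℤ) 0; omega
    | pred k ih =>
      have h' := hE (-(k : ℤ) - 1) 0
      have hh : (-(k : ℤ) - 1 + 1) = -(k : ℤ) := by ring
      rw [hh] at h'
      omega
  rintro ⟨x, y⟩
  induction y using Int.induction_on with
  | zero => exact row x
  | succ k ih => have := hN x (k : ℤ); omega
  | pred k ih =>
    have h' := hN x (-(k : ℤ) - 1)
    have hh : (-(k : ℤ) - 1 + 1) = -(k : ℤ) := by ring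
    rw [hh] at h'
    omega

lemma cross_out {D : Finset Sq} {T : Finset (Sym2 Sq)} (hT : IsTiling2 D T) {a b : Sq}
    (h : a ∉ D ∨ b ∉ D) : ind (s(a, b) ∈ T) = 0 := by
  apply ind_eq_zero
  intro hm
  have := mem_of_mem_tiling hT hm
  tauto

/-- the four corners of a cell outside `D` carry the same `Del` value. -/
lemma corner_eq {D : Finset Sq} {T0 T1 : Finset (Sym2 Sq)}
    (hT0 : IsTiling2 D T0) (hT1 : IsTiling2 D T1) {c : Sq} (hc : c ∉ D) :
    Del T0 T1 (c.1 + 1, c.2) = Del T0 T1 (c.1, c.2) ∧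
    Del T0 T1 (c.1, c.2 + 1) = Del T0 T1 (c.1, c.2) ∧
    Del T0 T1 (c.1 + 1, c.2 + 1) = Del T0 T1 (c.1, c.2) := by
  have hS : dE T0 T1 (c.1, c.2) = 0 := by
    unfold dE cE
    rw [cross_out hT0 (Or.inr (by simp [hc])), cross_out hT1 (Or.inr (by simp [hc]))]
    ring
  have hW : dN T0 T1 (c.1, c.2) = 0 := by
    unfold dN cN
    rw [cross_out hT0 (Or.inr (by simp [hc])), cross_out hT1 (Or.inr (by simp [hc]))]
    ring
  have hEe : dN T0 T1 (c.1 + 1, c.2) = 0 := by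
    unfold dN cN
    have hx : (c.1 + 1 - 1 : ℤ) = c.1 := by ring
    rw [hx]
    rw [cross_out hT0 (Or.inl (by simp [hc])), cross_out hT1 (Or.inl (by simp [hc]))]
    ring
  have hN2 : dE T0 T1 (c.1, c.2 + 1) = 0 := by
    unfold dE cE
    have hy : (c.2 + 1 - 1 : ℤ) = c.2 := by ring
    rw [hy]
    rw [cross_out hT0 (Or.inl (by simp [hc])), cross_out hT1 (Or.inl (by simp [hc]))]
    ring
  have e1 : Del T0 T1 (c.1 + 1, c.2) = Del T0 T1 (c.1, c.2) := by
    have := Del_right hT0 hT1 c.1 c.2; omega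
  have e2 : Del T0 T1 (c.1, c.2 + 1) = Del T0 T1 (c.1, c.2) := by
    have := Del_up T0 T1 (c.1, c.2); simp only at this; omega
  have e3 : Del T0 T1 (c.1 + 1, c.2 + 1) = Del T0 T1 (c.1, c.2) := by
    have := Del_up T0 T1 (c.1 + 1, c.2); simp only at this; omega
  exact ⟨e1, e2, e3⟩

/-- `Del` takes a common value at (corners of) all cells outside `D`. -/
lemma compl_const {D : Finset Sq} {T0 T1 : Finset (Sym2 Sq)} (hSC : SimplyConn D)
    (hT0 : IsTiling2 D T0) (hT1 : IsTiling2 D T1) {a b : Sq} (ha : a ∉ D) (hb : b ∉ D) :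
    Del T0 T1 a = Del T0 T1 b := by
  have hR := hSC a b ha hb
  induction hR with
  | refl => rfl
  | tail _ hstep ih =>
    rename_i x y _
    obtain ⟨hx, hy, hxy⟩ := hstep
    rw [ih hx]
    clear ih
    rcases adj2_cases hxy with h | h | h | h <;> subst h
    · -- y = E x : SW corner of y is SE corner of x
      exact ((corner_eq hT0 hT1 hx).1).symm
    · -- y = W x : x = E y
      have := (corner_eq hT0 hT1 hy).1
      rw [show ((x.1 - 1 + 1 : ℤ), x.2) = x from by rw [Prod.mk.injEq]; constructor <;> [ring; rfl]] at this
      exact this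
    · exact ((corner_eq hT0 hT1 hx).2.1).symm
    · have := (corner_eq hT0 hT1 hy).2.1
      rw [show ((x.1 : ℤ), (x.2 - 1 + 1 : ℤ)) = x from by rw [Prod.mk.injEq]; constructor <;> [rfl; ring]] at this
      exact this

/-- if `Del v` differs from the outside value then all four cells at `v` are in `D`. -/
lemma support_lemma {D : Finset Sq} {T0 T1 : Finset (Sym2 Sq)} (hSC : SimplyConn D)
    (hT0 : IsTiling2 D T0) (hT1 : IsTiling2 D T1) {c0 : Sq} (hc0 : c0 ∉ D) {v : Sq}
    (h : Del T0 T1 v ≠ Del T0 T1 c0) :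
    (v.1, v.2) ∈ D ∧ (v.1 - 1, v.2) ∈ D ∧ (v.1, v.2 - 1) ∈ D ∧ (v.1 - 1, v.2 - 1) ∈ D := by
  have hNE : (v.1, v.2) ∈ D := by
    by_contra hcc
    exact h (by
      rw [show v = ((v.1, v.2) : Sq) from rfl]
      exact compl_const hSC hT0 hT1 hcc hc0)
  have hNW : (v.1 - 1, v.2) ∈ D := by
    by_contra hcc
    apply h
    have h1 := (corner_eq hT0 hT1 (c := (v.1 - 1, v.2)) hcc).1
    simp only at h1
    rw [show ((v.1 - 1 + 1 : ℤ), v.2) = v from by rw [Prod.mk.injEq]; constructor <;> [ring; rfl]] at h1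
    rw [h1]
    exact compl_const hSC hT0 hT1 hcc hc0
  have hSE : (v.1, v.2 - 1) ∈ D := by
    by_contra hcc
    apply h
    have h1 := (corner_eq hT0 hT1 (c := (v.1, v.2 - 1)) hcc).2.1
    simp only at h1
    rw [show ((v.1 : ℤ), (v.2 - 1 + 1 : ℤ)) = v from by rw [Prod.mk.injEq]; constructor <;> [rfl; ring]] at h1
    rw [h1]
    exact compl_const hSC hT0 hT1 hcc hc0
  have hSW : (v.1 - 1, v.2 - 1) ∈ D := by
    by_contra hcc
    apply h
    have h1 := (corner_eq hT0 hT1 (c := (v.1 - 1, v.2 - 1)) hcc).2.2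
    simp only at h1
    rw [show ((v.1 - 1 + 1 : ℤ), (v.2 - 1 + 1 : ℤ)) = v from by rw [Prod.mk.injEq]; constructor <;> [ring; ring]] at h1
    rw [h1]
    exact compl_const hSC hT0 hT1 hcc hc0
  exact ⟨hNE, hNW, hSE, hSW⟩

section Flip

variable {D : Finset Sq} {T : Finset (Sym2 Sq)} {p u w : Sq}

/-- orientation hypothesis for a 2×2 flip block. -/
def Orient (u w : Sq) : Prop :=
  (u = ((1 : ℤ), (0 : ℤ)) ∧ w = ((0 : ℤ), (1 : ℤ))) ∨
  (u = ((0 : ℤ), (1 : ℤ)) ∧ w = ((1 : ℤ), (0 : ℤ)))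

lemma uniq_cover {D : Finset Sq} {T : Finset (Sym2 Sq)} (hT : IsTiling2 D T) {x : Sq}
    (hx : x ∈ D) {e e' : Sym2 Sq} (he : e ∈ T) (hxe : x ∈ e) (he' : e' ∈ T) (hxe' : x ∈ e') :
    e = e' := by
  obtain ⟨f, -, uq⟩ := hT.2 x hx
  rw [uq e ⟨he, hxe⟩, uq e' ⟨he', hxe'⟩]

lemma orient_add (huw : Orient u w) :
    (p + u = (p.1 + 1, p.2) ∧ p + w = (p.1, p.2 + 1) ∧ p + u + w = (p.1 + 1, p.2 + 1)) ∨
    (p + u = (p.1, p.2 + 1) ∧ p + w = (p.1 + 1, p.2) ∧ p + u + w = (p.1 + 1, p.2 + 1)) := by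
  rcases huw with ⟨hu, hw⟩ | ⟨hu, hw⟩ <;> subst hu <;> subst hw <;>
    [left; right] <;>
    refine ⟨?_, ?_, ?_⟩ <;> rw [Prod.ext_iff] <;> simp

lemma flip_distinct (huw : Orient u w) :
    p ≠ p + u ∧ p ≠ p + w ∧ p ≠ p + u + w ∧ p + u ≠ p + w ∧ p + u ≠ p + u + w ∧
      p + w ≠ p + u + w := by
  rcases orient_add (p := p) huw with ⟨h1, h2, h3⟩ | ⟨h1, h2, h3⟩ <;> rw [h3, h2, h1] <;>
    refine ⟨?_, ?_, ?_, ?_, ?_, ?_⟩ <;> (intro h; rw [Prod.mk.injEq] at h; omega)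

lemma flip_adj (huw : Orient u w) :
    adj2 p (p + u) ∧ adj2 (p + w) (p + u + w) ∧ adj2 p (p + w) ∧ adj2 (p + u) (p + u + w) := by
  rcases orient_add (p := p) huw with ⟨h1, h2, h3⟩ | ⟨h1, h2, h3⟩ <;> rw [h3, h2, h1] <;>
    refine ⟨?_, ?_, ?_, ?_⟩ <;> (unfold adj2; simp)

lemma flip_new_not_mem (hT : IsTiling2 D T) (huw : Orient u w)
    (h1 : s(p, p + u) ∈ T) :
    s(p, p + w) ∉ T ∧ s(p + u, p + u + w) ∉ T := by
  obtain ⟨d1, d2, d3, d4, d5, d6⟩ := flip_distinct (p := p) huw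
  have hpD := (mem_of_mem_tiling hT h1).1
  have hpuD := (mem_of_mem_tiling hT h1).2.1
  constructor
  · intro hmem
    have := uniq_cover hT hpD h1 (Sym2.mem_iff.mpr (Or.inl rfl)) hmem
      (Sym2.mem_iff.mpr (Or.inl rfl))
    rw [Sym2.eq_iff] at this
    rcases this with ⟨-, h⟩ | ⟨h, -⟩
    · exact d4 h
    · exact d2 h
  · intro hmem
    have := uniq_cover hT hpuD h1 (Sym2.mem_iff.mpr (Or.inr rfl)) hmem
      (Sym2.mem_iff.mpr (Or.inl rfl))
    rw [Sym2.eq_iff] at this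
    rcases this with ⟨h, -⟩ | ⟨h, -⟩
    · exact d1 h
    · exact d3 h

lemma flip_tiling (hT : IsTiling2 D T) (huw : Orient u w)
    (h1 : s(p, p + u) ∈ T) (h2 : s(p + w, p + u + w) ∈ T) :
    IsTiling2 D ((T \ {s(p, p + u), s(p + w, p + u + w)}) ∪
      {s(p, p + w), s(p + u, p + u + w)}) := by
  obtain ⟨d1, d2, d3, d4, d5, d6⟩ := flip_distinct (p := p) huw
  obtain ⟨aj1, aj2, aj3, aj4⟩ := flip_adj (p := p) huw
  have hpD := (mem_of_mem_tiling hT h1).1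
  have hpuD := (mem_of_mem_tiling hT h1).2.1
  have hpwD := (mem_of_mem_tiling hT h2).1
  have hpuwD := (mem_of_mem_tiling hT h2).2.1
  set r1 := s(p, p + u) with hr1
  set r2 := s(p + w, p + u + w) with hr2
  set a1 := s(p, p + w) with ha1
  set a2 := s(p + u, p + u + w) with ha2
  have hmem : ∀ e, e ∈ (T \ {r1, r2}) ∪ {a1, a2} ↔
      ((e ∈ T ∧ e ≠ r1 ∧ e ≠ r2) ∨ e = a1 ∨ e = a2) := by
    intro e
    simp [Finset.mem_union, Finset.mem_sdiff, Finset.mem_insert, Finset.mem_singleton]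
    tauto
  constructor
  · intro e he
    rw [hmem] at he
    rcases he with ⟨heT, -, -⟩ | rfl | rfl
    · exact hT.1 e heT
    · exact ⟨p, p + w, hpD, hpwD, aj3, rfl⟩
    · exact ⟨p + u, p + u + w, hpuD, hpuwD, aj4, rfl⟩
  · intro x hx
    by_cases hxp : x = p
    · subst hxp
      refine ⟨a1, ⟨(hmem a1).mpr (Or.inr (Or.inl rfl)), Sym2.mem_iff.mpr (Or.inl rfl)⟩, ?_⟩
      rintro e ⟨heT', hxe⟩
      rw [hmem] at heT'
      rcases heT' with ⟨heT, hne1, -⟩ | rfl | rfl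
      · exact absurd (uniq_cover hT hpD heT hxe h1 (Sym2.mem_iff.mpr (Or.inl rfl))) hne1
      · rfl
      · rw [Sym2.mem_iff] at hxe
        rcases hxe with h | h
        · exact absurd h d1
        · exact absurd h d3
    · by_cases hxpu : x = p + u
      · subst hxpu
        refine ⟨a2, ⟨(hmem a2).mpr (Or.inr (Or.inr rfl)), Sym2.mem_iff.mpr (Or.inl rfl)⟩, ?_⟩
        rintro e ⟨heT', hxe⟩
        rw [hmem] at heT'
        rcases heT' with ⟨heT, hne1, -⟩ | rfl | rfl
        · exact absurd (uniq_cover hT hpuD heT hxe h1 (Sym2.mem_iff.mpr (Or.inr rfl))) hne1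
        · rw [Sym2.mem_iff] at hxe
          rcases hxe with h | h
          · exact absurd h.symm d1
          · exact absurd h d4
        · rfl
      · by_cases hxpw : x = p + w
        · subst hxpw
          refine ⟨a1, ⟨(hmem a1).mpr (Or.inr (Or.inl rfl)), Sym2.mem_iff.mpr (Or.inr rfl)⟩, ?_⟩
          rintro e ⟨heT', hxe⟩
          rw [hmem] at heT'
          rcases heT' with ⟨heT, -, hne2⟩ | rfl | rfl
          · exact absurd (uniq_cover hT hpwD heT hxe h2 (Sym2.mem_iff.mpr (Or.inl rfl))) hne2
          · rfl
          · rw [Sym2.mem_iff] at hxe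
            rcases hxe with h | h
            · exact absurd h.symm d4
            · exact absurd h d6
        · by_cases hxpuw : x = p + u + w
          · subst hxpuw
            refine ⟨a2, ⟨(hmem a2).mpr (Or.inr (Or.inr rfl)), Sym2.mem_iff.mpr (Or.inr rfl)⟩, ?_⟩
            rintro e ⟨heT', hxe⟩
            rw [hmem] at heT'
            rcases heT' with ⟨heT, -, hne2⟩ | rfl | rfl
            · exact absurd (uniq_cover hT hpuwD heT hxe h2 (Sym2.mem_iff.mpr (Or.inr rfl)))
                hne2
            · rw [Sym2.mem_iff] at hxe
              rcases hxe with h | h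
              · exact absurd h.symm d3
              · exact absurd h.symm d6
            · rfl
          · obtain ⟨e, ⟨heT, hxe⟩, -⟩ := hT.2 x hx
            have hne1 : e ≠ r1 := by
              intro hh; subst hh
              rw [Sym2.mem_iff] at hxe
              tauto
            have hne2 : e ≠ r2 := by
              intro hh; subst hh
              rw [Sym2.mem_iff] at hxe
              tauto
            refine ⟨e, ⟨(hmem e).mpr (Or.inl ⟨heT, hne1, hne2⟩), hxe⟩, ?_⟩
            rintro e' ⟨heT', hxe'⟩
            rw [hmem] at heT'
            rcases heT' with ⟨heT', -, -⟩ | rfl | rfl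
            · exact uniq_cover hT hx heT' hxe' heT hxe
            · rw [Sym2.mem_iff] at hxe'
              tauto
            · rw [Sym2.mem_iff] at hxe'
              tauto

lemma mem_flip (T : Finset (Sym2 Sq)) (r1 r2 a1 a2 e : Sym2 Sq) :
    e ∈ (T \ {r1, r2}) ∪ {a1, a2} ↔ ((e ∈ T ∧ e ≠ r1 ∧ e ≠ r2) ∨ e = a1 ∨ e = a2) := by
  simp [Finset.mem_union, Finset.mem_sdiff, Finset.mem_insert, Finset.mem_singleton]
  tauto

lemma ind_congr {A B : Prop} (h : A ↔ B) : ind A = ind B := by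
  unfold ind; rw [if_congr h rfl rfl]

/-- effect of a "good" flip of `T1` on the height difference `Del`. -/
lemma flip_Del {D : Finset Sq} {T0 T1 : Finset (Sym2 Sq)}
    (hT0 : IsTiling2 D T0) (hT1 : IsTiling2 D T1) {p u w : Sq} (huw : Orient u w)
    (h1 : s(p, p + u) ∈ T1) (h2 : s(p + w, p + u + w) ∈ T1)
    (hchi : (u = ((1 : ℤ), (0 : ℤ)) ∧ chi (p.1 + 1, p.2 + 1) = 1) ∨
            (u = ((0 : ℤ), (1 : ℤ)) ∧ chi (p.1 + 1, p.2 + 1) = -1)) :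
    ∀ z, Del T0 ((T1 \ {s(p, p + u), s(p + w, p + u + w)}) ∪
        {s(p, p + w), s(p + u, p + u + w)}) z
      = Del T0 T1 z - (if z = (p.1 + 1, p.2 + 1) then 1 else 0)
        + (if ((0, 0) : Sq) = (p.1 + 1, p.2 + 1) then 1 else 0) := by
  have hT1' := flip_tiling hT1 huw h1 h2
  set v : Sq := (p.1 + 1, p.2 + 1) with hv
  set T1' := (T1 \ {s(p, p + u), s(p + w, p + u + w)}) ∪
      {s(p, p + w), s(p + u, p + u + w)} with hT1'def
  -- membership characterization
  have hmm : ∀ e, e ∈ T1' ↔ ((e ∈ T1 ∧ e ≠ s(p, p + u) ∧ e ≠ s(p + w, p + u + w)) ∨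
      e = s(p, p + w) ∨ e = s(p + u, p + u + w)) := fun e => mem_flip _ _ _ _ _ _
  obtain ⟨hn1, hn2⟩ := flip_new_not_mem hT1 huw h1
  -- increment facts
  have keyE : ∀ x y : ℤ, dE T0 T1' (x, y) = dE T0 T1 (x, y)
      - (if ((x + 1, y) : Sq) = v then 1 else 0) + (if ((x, y) : Sq) = v then 1 else 0) := by
    intro x y
    unfold dE cE
    simp only
    rcases huw with ⟨hu, hw⟩ | ⟨hu, hw⟩
    · -- horizontal pair flipped to vertical
      subst hu; subst hw
      have hχ : chi v = 1 := by
        rcases hchi with ⟨-, h⟩ | ⟨hu2, -⟩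
        · exact h
        · exfalso; rw [Prod.mk.injEq] at hu2; omega
      have e_pu : p + ((1 : ℤ), (0 : ℤ)) = ((p.1 + 1, p.2) : Sq) := by
        rw [Prod.ext_iff]; simp
      have e_pw : p + ((0 : ℤ), (1 : ℤ)) = ((p.1, p.2 + 1) : Sq) := by
        rw [Prod.ext_iff]; simp
      have e_puw : p + ((1 : ℤ), (0 : ℤ)) + ((0 : ℤ), (1 : ℤ)) = ((p.1 + 1, p.2 + 1) : Sq) := by
        rw [Prod.ext_iff]; simp
      have e_q : ((p.1 + 1, p.2) : Sq) + ((0 : ℤ), (1 : ℤ)) = ((p.1 + 1, p.2 + 1) : Sq) := by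
        rw [Prod.ext_iff]; simp
      simp only [e_pu, e_pw, e_puw, e_q] at h1 h2 hn1 hn2
      simp only [e_pu, e_pw, e_puw, e_q] at hmm
      by_cases hA : x = p.1 ∧ y = p.2 + 1
      · obtain ⟨rfl, rfl⟩ := hA
        have hpos : ((p.1 + 1, p.2 + 1) : Sq) = v := by rw [hv]
        have hneg : ¬ (((p.1, p.2 + 1) : Sq) = v) := by
          rw [hv]; intro hh; rw [Prod.mk.injEq] at hh; omega
        rw [if_pos hpos, if_neg hneg]
        rw [show ((p.1 : ℤ), (p.2 + 1 - 1 : ℤ)) = p from by rw [Prod.mk.injEq]; constructor <;> [rfl; ring]]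
        rw [ind_eq_one _ ((hmm _).mpr (Or.inr (Or.inl rfl))), ind_eq_zero _ hn1]
        have hχ2 : chi (p.1, p.2 + 1) = -1 := by
          have := chi_E' p.1 (p.2 + 1); rw [hv] at hχ; omega
        rw [hχ2]; ring
      · by_cases hB : x = p.1 + 1 ∧ y = p.2 + 1
        · obtain ⟨rfl, rfl⟩ := hB
          have hneg : ¬ (((p.1 + 1 + 1, p.2 + 1) : Sq) = v) := by
            rw [hv]; intro hh; rw [Prod.mk.injEq] at hh; omega
          have hpos : ((p.1 + 1, p.2 + 1) : Sq) = v := by rw [hv]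
          rw [if_neg hneg, if_pos hpos]
          rw [show ((p.1 + 1 : ℤ), (p.2 + 1 - 1 : ℤ)) = ((p.1 + 1, p.2) : Sq) from by
            rw [Prod.mk.injEq]; constructor <;> [rfl; ring]]
          rw [ind_eq_one _ ((hmm _).mpr (Or.inr (Or.inr rfl))), ind_eq_zero _ hn2]
          rw [hv] at hχ; rw [hχ]; ring
        · have hneg1 : ¬ (((x + 1, y) : Sq) = v) := by
            rw [hv]; intro hh; rw [Prod.mk.injEq] at hh; exact hA ⟨by omega, by omega⟩
          have hneg2 : ¬ (((x, y) : Sq) = v) := by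
            rw [hv]; intro hh; rw [Prod.mk.injEq] at hh; exact hB ⟨by omega, by omega⟩
          rw [if_neg hneg1, if_neg hneg2]
          have hiff : (s(((x, y - 1) : Sq), ((x, y) : Sq)) ∈ T1') ↔
              (s(((x, y - 1) : Sq), ((x, y) : Sq)) ∈ T1) := by
            rw [hmm]
            constructor
            · rintro (⟨h, -, -⟩ | h | h)
              · exact h
              · exfalso; simp only [Sym2.eq_iff, Prod.ext_iff] at h
                exact hA ⟨by omega, by omega⟩
              · exfalso; simp only [Sym2.eq_iff, Prod.ext_iff] at h
                exact hB ⟨by omega, by omega⟩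
            · intro h
              refine Or.inl ⟨h, ?_, ?_⟩ <;>
                (intro hh; simp only [Sym2.eq_iff, Prod.ext_iff] at hh; omega)
          rw [ind_congr hiff]; ring
    · -- vertical pair flipped to horizontal
      subst hu; subst hw
      have hχ : chi v = -1 := by
        rcases hchi with ⟨hu2, -⟩ | ⟨-, h⟩
        · exfalso; rw [Prod.mk.injEq] at hu2; omega
        · exact h
      have e_pu : p + ((0 : ℤ), (1 : ℤ)) = ((p.1, p.2 + 1) : Sq) := by
        rw [Prod.ext_iff]; simp
      have e_pw : p + ((1 : ℤ), (0 : ℤ)) = ((p.1 + 1, p.2) : Sq) := by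
        rw [Prod.ext_iff]; simp
      have e_puw : p + ((0 : ℤ), (1 : ℤ)) + ((1 : ℤ), (0 : ℤ)) = ((p.1 + 1, p.2 + 1) : Sq) := by
        rw [Prod.ext_iff]; simp
      have e_q : ((p.1, p.2 + 1) : Sq) + ((1 : ℤ), (0 : ℤ)) = ((p.1 + 1, p.2 + 1) : Sq) := by
        rw [Prod.ext_iff]; simp
      simp only [e_pu, e_pw, e_puw, e_q] at h1 h2 hn1 hn2
      simp only [e_pu, e_pw, e_puw, e_q] at hmm
      by_cases hA : x = p.1 ∧ y = p.2 + 1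
      · obtain ⟨rfl, rfl⟩ := hA
        have hpos : ((p.1 + 1, p.2 + 1) : Sq) = v := by rw [hv]
        have hneg : ¬ (((p.1, p.2 + 1) : Sq) = v) := by
          rw [hv]; intro hh; rw [Prod.mk.injEq] at hh; omega
        rw [if_pos hpos, if_neg hneg]
        rw [show ((p.1 : ℤ), (p.2 + 1 - 1 : ℤ)) = p from by rw [Prod.mk.injEq]; constructor <;> [rfl; ring]]
        have hout : s(p, ((p.1, p.2 + 1) : Sq)) ∉ T1' := by
          rw [hmm]
          rintro (⟨-, hh, -⟩ | hh | hh)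
          · exact hh rfl
          · simp only [Sym2.eq_iff, Prod.ext_iff] at hh; omega
          · simp only [Sym2.eq_iff, Prod.ext_iff] at hh; omega
        rw [ind_eq_zero _ hout, ind_eq_one _ h1]
        have hχ2 : chi (p.1, p.2 + 1) = 1 := by
          have := chi_E' p.1 (p.2 + 1); rw [hv] at hχ; omega
        rw [hχ2]; ring
      · by_cases hB : x = p.1 + 1 ∧ y = p.2 + 1
        · obtain ⟨rfl, rfl⟩ := hB
          have hneg : ¬ (((p.1 + 1 + 1, p.2 + 1) : Sq) = v) := by
            rw [hv]; intro hh; rw [Prod.mk.injEq] at hh; omega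
          have hpos : ((p.1 + 1, p.2 + 1) : Sq) = v := by rw [hv]
          rw [if_neg hneg, if_pos hpos]
          rw [show ((p.1 + 1 : ℤ), (p.2 + 1 - 1 : ℤ)) = ((p.1 + 1, p.2) : Sq) from by
            rw [Prod.mk.injEq]; constructor <;> [rfl; ring]]
          have hout : s(((p.1 + 1, p.2) : Sq), ((p.1 + 1, p.2 + 1) : Sq)) ∉ T1' := by
            rw [hmm]
            rintro (⟨-, -, hh⟩ | hh | hh)
            · exact hh rfl
            · simp only [Sym2.eq_iff, Prod.ext_iff] at hh; omega
            · simp only [Sym2.eq_iff, Prod.ext_iff] at hh; omega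
          rw [ind_eq_zero _ hout, ind_eq_one _ h2]
          rw [hv] at hχ; rw [hχ]; ring
        · have hneg1 : ¬ (((x + 1, y) : Sq) = v) := by
            rw [hv]; intro hh; rw [Prod.mk.injEq] at hh; exact hA ⟨by omega, by omega⟩
          have hneg2 : ¬ (((x, y) : Sq) = v) := by
            rw [hv]; intro hh; rw [Prod.mk.injEq] at hh; exact hB ⟨by omega, by omega⟩
          rw [if_neg hneg1, if_neg hneg2]
          have hiff : (s(((x, y - 1) : Sq), ((x, y) : Sq)) ∈ T1') ↔
              (s(((x, y - 1) : Sq), ((x, y) : Sq)) ∈ T1) := by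
            rw [hmm]
            constructor
            · rintro (⟨h, -, -⟩ | h | h)
              · exact h
              · exfalso; simp only [Sym2.eq_iff, Prod.ext_iff] at h
                omega
              · exfalso; simp only [Sym2.eq_iff, Prod.ext_iff] at h
                omega
            · intro h
              refine Or.inl ⟨h, ?_, ?_⟩
              · intro hh; simp only [Sym2.eq_iff, Prod.ext_iff] at hh
                exact hA ⟨by omega, by omega⟩
              · intro hh; simp only [Sym2.eq_iff, Prod.ext_iff] at hh
                exact hB ⟨by omega, by omega⟩
          rw [ind_congr hiff]; ring
  have keyN : ∀ x y : ℤ, dN T0 T1' (x, y) = dN T0 T1 (x, y)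
      - (if ((x, y + 1) : Sq) = v then 1 else 0) + (if ((x, y) : Sq) = v then 1 else 0) := by
    intro x y
    unfold dN cN
    simp only
    rcases huw with ⟨hu, hw⟩ | ⟨hu, hw⟩
    · -- horizontal pair (removed are horizontal dominoes)
      subst hu; subst hw
      have hχ : chi v = 1 := by
        rcases hchi with ⟨-, h⟩ | ⟨hu2, -⟩
        · exact h
        · exfalso; rw [Prod.mk.injEq] at hu2; omega
      have e_pu : p + ((1 : ℤ), (0 : ℤ)) = ((p.1 + 1, p.2) : Sq) := by
        rw [Prod.ext_iff]; simp
      have e_pw : p + ((0 : ℤ), (1 : ℤ)) = ((p.1, p.2 + 1) : Sq) := by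
        rw [Prod.ext_iff]; simp
      have e_puw : p + ((1 : ℤ), (0 : ℤ)) + ((0 : ℤ), (1 : ℤ)) = ((p.1 + 1, p.2 + 1) : Sq) := by
        rw [Prod.ext_iff]; simp
      have e_q : ((p.1 + 1, p.2) : Sq) + ((0 : ℤ), (1 : ℤ)) = ((p.1 + 1, p.2 + 1) : Sq) := by
        rw [Prod.ext_iff]; simp
      simp only [e_pu, e_pw, e_puw, e_q] at h1 h2 hn1 hn2
      simp only [e_pu, e_pw, e_puw, e_q] at hmm
      by_cases hA : x = p.1 + 1 ∧ y = p.2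
      · obtain ⟨rfl, rfl⟩ := hA
        have hpos : ((p.1 + 1, p.2 + 1) : Sq) = v := by rw [hv]
        have hneg : ¬ (((p.1 + 1, p.2) : Sq) = v) := by
          rw [hv]; intro hh; rw [Prod.mk.injEq] at hh; omega
        rw [if_pos hpos, if_neg hneg]
        rw [show ((p.1 + 1 - 1 : ℤ), (p.2 : ℤ)) = p from by rw [Prod.mk.injEq]; constructor <;> [ring; rfl]]
        have hout : s(p, ((p.1 + 1, p.2) : Sq)) ∉ T1' := by
          rw [hmm]
          rintro (⟨-, hh, -⟩ | hh | hh)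
          · exact hh rfl
          · simp only [Sym2.eq_iff, Prod.ext_iff] at hh; omega
          · simp only [Sym2.eq_iff, Prod.ext_iff] at hh; omega
        rw [ind_eq_zero _ hout, ind_eq_one _ h1]
        have hχ2 : chi (p.1 + 1, p.2) = -1 := by
          have := chi_N' (p.1 + 1) p.2; rw [hv] at hχ; omega
        rw [hχ2]; ring
      · by_cases hB : x = p.1 + 1 ∧ y = p.2 + 1
        · obtain ⟨rfl, rfl⟩ := hB
          have hneg : ¬ (((p.1 + 1, p.2 + 1 + 1) : Sq) = v) := by
            rw [hv]; intro hh; rw [Prod.mk.injEq] at hh; omega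
          have hpos : ((p.1 + 1, p.2 + 1) : Sq) = v := by rw [hv]
          rw [if_neg hneg, if_pos hpos]
          rw [show ((p.1 + 1 - 1 : ℤ), (p.2 + 1 : ℤ)) = ((p.1, p.2 + 1) : Sq) from by
            rw [Prod.mk.injEq]; constructor <;> [ring; rfl]]
          have hout : s(((p.1, p.2 + 1) : Sq), ((p.1 + 1, p.2 + 1) : Sq)) ∉ T1' := by
            rw [hmm]
            rintro (⟨-, -, hh⟩ | hh | hh)
            · exact hh rfl
            · simp only [Sym2.eq_iff, Prod.ext_iff] at hh; omega
            · simp only [Sym2.eq_iff, Prod.ext_iff] at hh; omega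
          rw [ind_eq_zero _ hout, ind_eq_one _ h2]
          rw [hv] at hχ; rw [hχ]; ring
        · have hneg1 : ¬ (((x, y + 1) : Sq) = v) := by
            rw [hv]; intro hh; rw [Prod.mk.injEq] at hh; exact hA ⟨by omega, by omega⟩
          have hneg2 : ¬ (((x, y) : Sq) = v) := by
            rw [hv]; intro hh; rw [Prod.mk.injEq] at hh; exact hB ⟨by omega, by omega⟩
          rw [if_neg hneg1, if_neg hneg2]
          have hiff : (s(((x - 1, y) : Sq), ((x, y) : Sq)) ∈ T1') ↔
              (s(((x - 1, y) : Sq), ((x, y) : Sq)) ∈ T1) := by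
            rw [hmm]
            constructor
            · rintro (⟨h, -, -⟩ | h | h)
              · exact h
              · exfalso; simp only [Sym2.eq_iff, Prod.ext_iff] at h
                exact hA ⟨by omega, by omega⟩
              · exfalso; simp only [Sym2.eq_iff, Prod.ext_iff] at h
                exact hB ⟨by omega, by omega⟩
            · intro h
              refine Or.inl ⟨h, ?_, ?_⟩
              · intro hh; simp only [Sym2.eq_iff, Prod.ext_iff] at hh
                exact hA ⟨by omega, by omega⟩
              · intro hh; simp only [Sym2.eq_iff, Prod.ext_iff] at hh
                exact hB ⟨by omega, by omega⟩
          rw [ind_congr hiff]; ring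
    · -- vertical pair flipped to horizontal (added are horizontal dominoes)
      subst hu; subst hw
      have hχ : chi v = -1 := by
        rcases hchi with ⟨hu2, -⟩ | ⟨-, h⟩
        · exfalso; rw [Prod.mk.injEq] at hu2; omega
        · exact h
      have e_pu : p + ((0 : ℤ), (1 : ℤ)) = ((p.1, p.2 + 1) : Sq) := by
        rw [Prod.ext_iff]; simp
      have e_pw : p + ((1 : ℤ), (0 : ℤ)) = ((p.1 + 1, p.2) : Sq) := by
        rw [Prod.ext_iff]; simp
      have e_puw : p + ((0 : ℤ), (1 : ℤ)) + ((1 : ℤ), (0 : ℤ)) = ((p.1 + 1, p.2 + 1) : Sq) := by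
        rw [Prod.ext_iff]; simp
      have e_q : ((p.1, p.2 + 1) : Sq) + ((1 : ℤ), (0 : ℤ)) = ((p.1 + 1, p.2 + 1) : Sq) := by
        rw [Prod.ext_iff]; simp
      simp only [e_pu, e_pw, e_puw, e_q] at h1 h2 hn1 hn2
      simp only [e_pu, e_pw, e_puw, e_q] at hmm
      by_cases hA : x = p.1 + 1 ∧ y = p.2
      · obtain ⟨rfl, rfl⟩ := hA
        have hpos : ((p.1 + 1, p.2 + 1) : Sq) = v := by rw [hv]
        have hneg : ¬ (((p.1 + 1, p.2) : Sq) = v) := by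
          rw [hv]; intro hh; rw [Prod.mk.injEq] at hh; omega
        rw [if_pos hpos, if_neg hneg]
        rw [show ((p.1 + 1 - 1 : ℤ), (p.2 : ℤ)) = p from by rw [Prod.mk.injEq]; constructor <;> [ring; rfl]]
        rw [ind_eq_one _ ((hmm _).mpr (Or.inr (Or.inl rfl))), ind_eq_zero _ hn1]
        have hχ2 : chi (p.1 + 1, p.2) = 1 := by
          have := chi_N' (p.1 + 1) p.2; rw [hv] at hχ; omega
        rw [hχ2]; ring
      · by_cases hB : x = p.1 + 1 ∧ y = p.2 + 1
        · obtain ⟨rfl, rfl⟩ := hB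
          have hneg : ¬ (((p.1 + 1, p.2 + 1 + 1) : Sq) = v) := by
            rw [hv]; intro hh; rw [Prod.mk.injEq] at hh; omega
          have hpos : ((p.1 + 1, p.2 + 1) : Sq) = v := by rw [hv]
          rw [if_neg hneg, if_pos hpos]
          rw [show ((p.1 + 1 - 1 : ℤ), (p.2 + 1 : ℤ)) = ((p.1, p.2 + 1) : Sq) from by
            rw [Prod.mk.injEq]; constructor <;> [ring; rfl]]
          rw [ind_eq_one _ ((hmm _).mpr (Or.inr (Or.inr rfl))), ind_eq_zero _ hn2]
          rw [hv] at hχ; rw [hχ]; ring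
        · have hneg1 : ¬ (((x, y + 1) : Sq) = v) := by
            rw [hv]; intro hh; rw [Prod.mk.injEq] at hh; exact hA ⟨by omega, by omega⟩
          have hneg2 : ¬ (((x, y) : Sq) = v) := by
            rw [hv]; intro hh; rw [Prod.mk.injEq] at hh; exact hB ⟨by omega, by omega⟩
          rw [if_neg hneg1, if_neg hneg2]
          have hiff : (s(((x - 1, y) : Sq), ((x, y) : Sq)) ∈ T1') ↔
              (s(((x - 1, y) : Sq), ((x, y) : Sq)) ∈ T1) := by
            rw [hmm]
            constructor
            · rintro (⟨h, -, -⟩ | h | h)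
              · exact h
              · exfalso; simp only [Sym2.eq_iff, Prod.ext_iff] at h
                omega
              · exfalso; simp only [Sym2.eq_iff, Prod.ext_iff] at h
                omega
            · intro h
              refine Or.inl ⟨h, ?_, ?_⟩
              · intro hh; simp only [Sym2.eq_iff, Prod.ext_iff] at hh; omega
              · intro hh; simp only [Sym2.eq_iff, Prod.ext_iff] at hh; omega
          rw [ind_congr hiff]; ring
  have hz : Del T0 T1' (0, 0) = 0 := by
    unfold Del intSum; simp
  have hz2 : Del T0 T1 (0, 0) = 0 := by
    unfold Del intSum; simp
  have main := pot_unique (Del T0 T1')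
      (fun z => Del T0 T1 z - (if z = v then 1 else 0)
        + (if ((0, 0) : Sq) = v then 1 else 0))
      (by rw [hz, hz2]; ring)
      (fun x y => by
        have dF := Del_right hT0 hT1' x y
        have dG := Del_right hT0 hT1 x y
        have kk := keyE x y
        by_cases hc1 : ((x, y) : Sq) = v <;> by_cases hc2 : ((x + 1, y) : Sq) = v
        · exfalso; rw [hv, Prod.mk.injEq] at hc1 hc2; omega
        · rw [if_pos hc1, if_neg hc2] at kk ⊢; omega
        · rw [if_neg hc1, if_pos hc2] at kk ⊢; omega
        · rw [if_neg hc1, if_neg hc2] at kk ⊢; omega)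
      (fun x y => by
        have dF := Del_up T0 T1' (x, y)
        have dG := Del_up T0 T1 (x, y)
        simp only at dF dG
        have kk := keyN x y
        by_cases hc1 : ((x, y) : Sq) = v <;> by_cases hc2 : ((x, y + 1) : Sq) = v
        · exfalso; rw [hv, Prod.mk.injEq] at hc1 hc2; omega
        · rw [if_pos hc1, if_neg hc2] at kk ⊢; omega
        · rw [if_neg hc1, if_pos hc2] at kk ⊢; omega
        · rw [if_neg hc1, if_neg hc2] at kk ⊢; omega)
  intro z
  exact main z

end Flip

section Walks

/-- sum of an edge function over the steps of a walk. -/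
def stepSum (f : Sq → Sq → ℤ) : List Sq → ℤ
  | [] => 0
  | [_] => 0
  | a :: b :: t => f a b + stepSum f (b :: t)

@[simp] lemma stepSum_nil (f : Sq → Sq → ℤ) : stepSum f [] = 0 := rfl
@[simp] lemma stepSum_single (f : Sq → Sq → ℤ) (a : Sq) : stepSum f [a] = 0 := rfl
@[simp] lemma stepSum_cons2 (f : Sq → Sq → ℤ) (a b : Sq) (t : List Sq) :
    stepSum f (a :: b :: t) = f a b + stepSum f (b :: t) := rfl

lemma stepSum_telescope (g : Sq → ℤ) :
    ∀ (l : List Sq) (a : Sq),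
      stepSum (fun x y => g y - g x) (a :: l) = g ((a :: l).getLast (by simp)) - g a := by
  intro l
  induction l with
  | nil => intro a; simp
  | cons b t ih =>
    intro a
    rw [stepSum_cons2, ih b]
    have : (a :: b :: t).getLast (by simp) = (b :: t).getLast (by simp) := by
      rw [List.getLast_cons (by simp)]
    rw [this]
    ring

lemma stepSum_sub (f g : Sq → Sq → ℤ) :
    ∀ l : List Sq, stepSum (fun x y => f x y - g x y) l = stepSum f l - stepSum g l := by
  intro l
  induction l with
  | nil => simp
  | cons a t ih =>
    cases t with
    | nil => simp
    | cons b t' =>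
      rw [stepSum_cons2, stepSum_cons2, stepSum_cons2, ih]
      ring

lemma stepSum_congr {f g : Sq → Sq → ℤ} :
    ∀ l : List Sq, List.Chain' adj2 l →
      (∀ x y, x ∈ l → y ∈ l → adj2 x y → f x y = g x y) →
      stepSum f l = stepSum g l := by
  intro l
  induction l with
  | nil => intro _ _; simp
  | cons a t ih =>
    intro hch h
    cases t with
    | nil => simp
    | cons b t' =>
      rw [stepSum_cons2, stepSum_cons2]
      unfold List.Chain' at hch; rw [List.isChain_cons_cons] at hch
      rw [h a b (by simp) (by simp) hch.1]
      rw [ih hch.2 (fun x y hx hy hxy => h x y (by simp [hx]) (by simp [hy]) hxy)]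

lemma stepSum_finsum {α : Type} (S : Finset α) (F : α → Sq → Sq → ℤ) :
    ∀ l : List Sq, stepSum (fun x y => ∑ c ∈ S, F c x y) l = ∑ c ∈ S, stepSum (F c) l := by
  intro l
  induction l with
  | nil => simp
  | cons a t ih =>
    cases t with
    | nil => simp
    | cons b t' =>
      rw [stepSum_cons2, ih]
      rw [← Finset.sum_add_distrib]
      rfl

lemma stepSum_neg_of {f : Sq → Sq → ℤ} :
    ∀ l : List Sq, 2 ≤ l.length → List.Chain' (fun x y => f x y < 0) l →
      stepSum f l < 0 := by
  intro l
  induction l with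
  | nil => intro h; simp at h
  | cons a t ih =>
    intro hlen hch
    cases t with
    | nil => simp at hlen
    | cons b t' =>
      rw [stepSum_cons2]
      unfold List.Chain' at hch; rw [List.isChain_cons_cons] at hch
      cases t' with
      | nil => simpa using hch.1
      | cons c t'' =>
        have := ih (by simp) hch.2
        have h1 := hch.1
        omega

/-- net signed number of uses of the east edge at `q`. -/
def eStep (q : Sq) (a b : Sq) : ℤ :=
  (if a.1 = q.1 ∧ a.2 = q.2 ∧ b.1 = q.1 + 1 ∧ b.2 = q.2 then 1 else 0)
  - (if b.1 = q.1 ∧ b.2 = q.2 ∧ a.1 = q.1 + 1 ∧ a.2 = q.2 then 1 else 0)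

/-- net signed number of uses of the north edge at `q`. -/
def nStep (q : Sq) (a b : Sq) : ℤ :=
  (if a.1 = q.1 ∧ a.2 = q.2 ∧ b.1 = q.1 ∧ b.2 = q.2 + 1 then 1 else 0)
  - (if b.1 = q.1 ∧ b.2 = q.2 ∧ a.1 = q.1 ∧ a.2 = q.2 + 1 then 1 else 0)

/-- winding contribution of a step with respect to the downward ray from cell `c`. -/
def gStep (c : Sq) (a b : Sq) : ℤ :=
  (if a.2 = b.2 ∧ b.1 = a.1 + 1 ∧ a.1 = c.1 ∧ a.2 ≤ c.2 then 1 else 0)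
  - (if a.2 = b.2 ∧ a.1 = b.1 + 1 ∧ b.1 = c.1 ∧ b.2 ≤ c.2 then 1 else 0)

def vStep (u : Sq) (a b : Sq) : ℤ :=
  (if b.1 = u.1 ∧ b.2 = u.2 then 1 else 0) - (if a.1 = u.1 ∧ a.2 = u.2 then 1 else 0)

/-- conservation at a vertex, for closed walks. -/
lemma conservation (u : Sq) (a : Sq) (l : List Sq)
    (hcl : (a :: l).getLast (by simp) = a) :
    stepSum (vStep u) (a :: l) = 0 := by
  have := stepSum_telescope (fun z => if z.1 = u.1 ∧ z.2 = u.2 then 1 else 0) l a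
  unfold vStep
  rw [this, hcl]
  ring

set_option maxHeartbeats 1600000 in
lemma vStep_decomp (u : Sq) {a b : Sq} (hab : adj2 a b) :
    vStep u a b = eStep (u.1 - 1, u.2) a b + nStep (u.1, u.2 - 1) a b
      - eStep u a b - nStep u a b := by
  rcases adj2_cases hab with h | h | h | h <;> subst h <;>
    (unfold vStep eStep nStep; simp only; split_ifs <;> omega)

/-- conservation in edge-count form. -/
lemma conservation' (u : Sq) (a : Sq) (l : List Sq)
    (hcl : (a :: l).getLast (by simp) = a) (hch : List.Chain' adj2 (a :: l)) :
    stepSum (eStep (u.1 - 1, u.2)) (a :: l) + stepSum (nStep (u.1, u.2 - 1)) (a :: l)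
      - stepSum (eStep u) (a :: l) - stepSum (nStep u) (a :: l) = 0 := by
  have h1 : stepSum (fun x y => eStep (u.1 - 1, u.2) x y + nStep (u.1, u.2 - 1) x y
      - eStep u x y - nStep u x y) (a :: l) = stepSum (vStep u) (a :: l) := by
    apply stepSum_congr _ hch
    intro x y _ _ hxy
    rw [vStep_decomp u hxy]
  have h2 : stepSum (fun x y => eStep (u.1 - 1, u.2) x y + nStep (u.1, u.2 - 1) x y
      - eStep u x y - nStep u x y) (a :: l)
      = stepSum (eStep (u.1 - 1, u.2)) (a :: l) + stepSum (nStep (u.1, u.2 - 1)) (a :: l)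
      - stepSum (eStep u) (a :: l) - stepSum (nStep u) (a :: l) := by
    generalize (a :: l) = m
    induction m with
    | nil => simp
    | cons p t ih =>
      cases t with
      | nil => simp
      | cons q t' =>
        rw [stepSum_cons2, stepSum_cons2, stepSum_cons2, stepSum_cons2, stepSum_cons2, ih]
        ring
  rw [← h2, h1, conservation u a l hcl]

/-- identity (i): vertical difference of windings is the east-edge count. -/
lemma winding_diff_vert (c : Sq) (l : List Sq) (hch : List.Chain' adj2 l) :
    stepSum (gStep c) l - stepSum (gStep (c.1, c.2 - 1)) l = stepSum (eStep (c.1, c.2)) l := by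
  rw [← stepSum_sub]
  apply stepSum_congr _ hch
  intro x y _ _ _
  unfold gStep eStep
  simp only
  split_ifs <;> omega

lemma stepSum_zero : ∀ l : List Sq, stepSum (fun _ _ => 0) l = 0 := by
  intro l
  induction l with
  | nil => simp
  | cons a t ih =>
    cases t with
    | nil => simp
    | cons b t' => rw [stepSum_cons2, ih]; ring

lemma stepSum_eq_zero {f : Sq → Sq → ℤ} (l : List Sq) (hch : List.Chain' adj2 l)
    (h : ∀ x y, x ∈ l → y ∈ l → adj2 x y → f x y = 0) : stepSum f l = 0 := by
  rw [stepSum_congr l hch h]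
  exact stepSum_zero l

lemma list_bound (L : List Sq) : ∃ B : ℤ, 0 ≤ B ∧ ∀ v ∈ L, -B ≤ v.1 ∧ v.1 ≤ B ∧ -B ≤ v.2 ∧ v.2 ≤ B := by
  induction L with
  | nil => exact ⟨0, le_refl _, by simp⟩
  | cons v t ih =>
    obtain ⟨B, hB0, hB⟩ := ih
    refine ⟨B + v.1.natAbs + v.2.natAbs, by omega, ?_⟩
    intro x hx
    rcases List.mem_cons.mp hx with rfl | hx
    · omega
    · have := hB x hx; omega

/-- identity (ii): horizontal difference of windings is the north-edge count,
for closed walks. -/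
lemma winding_diff_horiz (a : Sq) (l : List Sq)
    (hcl : (a :: l).getLast (by simp) = a) (hch : List.Chain' adj2 (a :: l)) (x y : ℤ) :
    stepSum (gStep (x - 1, y)) (a :: l) - stepSum (gStep (x, y)) (a :: l)
      = stepSum (nStep (x, y)) (a :: l) := by
  obtain ⟨B, hB0, hB⟩ := list_bound (a :: l)
  set L := a :: l with hL
  have base : ∀ y' : ℤ, y' < -B → stepSum (gStep (x - 1, y')) L - stepSum (gStep (x, y')) L
      - stepSum (nStep (x, y')) L = 0 := by
    intro y' hy'
    have z1 : stepSum (gStep (x - 1, y')) L = 0 := by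
      apply stepSum_eq_zero _ hch
      intro p q hp hq _
      unfold gStep
      have := hB p hp
      have := hB q hq
      split_ifs <;> omega
    have z2 : stepSum (gStep (x, y')) L = 0 := by
      apply stepSum_eq_zero _ hch
      intro p q hp hq _
      unfold gStep
      have := hB p hp
      have := hB q hq
      split_ifs <;> omega
    have z3 : stepSum (nStep (x, y')) L = 0 := by
      apply stepSum_eq_zero _ hch
      intro p q hp hq _
      unfold nStep
      have := hB p hp
      have := hB q hq
      split_ifs <;> omega
    omega
  have step : ∀ y' : ℤ, (stepSum (gStep (x - 1, y' - 1)) L - stepSum (gStep (x, y' - 1)) L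
      - stepSum (nStep (x, y' - 1)) L = 0) → stepSum (gStep (x - 1, y')) L
      - stepSum (gStep (x, y')) L - stepSum (nStep (x, y')) L = 0 := by
    intro y' ih
    have w1 := winding_diff_vert (x - 1, y') L hch
    have w2 := winding_diff_vert (x, y') L hch
    simp only at w1 w2
    have cons := conservation' (x, y') a l hcl hch
    simp only at cons
    rw [← hL] at cons
    omega
  have main : ∀ y' : ℤ, stepSum (gStep (x - 1, y')) L - stepSum (gStep (x, y')) L
      - stepSum (nStep (x, y')) L = 0 := by
    intro y'
    rcases lt_or_ge y' (-B) with h | h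
    · exact base y' h
    · have key : ∀ n : ℕ, stepSum (gStep (x - 1, -B - 1 + (n : ℤ))) L
          - stepSum (gStep (x, -B - 1 + (n : ℤ))) L
          - stepSum (nStep (x, -B - 1 + (n : ℤ))) L = 0 := by
        intro n
        induction n with
        | zero =>
          have := base (-B - 1) (by omega)
          simpa using this
        | succ k ih =>
          have hs := step (-B - 1 + ((k : ℤ) + 1))
          rw [show (-B - 1 + ((k : ℤ) + 1) - 1 : ℤ) = -B - 1 + (k : ℤ) from by ring] at hs
          have := hs ih
          rw [show ((k + 1 : ℕ) : ℤ) = (k : ℤ) + 1 from by push_cast; ring]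
          convert this using 4 <;> push_cast <;> ring
      have := key (y' + B + 1).toNat
      rw [show (-B - 1 + (((y' + B + 1).toNat : ℕ) : ℤ) : ℤ) = y' from by omega] at this
      exact this
  have := main y
  omega

lemma stepSum_mul (k : ℤ) (f : Sq → Sq → ℤ) :
    ∀ l : List Sq, stepSum (fun x y => k * f x y) l = k * stepSum f l := by
  intro l
  induction l with
  | nil => simp
  | cons a t ih =>
    cases t with
    | nil => simp
    | cons b t' => rw [stepSum_cons2, stepSum_cons2, ih]; ring

lemma finset_bound (D : Finset Sq) :
    ∃ B : ℤ, 0 ≤ B ∧ ∀ c ∈ D, -B ≤ c.1 ∧ c.1 ≤ B ∧ -B ≤ c.2 ∧ c.2 ≤ B := by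
  classical
  induction D using Finset.induction_on with
  | empty => exact ⟨0, le_refl _, by simp⟩
  | @insert v t hvt ih =>
    obtain ⟨B, hB0, hB⟩ := ih
    refine ⟨B + v.1.natAbs + v.2.natAbs, by omega, ?_⟩
    intro c hc
    rcases Finset.mem_insert.mp hc with rfl | hc
    · omega
    · have := hB c hc; omega

lemma Ico_insert_bot {y Y : ℤ} (h : y < Y) :
    Finset.Ico y Y = insert y (Finset.Ico (y + 1) Y) := by
  ext z
  simp only [Finset.mem_Ico, Finset.mem_insert]
  omega

lemma sum_Ico_bot (F : ℤ → ℤ) {y Y : ℤ} (h : y < Y) :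
    ∑ b ∈ Finset.Ico y Y, F b = F y + ∑ b ∈ Finset.Ico (y + 1) Y, F b := by
  rw [Ico_insert_bot h, Finset.sum_insert (by simp [Finset.mem_Ico])]

lemma colsum (F : Sq → ℤ) (Xlo X Ylo Y x y : ℤ) (hx1 : Xlo ≤ x) (hx2 : x < X)
    (hy : Ylo ≤ y) :
    ∑ c ∈ Finset.Ico Xlo X ×ˢ Finset.Ico Ylo Y, (if c.1 = x ∧ y ≤ c.2 then F c else 0)
      = ∑ b ∈ Finset.Ico y Y, F (x, b) := by
  rw [← Finset.sum_filter]
  have hset : (Finset.Ico Xlo X ×ˢ Finset.Ico Ylo Y).filter (fun c => c.1 = x ∧ y ≤ c.2)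
      = (Finset.Ico y Y).map ⟨fun b => (x, b), fun b1 b2 h => by
          rw [Prod.mk.injEq] at h; exact h.2⟩ := by
    ext ⟨c1, c2⟩
    simp only [Finset.mem_filter, Finset.mem_product, Finset.mem_Ico, Finset.mem_map,
      Function.Embedding.coeFn_mk, Prod.mk.injEq]
    constructor
    · rintro ⟨⟨⟨h1, h2⟩, h3, h4⟩, rfl, h6⟩
      exact ⟨c2, ⟨by omega, by omega⟩, rfl⟩
    · rintro ⟨b, ⟨hb1, hb2⟩, rfl, rfl⟩
      refine ⟨⟨⟨by omega, by omega⟩, by omega, by omega⟩, rfl, by omega⟩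
  rw [hset, Finset.sum_map]
  rfl

/-- the height 1-form of a tiling, as an edge function on directed steps. -/
def stepOmega (T : Finset (Sym2 Sq)) (a b : Sq) : ℤ :=
  (if b.1 = a.1 + 1 ∧ b.2 = a.2 then oE T a else 0)
  + (if b.1 = a.1 ∧ b.2 = a.2 + 1 then oN T a else 0)
  - (if a.1 = b.1 + 1 ∧ a.2 = b.2 then oE T b else 0)
  - (if a.1 = b.1 ∧ a.2 = b.2 + 1 then oN T b else 0)

/-- curl of the height 1-form around the cell `c`. -/
def curl (T : Finset (Sym2 Sq)) (c : Sq) : ℤ :=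
  oE T (c.1, c.2) + oN T (c.1 + 1, c.2) - oE T (c.1, c.2 + 1) - oN T (c.1, c.2)

lemma curl_eq (T : Finset (Sym2 Sq)) (x y : ℤ) :
    curl T (x, y) = 4 * chi (x, y) * (1 - cnt T (x, y)) := by
  unfold curl oE oN cE cN cnt
  simp only
  rw [show (x + 1 - 1 : ℤ) = x from by ring, show (y + 1 - 1 : ℤ) = y from by ring]
  rw [chi_E' x y, chi_N' x y]
  rw [show (s(((x, y - 1) : Sq), ((x, y) : Sq))) = s(((x, y) : Sq), ((x, y - 1) : Sq)) from
    Sym2.eq_swap]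
  rw [show (s(((x - 1, y) : Sq), ((x, y) : Sq))) = s(((x, y) : Sq), ((x - 1, y) : Sq)) from
    Sym2.eq_swap]
  rcases chi_sq (x, y) with h | h <;> rw [h] <;> ring_nf <;> omega

lemma curl_mem {D : Finset Sq} {T : Finset (Sym2 Sq)} (hT : IsTiling2 D T) {c : Sq}
    (hc : c ∈ D) : curl T c = 0 := by
  have h1 := curl_eq T c.1 c.2
  have h2 := cnt_tiling hT (c.1, c.2)
  have h3 : ((c.1, c.2) : Sq) = c := rfl
  rw [h3] at h1 h2
  rw [h1, h2, ind_eq_one _ hc]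
  ring

/-- Discrete Green's theorem / conservativity: the height 1-form of a tiling of `D`
sums to zero along any closed walk through interior vertices,
provided the complement of `D` is connected. -/
theorem green {D : Finset Sq} {T : Finset (Sym2 Sq)} (hT : IsTiling2 D T) (hSC : SimplyConn D)
    (a : Sq) (l : List Sq) (hcl : (a :: l).getLast (by simp) = a)
    (hch : List.Chain' adj2 (a :: l))
    (hint : ∀ v ∈ a :: l, (v.1, v.2) ∈ D ∧ (v.1 - 1, v.2) ∈ D ∧ (v.1, v.2 - 1) ∈ D ∧
      (v.1 - 1, v.2 - 1) ∈ D) :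
    stepSum (stepOmega T) (a :: l) = 0 := by
  obtain ⟨B, hB0, hB⟩ := list_bound (a :: l)
  obtain ⟨BD, hBD0, hBD⟩ := finset_bound D
  set X : ℤ := B + 1 with hX
  set Y : ℤ := B + 1 with hY
  set Xlo : ℤ := -B - 1 with hXlo
  set Ylo : ℤ := -B - 1 with hYlo
  set φ : Sq → ℤ := fun z =>
    -(∑ b ∈ Finset.Ico z.2 Y, oN T (z.1, b)) - ∑ q ∈ Finset.Ico z.1 X, oE T (q, Y) with hφ
  have φN : ∀ x y : ℤ, y < Y → φ (x, y + 1) - φ (x, y) = oN T (x, y) := by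
    intro x y hy
    rw [hφ]
    simp only
    rw [sum_Ico_bot (fun b => oN T (x, b)) hy]
    ring
  have φE : ∀ x y : ℤ, x < X → φ (x + 1, y) - φ (x, y)
      = (∑ b ∈ Finset.Ico y Y, (oN T (x, b) - oN T (x + 1, b))) + oE T (x, Y) := by
    intro x y hx
    rw [hφ]
    simp only
    rw [sum_Ico_bot (fun q => oE T (q, Y)) hx]
    rw [Finset.sum_sub_distrib]
    ring
  have col : ∀ (n : ℕ) (x y : ℤ), y = Y - n →
      oE T (x, y) = (∑ b ∈ Finset.Ico y Y, curl T (x, b)) + oE T (x, Y)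
        + ∑ b ∈ Finset.Ico y Y, (oN T (x, b) - oN T (x + 1, b)) := by
    intro n
    induction n with
    | zero =>
      intro x y hy
      simp only [Nat.cast_zero, sub_zero] at hy
      subst hy
      simp
    | succ k ih =>
      intro x y hy
      have hyY : y < Y := by omega
      have ih' := ih x (y + 1) (by push_cast at hy ⊢; omega)
      rw [sum_Ico_bot (fun b => curl T (x, b)) hyY,
        sum_Ico_bot (fun b => oN T (x, b) - oN T (x + 1, b)) hyY]
      have hcurl : curl T (x, y) = oE T (x, y) + oN T (x + 1, y) - oE T (x, y + 1)
          - oN T (x, y) := rfl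
      omega
  -- pointwise identity on steps
  have point : ∀ p q, p ∈ a :: l → q ∈ a :: l → adj2 p q →
      stepOmega T p q - (φ q - φ p)
        = ∑ c ∈ Finset.Ico Xlo X ×ˢ Finset.Ico Ylo Y, curl T c * gStep c p q := by
    intro p q hp hq hpq
    have hBp := hB p hp
    have hBq := hB q hq
    rcases adj2_cases hpq with h | h | h | h <;> subst h
    · -- east step
      have hso : stepOmega T p (p.1 + 1, p.2) = oE T p := by
        unfold stepOmega
        simp only
        rw [if_pos (by first | trivial | (constructor <;> first | rfl | ring1 | trivial)), if_neg (by omega), if_neg (by omega), if_neg (by omega)]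
        ring
      have hφd := φE p.1 p.2 (by omega)
      have hcol := col (Y - p.2).toNat p.1 p.2 (by omega)
      have hpoint : ∀ c : Sq, curl T c * gStep c p (p.1 + 1, p.2)
          = if c.1 = p.1 ∧ p.2 ≤ c.2 then curl T c else 0 := by
        intro c
        unfold gStep
        simp only [eq_self_iff_true, true_and, and_true]
        split_ifs <;> first | ring1 | (exfalso; omega)
      rw [hso]
      calc oE T p - (φ (p.1 + 1, p.2) - φ p)
          = ∑ b ∈ Finset.Ico p.2 Y, curl T (p.1, b) := by
            rw [show φ (p.1 + 1, p.2) - φ p = φ (p.1 + 1, p.2) - φ (p.1, p.2) from rfl, hφd]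
            rw [show oE T p = oE T (p.1, p.2) from rfl, hcol]
            ring
        _ = ∑ c ∈ Finset.Ico Xlo X ×ˢ Finset.Ico Ylo Y, curl T c * gStep c p (p.1 + 1, p.2) := by
            rw [Finset.sum_congr rfl (fun c _ => hpoint c)]
            rw [colsum (curl T) Xlo X Ylo Y p.1 p.2 (by omega) (by omega) (by omega)]
    · -- west step
      have hso : stepOmega T p (p.1 - 1, p.2) = -oE T (p.1 - 1, p.2) := by
        unfold stepOmega
        simp only
        rw [if_neg (by omega), if_neg (by omega), if_pos (by first | trivial | (constructor <;> first | rfl | ring1 | trivial)), if_neg (by omega)]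
        ring
      have hφd := φE (p.1 - 1) p.2 (by omega)
      rw [show ((p.1 - 1 + 1 : ℤ), (p.2 : ℤ)) = p from by
        rw [Prod.mk.injEq]; constructor <;> [ring; rfl]] at hφd
      have hcol := col (Y - p.2).toNat (p.1 - 1) p.2 (by omega)
      have hpoint : ∀ c : Sq, curl T c * gStep c p (p.1 - 1, p.2)
          = if c.1 = p.1 - 1 ∧ p.2 ≤ c.2 then -curl T c else 0 := by
        intro c
        unfold gStep
        simp only [eq_self_iff_true, true_and, and_true]
        split_ifs <;> first | ring1 | (exfalso; omega)
      rw [hso]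
      calc -oE T (p.1 - 1, p.2) - (φ (p.1 - 1, p.2) - φ p)
          = -∑ b ∈ Finset.Ico p.2 Y, curl T (p.1 - 1, b) := by
            rw [hcol]
            have : φ p - φ (p.1 - 1, p.2) = (∑ b ∈ Finset.Ico p.2 Y,
                (oN T (p.1 - 1, b) - oN T (p.1 - 1 + 1, b))) + oE T (p.1 - 1, Y) := hφd
            rw [show (p.1 - 1 + 1 : ℤ) = p.1 from by ring] at this
            omega
        _ = ∑ c ∈ Finset.Ico Xlo X ×ˢ Finset.Ico Ylo Y, curl T c * gStep c p (p.1 - 1, p.2) := by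
            rw [Finset.sum_congr rfl (fun c _ => hpoint c)]
            rw [show ∑ c ∈ Finset.Ico Xlo X ×ˢ Finset.Ico Ylo Y,
                (if c.1 = p.1 - 1 ∧ p.2 ≤ c.2 then -curl T c else 0)
                = ∑ c ∈ Finset.Ico Xlo X ×ˢ Finset.Ico Ylo Y,
                (if c.1 = p.1 - 1 ∧ p.2 ≤ c.2 then (fun d => -curl T d) c else 0) from rfl]
            rw [colsum (fun d => -curl T d) Xlo X Ylo Y (p.1 - 1) p.2 (by omega) (by omega)
              (by omega)]
            rw [← Finset.sum_neg_distrib]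
    · -- north step
      have hso : stepOmega T p (p.1, p.2 + 1) = oN T p := by
        unfold stepOmega
        simp only
        rw [if_neg (by omega), if_pos (by first | trivial | (constructor <;> first | rfl | ring1 | trivial)), if_neg (by omega), if_neg (by omega)]
        ring
      have hφd := φN p.1 p.2 (by omega)
      have hzero : ∀ c : Sq, curl T c * gStep c p (p.1, p.2 + 1) = 0 := by
        intro c
        unfold gStep
        simp only [eq_self_iff_true, true_and, and_true]
        split_ifs <;> first | ring1 | (exfalso; omega)
      rw [hso, show φ (p.1, p.2 + 1) - φ p = φ (p.1, p.2 + 1) - φ (p.1, p.2) from rfl, hφd]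
      rw [Finset.sum_congr rfl (fun c _ => hzero c), Finset.sum_const_zero]
      show oN T p - oN T (p.1, p.2) = 0
      rw [show ((p.1, p.2) : Sq) = p from rfl]
      ring
    · -- south step
      have hso : stepOmega T p (p.1, p.2 - 1) = -oN T (p.1, p.2 - 1) := by
        unfold stepOmega
        simp only
        rw [if_neg (by omega), if_neg (by omega), if_neg (by omega), if_pos (by first | trivial | (constructor <;> first | rfl | ring1 | trivial))]
        ring
      have hφd := φN p.1 (p.2 - 1) (by omega)
      rw [show ((p.1 : ℤ), (p.2 - 1 + 1 : ℤ)) = p from by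
        rw [Prod.mk.injEq]; constructor <;> [rfl; ring]] at hφd
      have hzero : ∀ c : Sq, curl T c * gStep c p (p.1, p.2 - 1) = 0 := by
        intro c
        unfold gStep
        simp only [eq_self_iff_true, true_and, and_true]
        split_ifs <;> first | ring1 | (exfalso; omega)
      rw [hso]
      rw [Finset.sum_congr rfl (fun c _ => hzero c), Finset.sum_const_zero]
      omega
  -- winding numbers of cells outside D vanish
  have wind : ∀ c : Sq, c ∉ D → stepSum (gStep c) (a :: l) = 0 := by
    obtain ⟨cf, hcfD, hWf⟩ : ∃ cf : Sq, cf ∉ D ∧ stepSum (gStep cf) (a :: l) = 0 := by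
      refine ⟨(B + BD + 1, 0), ?_, ?_⟩
      · intro h
        have := hBD _ h
        simp only at this
        omega
      · apply stepSum_eq_zero _ hch
        intro p q hp hq _
        unfold gStep
        have h1 := hB p hp
        have h2 := hB q hq
        simp only
        split_ifs <;> omega
    have stepeq : ∀ x y : Sq, x ∉ D → y ∉ D → adj2 x y →
        stepSum (gStep x) (a :: l) = stepSum (gStep y) (a :: l) := by
      intro x y hx hy hxy
      rcases adj2_cases hxy with h | h | h | h <;> subst h
      · -- y = E x : vertex (x.1+1, x.2)
        have hh := winding_diff_horiz a l hcl hch (x.1 + 1) x.2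
        rw [show (x.1 + 1 - 1 : ℤ) = x.1 from by ring] at hh
        have hz : stepSum (nStep (x.1 + 1, x.2)) (a :: l) = 0 := by
          apply stepSum_eq_zero _ hch
          intro p q hp hq _
          unfold nStep
          simp only
          have c1 : ¬(p.1 = x.1 + 1 ∧ p.2 = x.2 ∧ q.1 = x.1 + 1 ∧ q.2 = x.2 + 1) := by
            rintro ⟨hp1, hp2, -, -⟩
            have hD := (hint p hp).2.1
            rw [hp1, hp2] at hD
            rw [show ((x.1 + 1 - 1 : ℤ), (x.2 : ℤ)) = x from by
              rw [Prod.mk.injEq]; constructor <;> [ring; rfl]] at hD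
            exact hx hD
          have c2 : ¬(q.1 = x.1 + 1 ∧ q.2 = x.2 ∧ p.1 = x.1 + 1 ∧ p.2 = x.2 + 1) := by
            rintro ⟨hq1, hq2, -, -⟩
            have hD := (hint q hq).2.1
            rw [hq1, hq2] at hD
            rw [show ((x.1 + 1 - 1 : ℤ), (x.2 : ℤ)) = x from by
              rw [Prod.mk.injEq]; constructor <;> [ring; rfl]] at hD
            exact hx hD
          rw [if_neg c1, if_neg c2]
          ring
        rw [hz] at hh
        rw [show ((x.1, x.2) : Sq) = x from rfl] at hh
        omega
      · -- y = W x : vertex (x.1, x.2)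
        have hh := winding_diff_horiz a l hcl hch x.1 x.2
        have hz : stepSum (nStep (x.1, x.2)) (a :: l) = 0 := by
          apply stepSum_eq_zero _ hch
          intro p q hp hq _
          unfold nStep
          simp only
          have c1 : ¬(p.1 = x.1 ∧ p.2 = x.2 ∧ q.1 = x.1 ∧ q.2 = x.2 + 1) := by
            rintro ⟨hp1, hp2, -, -⟩
            have hD := (hint p hp).1
            rw [hp1, hp2] at hD
            exact hx hD
          have c2 : ¬(q.1 = x.1 ∧ q.2 = x.2 ∧ p.1 = x.1 ∧ p.2 = x.2 + 1) := by
            rintro ⟨hq1, hq2, -, -⟩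
            have hD := (hint q hq).1
            rw [hq1, hq2] at hD
            exact hx hD
          rw [if_neg c1, if_neg c2]
          ring
        rw [hz] at hh
        rw [show ((x.1, x.2) : Sq) = x from rfl] at hh
        omega
      · -- y = N x : cell (x.1, x.2+1)
        have hh := winding_diff_vert (x.1, x.2 + 1) (a :: l) hch
        simp only at hh
        rw [show (x.2 + 1 - 1 : ℤ) = x.2 from by ring] at hh
        have hz : stepSum (eStep (x.1, x.2 + 1)) (a :: l) = 0 := by
          apply stepSum_eq_zero _ hch
          intro p q hp hq _
          unfold eStep
          simp only
          have c1 : ¬(p.1 = x.1 ∧ p.2 = x.2 + 1 ∧ q.1 = x.1 + 1 ∧ q.2 = x.2 + 1) := by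
            rintro ⟨hp1, hp2, -, -⟩
            have hD := (hint p hp).1
            rw [hp1, hp2] at hD
            exact hy hD
          have c2 : ¬(q.1 = x.1 ∧ q.2 = x.2 + 1 ∧ p.1 = x.1 + 1 ∧ p.2 = x.2 + 1) := by
            rintro ⟨hq1, hq2, -, -⟩
            have hD := (hint q hq).1
            rw [hq1, hq2] at hD
            exact hy hD
          rw [if_neg c1, if_neg c2]
          ring
        rw [hz] at hh
        rw [show ((x.1, x.2) : Sq) = x from rfl] at hh
        omega
      · -- y = S x : cell (x.1, x.2)
        have hh := winding_diff_vert (x.1, x.2) (a :: l) hch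
        simp only at hh
        have hz : stepSum (eStep (x.1, x.2)) (a :: l) = 0 := by
          apply stepSum_eq_zero _ hch
          intro p q hp hq _
          unfold eStep
          simp only
          have c1 : ¬(p.1 = x.1 ∧ p.2 = x.2 ∧ q.1 = x.1 + 1 ∧ q.2 = x.2) := by
            rintro ⟨hp1, hp2, -, -⟩
            have hD := (hint p hp).1
            rw [hp1, hp2] at hD
            exact hx hD
          have c2 : ¬(q.1 = x.1 ∧ q.2 = x.2 ∧ p.1 = x.1 + 1 ∧ p.2 = x.2) := by
            rintro ⟨hq1, hq2, -, -⟩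
            have hD := (hint q hq).1
            rw [hq1, hq2] at hD
            exact hx hD
          rw [if_neg c1, if_neg c2]
          ring
        rw [hz] at hh
        rw [show ((x.1, x.2) : Sq) = x from rfl] at hh
        omega
    intro c hc
    have path := hSC c cf hc hcfD
    have main : ∀ e, Relation.ReflTransGen (fun x y => x ∉ D ∧ y ∉ D ∧ adj2 x y) c e →
        stepSum (gStep c) (a :: l) = stepSum (gStep e) (a :: l) := by
      intro e he
      induction he with
      | refl => rfl
      | tail hst hlast ih =>
        rename_i mid fin
        obtain ⟨hm, hf, hmf⟩ := hlast
        rw [ih, stepeq mid fin hm hf hmf]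
    rw [main cf path, hWf]
  -- assembly
  have h1 : stepSum (stepOmega T) (a :: l)
      = stepSum (fun p q => stepOmega T p q - (φ q - φ p)) (a :: l) := by
    rw [stepSum_sub (stepOmega T) (fun p q => φ q - φ p)]
    rw [stepSum_telescope φ l a, hcl]
    ring
  have h2 : stepSum (fun p q => stepOmega T p q - (φ q - φ p)) (a :: l)
      = ∑ c ∈ Finset.Ico Xlo X ×ˢ Finset.Ico Ylo Y, curl T c * stepSum (gStep c) (a :: l) := by
    rw [stepSum_congr _ hch point]
    rw [stepSum_finsum]
    exact Finset.sum_congr rfl (fun c _ => stepSum_mul (curl T c) (gStep c) _)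
  rw [h1, h2]
  apply Finset.sum_eq_zero
  intro c _
  by_cases hc : c ∈ D
  · rw [curl_mem hT hc]; ring
  · rw [wind c hc]; ring

/-- values of the 1-form on the four directed edges at a vertex. -/
lemma stepOmega_E (T : Finset (Sym2 Sq)) (z : Sq) :
    stepOmega T z (z.1 + 1, z.2) = oE T z := by
  unfold stepOmega
  simp only [eq_self_iff_true, true_and, and_true]
  rw [if_pos (by first | ring1 | rfl | trivial | (constructor <;> first | rfl | ring1 | trivial)), if_neg (by omega), if_neg (by omega), if_neg (by omega)]
  ring

lemma stepOmega_W (T : Finset (Sym2 Sq)) (z : Sq) :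
    stepOmega T z (z.1 - 1, z.2) = -oE T (z.1 - 1, z.2) := by
  unfold stepOmega
  simp only [eq_self_iff_true, true_and, and_true]
  rw [if_neg (by omega), if_neg (by omega), if_pos (by first | ring1 | rfl | trivial | (constructor <;> first | rfl | ring1 | trivial)),
    if_neg (by omega)]
  ring

lemma stepOmega_N (T : Finset (Sym2 Sq)) (z : Sq) :
    stepOmega T z (z.1, z.2 + 1) = oN T z := by
  unfold stepOmega
  simp only [eq_self_iff_true, true_and, and_true]
  rw [if_neg (by omega), if_pos (by first | ring1 | rfl | trivial | (constructor <;> first | rfl | ring1 | trivial)), if_neg (by omega), if_neg (by omega)]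
  ring

lemma stepOmega_S (T : Finset (Sym2 Sq)) (z : Sq) :
    stepOmega T z (z.1, z.2 - 1) = -oN T (z.1, z.2 - 1) := by
  unfold stepOmega
  simp only [eq_self_iff_true, true_and, and_true]
  rw [if_neg (by omega), if_neg (by omega), if_neg (by omega),
    if_pos (by first | ring1 | rfl | trivial | (constructor <;> first | rfl | ring1 | trivial))]
  ring

lemma oE_vals (T : Finset (Sym2 Sq)) (z : Sq) :
    oE T z = 1 ∨ oE T z = -1 ∨ oE T z = 3 ∨ oE T z = -3 := by
  unfold oE cE ind
  rcases chi_sq z with h | h <;> rw [h] <;> split <;> omega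

lemma oN_vals (T : Finset (Sym2 Sq)) (z : Sq) :
    oN T z = 1 ∨ oN T z = -1 ∨ oN T z = 3 ∨ oN T z = -3 := by
  unfold oN cN ind
  rcases chi_sq z with h | h <;> rw [h] <;> split <;> omega

lemma oE_sub (T0 T1 : Finset (Sym2 Sq)) (z : Sq) :
    oE T0 z - oE T1 z = 4 * dE T0 T1 z := by
  unfold oE dE; ring

lemma oN_sub (T0 T1 : Finset (Sym2 Sq)) (z : Sq) :
    oN T0 z - oN T1 z = 4 * dN T0 T1 z := by
  unfold oN dN; ring

lemma dE_vals (T0 T1 : Finset (Sym2 Sq)) (z : Sq) :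
    dE T0 T1 z = 0 ∨ dE T0 T1 z = 1 ∨ dE T0 T1 z = -1 := by
  unfold dE cE ind
  rcases chi_sq z with h | h <;> rw [h] <;> split <;> split <;> omega

lemma dN_vals (T0 T1 : Finset (Sym2 Sq)) (z : Sq) :
    dN T0 T1 z = 0 ∨ dN T0 T1 z = 1 ∨ dN T0 T1 z = -1 := by
  unfold dN cN ind
  rcases chi_sq z with h | h <;> rw [h] <;> split <;> split <;> omega

lemma Del_swap {D : Finset Sq} {T0 T1 : Finset (Sym2 Sq)} (hT0 : IsTiling2 D T0)
    (hT1 : IsTiling2 D T1) : ∀ z, Del T1 T0 z = -Del T0 T1 z := by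
  apply pot_unique (Del T1 T0) (fun z => -Del T0 T1 z)
  · have h1 : Del T1 T0 (0, 0) = 0 := by unfold Del intSum; simp
    have h2 : Del T0 T1 (0, 0) = 0 := by unfold Del intSum; simp
    show Del T1 T0 (0, 0) = -Del T0 T1 (0, 0)
    omega
  · intro x y
    have a1 := Del_right hT1 hT0 x y
    have a2 := Del_right hT0 hT1 x y
    have : dE T1 T0 (x, y) = -dE T0 T1 (x, y) := by unfold dE; ring
    show Del T1 T0 (x + 1, y) - Del T1 T0 (x, y) = -Del T0 T1 (x + 1, y) - -Del T0 T1 (x, y)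
    omega
  · intro x y
    have a1 := Del_up T1 T0 (x, y)
    have a2 := Del_up T0 T1 (x, y)
    simp only at a1 a2
    have : dN T1 T0 (x, y) = -dN T0 T1 (x, y) := by unfold dN; ring
    show Del T1 T0 (x, y + 1) - Del T1 T0 (x, y) = -Del T0 T1 (x, y + 1) - -Del T0 T1 (x, y)
    omega

/-- if `Del` is constant, the two tilings coincide. -/
lemma tilings_eq_of_Del_const {D : Finset Sq} {T0 T1 : Finset (Sym2 Sq)}
    (hT0 : IsTiling2 D T0) (hT1 : IsTiling2 D T1) {K : ℤ}
    (H : ∀ z : Sq, Del T0 T1 z = K) : T0 = T1 := by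
  have hdE : ∀ v : Sq, cE T0 v = cE T1 v := by
    intro v
    have h := Del_right hT0 hT1 v.1 v.2
    rw [show ((v.1, v.2) : Sq) = v from rfl] at h
    rw [H _, H _] at h
    have h2 : dE T0 T1 v = 0 := by omega
    unfold dE at h2
    rcases chi_sq v with hc | hc <;> rw [hc] at h2 <;> omega
  have hdN : ∀ v : Sq, cN T0 v = cN T1 v := by
    intro v
    have h := Del_up T0 T1 v
    rw [H _, H _] at h
    have h2 : dN T0 T1 v = 0 := by omega
    unfold dN at h2
    rcases chi_sq v with hc | hc <;> rw [hc] at h2 <;> omega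
  have key : ∀ a b : Sq, adj2 a b → (s(a, b) ∈ T0 ↔ s(a, b) ∈ T1) := by
    intro a b hab
    rcases adj2_cases hab with h | h | h | h <;> subst h
    · have := hdN (a.1 + 1, a.2)
      unfold cN at this
      rw [show (a.1 + 1 - 1 : ℤ) = a.1 from by ring] at this
      rw [show ((a.1, a.2) : Sq) = a from rfl] at this
      unfold ind at this
      split_ifs at this <;> simp_all
    · have := hdN (a.1, a.2)
      unfold cN at this
      rw [show ((a.1, a.2) : Sq) = a from rfl] at this
      rw [show (s(((a.1 - 1, a.2) : Sq), a)) = s(a, ((a.1 - 1, a.2) : Sq)) from Sym2.eq_swap]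
        at this
      unfold ind at this
      split_ifs at this <;> simp_all
    · have := hdE (a.1, a.2 + 1)
      unfold cE at this
      rw [show (a.2 + 1 - 1 : ℤ) = a.2 from by ring] at this
      rw [show ((a.1, a.2) : Sq) = a from rfl] at this
      unfold ind at this
      split_ifs at this <;> simp_all
    · have := hdE (a.1, a.2)
      unfold cE at this
      rw [show ((a.1, a.2) : Sq) = a from rfl] at this
      rw [show (s(((a.1, a.2 - 1) : Sq), a)) = s(a, ((a.1, a.2 - 1) : Sq)) from Sym2.eq_swap]
        at this
      unfold ind at this
      split_ifs at this <;> simp_all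
  ext e
  constructor
  · intro he
    obtain ⟨x, y, -, -, hxy, rfl⟩ := hT0.1 e he
    exact (key x y hxy).mp he
  · intro he
    obtain ⟨x, y, -, -, hxy, rfl⟩ := hT1.1 e he
    exact (key x y hxy).mpr he

section Descent

variable {D : Finset Sq} {T0 T1 : Finset (Sym2 Sq)}

lemma flip_pairs_ne {p u w : Sq} (huw : Orient u w) :
    s(p, p + u) ≠ s(p + w, p + u + w) ∧ s(p, p + u) ≠ s(p, p + w) ∧
    s(p, p + u) ≠ s(p + u, p + u + w) ∧ s(p + w, p + u + w) ≠ s(p, p + w) ∧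
    s(p + w, p + u + w) ≠ s(p + u, p + u + w) ∧ s(p, p + w) ≠ s(p + u, p + u + w) := by
  obtain ⟨d1, d2, d3, d4, d5, d6⟩ := flip_distinct (p := p) huw
  refine ⟨?_, ?_, ?_, ?_, ?_, ?_⟩ <;>
    (intro h; rw [Sym2.eq_iff] at h; rcases h with ⟨h1, h2⟩ | ⟨h1, h2⟩) <;>
      first
        | exact d1 h1
        | exact (Ne.symm d1) h1
        | exact d1 h2
        | exact (Ne.symm d1) h2
        | exact d2 h1
        | exact (Ne.symm d2) h1
        | exact d2 h2
        | exact (Ne.symm d2) h2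
        | exact d3 h1
        | exact (Ne.symm d3) h1
        | exact d3 h2
        | exact (Ne.symm d3) h2
        | exact d4 h1
        | exact (Ne.symm d4) h1
        | exact d4 h2
        | exact (Ne.symm d4) h2
        | exact d5 h1
        | exact (Ne.symm d5) h1
        | exact d5 h2
        | exact (Ne.symm d5) h2
        | exact d6 h1
        | exact (Ne.symm d6) h1
        | exact d6 h2
        | exact (Ne.symm d6) h2

lemma flip_inv {T : Finset (Sym2 Sq)} {r1 r2 a1 a2 : Sym2 Sq} (hr1 : r1 ∈ T) (hr2 : r2 ∈ T)
    (ha1 : a1 ∉ T) (ha2 : a2 ∉ T) (hra : r1 ≠ a1) (hrb : r1 ≠ a2) (hrc : r2 ≠ a1)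
    (hrd : r2 ≠ a2) :
    T = (((T \ {r1, r2}) ∪ {a1, a2}) \ {a1, a2}) ∪ {r1, r2} := by
  ext e
  simp only [Finset.mem_union, Finset.mem_sdiff, Finset.mem_insert, Finset.mem_singleton]
  by_cases h1 : e = r1 <;> by_cases h2 : e = r2 <;> by_cases h3 : e = a1 <;>
    by_cases h4 : e = a2 <;> simp_all <;> tauto

/-- at a vertex where all four outgoing edge values of `T1`'s 1-form are positive,
`T1` admits a flip decreasing `Del` at that vertex. -/
lemma good_flip (hT0 : IsTiling2 D T0) (hT1 : IsTiling2 D T1) (z : Sq)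
    (hE : 0 < stepOmega T1 z (z.1 + 1, z.2)) (hW : 0 < stepOmega T1 z (z.1 - 1, z.2))
    (hN : 0 < stepOmega T1 z (z.1, z.2 + 1)) (hS : 0 < stepOmega T1 z (z.1, z.2 - 1)) :
    ∃ T1', (Flip2 T1 T1' ∨ Flip2 T1' T1) ∧ IsTiling2 D T1' ∧
      (∀ y, Del T0 T1' y = Del T0 T1 y - (if y = z then 1 else 0)
        + (if ((0, 0) : Sq) = z then 1 else 0)) := by
  rw [stepOmega_E] at hE
  rw [stepOmega_W] at hW
  rw [stepOmega_N] at hN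
  rw [stepOmega_S] at hS
  set p : Sq := (z.1 - 1, z.2 - 1) with hp
  have hzz : ((z.1 - 1 + 1 : ℤ), (z.2 - 1 + 1 : ℤ)) = z := by
    rw [Prod.ext_iff]; constructor <;> simp
  rcases chi_sq z with hχ | hχ
  · -- chi z = 1 : horizontal pair above and below z
    have hcN : s(((z.1 - 1, z.2) : Sq), z) ∈ T1 := by
      unfold oN at hN
      rw [hχ] at hN
      unfold cN ind at hN
      split_ifs at hN with hh
      · exact hh
      · omega
    have hcS : s(((z.1 - 1, z.2 - 1) : Sq), ((z.1, z.2 - 1) : Sq)) ∈ T1 := by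
      unfold oN at hS
      have hcc : chi (z.1, z.2 - 1) = -1 := by
        have := chi_N' z.1 (z.2 - 1)
        rw [show ((z.1 : ℤ), (z.2 - 1 + 1 : ℤ)) = z from by
          rw [Prod.ext_iff]; constructor <;> simp] at this
        omega
      rw [hcc] at hS
      unfold cN ind at hS
      simp only at hS
      split_ifs at hS with hh
      · exact hh
      · omega
    -- flip data with u = (1,0), w = (0,1)
    have huw : Orient ((1 : ℤ), (0 : ℤ)) ((0 : ℤ), (1 : ℤ)) := Or.inl ⟨rfl, rfl⟩
    have e_pu : p + ((1 : ℤ), (0 : ℤ)) = ((z.1, z.2 - 1) : Sq) := by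
      rw [hp, Prod.ext_iff]; constructor <;> simp
    have e_pw : p + ((0 : ℤ), (1 : ℤ)) = ((z.1 - 1, z.2) : Sq) := by
      rw [hp, Prod.ext_iff]; constructor <;> simp
    have e_puw : p + ((1 : ℤ), (0 : ℤ)) + ((0 : ℤ), (1 : ℤ)) = z := by
      rw [hp, Prod.ext_iff]; constructor <;> simp
    have e3 : p + ((1 : ℤ), (1 : ℤ)) = p + ((1 : ℤ), (0 : ℤ)) + ((0 : ℤ), (1 : ℤ)) := by
      rw [Prod.ext_iff]; constructor <;> simp
    have h1 : s(p, p + ((1 : ℤ), (0 : ℤ))) ∈ T1 := by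
      rw [e_pu, hp]
      exact hcS
    have h2 : s(p + ((0 : ℤ), (1 : ℤ)), p + ((1 : ℤ), (0 : ℤ)) + ((0 : ℤ), (1 : ℤ))) ∈ T1 := by
      rw [e_pw, e_puw]
      exact hcN
    have hchi : (((1 : ℤ), (0 : ℤ)) : Sq) = ((1 : ℤ), (0 : ℤ)) ∧ chi (p.1 + 1, p.2 + 1) = 1 := by
      refine ⟨rfl, ?_⟩
      rw [hp]
      simp only
      rw [hzz]
      exact hχ
    refine ⟨(T1 \ {s(p, p + ((1 : ℤ), (0 : ℤ))),
        s(p + ((0 : ℤ), (1 : ℤ)), p + ((1 : ℤ), (0 : ℤ)) + ((0 : ℤ), (1 : ℤ)))}) ∪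
        {s(p, p + ((0 : ℤ), (1 : ℤ))),
         s(p + ((1 : ℤ), (0 : ℤ)), p + ((1 : ℤ), (0 : ℤ)) + ((0 : ℤ), (1 : ℤ)))}, ?_, ?_, ?_⟩
    · left
      refine ⟨p, h1, ?_, ?_⟩
      · rw [e3]; exact h2
      · rw [e3]
    · exact flip_tiling hT1 huw h1 h2
    · have hD := flip_Del hT0 hT1 huw h1 h2 (Or.inl hchi)
      intro y
      have := hD y
      rw [hp] at this
      simp only at this
      rw [hzz] at this
      rw [hp]
      exact this
  · -- chi z = -1 : vertical pair left and right of z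
    have hcE : s(((z.1, z.2 - 1) : Sq), z) ∈ T1 := by
      unfold oE at hE
      rw [hχ] at hE
      unfold cE ind at hE
      split_ifs at hE with hh
      · exact hh
      · omega
    have hcW : s(((z.1 - 1, z.2 - 1) : Sq), ((z.1 - 1, z.2) : Sq)) ∈ T1 := by
      unfold oE at hW
      have hcc : chi (z.1 - 1, z.2) = 1 := by
        have := chi_E' (z.1 - 1) z.2
        rw [show ((z.1 - 1 + 1 : ℤ), (z.2 : ℤ)) = z from by
          rw [Prod.ext_iff]; constructor <;> simp] at this
        omega
      rw [hcc] at hW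
      unfold cE ind at hW
      simp only at hW
      split_ifs at hW with hh
      · exact hh
      · omega
    have huw : Orient ((0 : ℤ), (1 : ℤ)) ((1 : ℤ), (0 : ℤ)) := Or.inr ⟨rfl, rfl⟩
    have e_pu : p + ((0 : ℤ), (1 : ℤ)) = ((z.1 - 1, z.2) : Sq) := by
      rw [hp, Prod.ext_iff]; constructor <;> simp
    have e_pw : p + ((1 : ℤ), (0 : ℤ)) = ((z.1, z.2 - 1) : Sq) := by
      rw [hp, Prod.ext_iff]; constructor <;> simp
    have e_puw : p + ((0 : ℤ), (1 : ℤ)) + ((1 : ℤ), (0 : ℤ)) = z := by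
      rw [hp, Prod.ext_iff]; constructor <;> simp
    have e3 : p + ((1 : ℤ), (1 : ℤ)) = p + ((0 : ℤ), (1 : ℤ)) + ((1 : ℤ), (0 : ℤ)) := by
      rw [Prod.ext_iff]; constructor <;> simp
    have h1 : s(p, p + ((0 : ℤ), (1 : ℤ))) ∈ T1 := by
      rw [e_pu, hp]
      exact hcW
    have h2 : s(p + ((1 : ℤ), (0 : ℤ)), p + ((0 : ℤ), (1 : ℤ)) + ((1 : ℤ), (0 : ℤ))) ∈ T1 := by
      rw [e_pw, e_puw]
      exact hcE
    have hchi : (((0 : ℤ), (1 : ℤ)) : Sq) = ((0 : ℤ), (1 : ℤ)) ∧ chi (p.1 + 1, p.2 + 1) = -1 := by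
      refine ⟨rfl, ?_⟩
      rw [hp]
      simp only
      rw [hzz]
      exact hχ
    obtain ⟨n1, n2⟩ := flip_new_not_mem hT1 huw h1
    obtain ⟨q1, q2, q3, q4, q5, q6⟩ := flip_pairs_ne (p := p) huw
    refine ⟨(T1 \ {s(p, p + ((0 : ℤ), (1 : ℤ))),
        s(p + ((1 : ℤ), (0 : ℤ)), p + ((0 : ℤ), (1 : ℤ)) + ((1 : ℤ), (0 : ℤ)))}) ∪
        {s(p, p + ((1 : ℤ), (0 : ℤ))),
         s(p + ((0 : ℤ), (1 : ℤ)), p + ((0 : ℤ), (1 : ℤ)) + ((1 : ℤ), (0 : ℤ)))}, ?_, ?_, ?_⟩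
    · right
      refine ⟨p, ?_, ?_, ?_⟩
      · rw [mem_flip]
        right; left; rfl
      · rw [mem_flip, e3]
        right; right; rfl
      · rw [e3]
        exact flip_inv h1 h2 n1 n2 q2 q3 q4 q5
    · exact flip_tiling hT1 huw h1 h2
    · have hD := flip_Del hT0 hT1 huw h1 h2 (Or.inr hchi)
      intro y
      have := hD y
      rw [hp] at this
      simp only at this
      rw [hzz] at this
      rw [hp]
      exact this

lemma getLast_eq_of_eq {l1 l2 : List Sq} (e : l1 = l2) (h1 : l1 ≠ []) :
    l1.getLast h1 = l2.getLast (by rw [← e]; exact h1) := by subst e; rfl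

lemma getLast_append_single (l : List Sq) (x : Sq) : (l ++ [x]).getLast (by simp) = x := by
  induction l with
  | nil => rfl
  | cons a t ih =>
    exact (List.getLast_cons (by simp)).trans ih

/-- at a maximal vertex which is not good, there is a neighbour in the plateau along
which the 1-form of `T1` is negative. -/
lemma bad_step (hT0 : IsTiling2 D T0) (hT1 : IsTiling2 D T1) {M : ℤ}
    (hM : ∀ y : Sq, Del T0 T1 y ≤ M) (z : Sq) (hz : Del T0 T1 z = M)
    (hbad : ¬(0 < stepOmega T1 z (z.1 + 1, z.2) ∧ 0 < stepOmega T1 z (z.1 - 1, z.2) ∧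
      0 < stepOmega T1 z (z.1, z.2 + 1) ∧ 0 < stepOmega T1 z (z.1, z.2 - 1))) :
    ∃ w : Sq, Del T0 T1 w = M ∧ adj2 z w ∧ stepOmega T1 z w < 0 := by
  push_neg at hbad
  by_cases hE : 0 < stepOmega T1 z (z.1 + 1, z.2)
  · by_cases hW : 0 < stepOmega T1 z (z.1 - 1, z.2)
    · by_cases hN : 0 < stepOmega T1 z (z.1, z.2 + 1)
      · -- south edge is bad
        have hS := hbad hE hW hN
        refine ⟨(z.1, z.2 - 1), ?_, ?_, ?_⟩
        · have hdel := Del_up T0 T1 (z.1, z.2 - 1)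
          simp only at hdel
          rw [show (z.2 - 1 + 1 : ℤ) = z.2 from by ring] at hdel
          rw [show ((z.1, z.2) : Sq) = z from rfl] at hdel
          have hv := dN_vals T0 T1 (z.1, z.2 - 1)
          have h1 := oN_vals T1 (z.1, z.2 - 1)
          have h0 := oN_vals T0 (z.1, z.2 - 1)
          have hsub := oN_sub T0 T1 (z.1, z.2 - 1)
          rw [stepOmega_S] at hS
          have hMw := hM (z.1, z.2 - 1)
          omega
        · unfold adj2; simp
        · rw [stepOmega_S]
          have h1 := oN_vals T1 (z.1, z.2 - 1)
          rw [stepOmega_S] at hS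
          omega
      · refine ⟨(z.1, z.2 + 1), ?_, ?_, ?_⟩
        · have hdel := Del_up T0 T1 z
          have hv := dN_vals T0 T1 z
          have h1 := oN_vals T1 z
          have h0 := oN_vals T0 z
          have hsub := oN_sub T0 T1 z
          rw [stepOmega_N] at hN
          have hMw := hM (z.1, z.2 + 1)
          omega
        · unfold adj2; simp
        · rw [stepOmega_N]
          have h1 := oN_vals T1 z
          rw [stepOmega_N] at hN
          omega
    · refine ⟨(z.1 - 1, z.2), ?_, ?_, ?_⟩
      · have hdel := Del_right hT0 hT1 (z.1 - 1) z.2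
        rw [show (z.1 - 1 + 1 : ℤ) = z.1 from by ring] at hdel
        rw [show ((z.1, z.2) : Sq) = z from rfl] at hdel
        have hv := dE_vals T0 T1 (z.1 - 1, z.2)
        have h1 := oE_vals T1 (z.1 - 1, z.2)
        have h0 := oE_vals T0 (z.1 - 1, z.2)
        have hsub := oE_sub T0 T1 (z.1 - 1, z.2)
        rw [stepOmega_W] at hW
        have hMw := hM (z.1 - 1, z.2)
        omega
      · unfold adj2; simp
      · rw [stepOmega_W]
        have h1 := oE_vals T1 (z.1 - 1, z.2)
        rw [stepOmega_W] at hW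
        omega
  · refine ⟨(z.1 + 1, z.2), ?_, ?_, ?_⟩
    · have hdel := Del_right hT0 hT1 z.1 z.2
      rw [show ((z.1, z.2) : Sq) = z from rfl] at hdel
      have hv := dE_vals T0 T1 z
      have h1 := oE_vals T1 z
      have h0 := oE_vals T0 z
      have hsub := oE_sub T0 T1 z
      rw [stepOmega_E] at hE
      have hMw := hM (z.1 + 1, z.2)
      omega
    · unfold adj2; simp
    · rw [stepOmega_E]
      have h1 := oE_vals T1 z
      rw [stepOmega_E] at hE
      omega

/-- some vertex of the maximal plateau is good. -/
lemma exists_good_vertex (hSC : SimplyConn D) (hT0 : IsTiling2 D T0) (hT1 : IsTiling2 D T1)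
    {c0 : Sq} (hc0 : c0 ∉ D) {M : ℤ} (hM : ∀ y : Sq, Del T0 T1 y ≤ M)
    (hMK : Del T0 T1 c0 < M) (v0 : Sq) (hv0 : Del T0 T1 v0 = M) :
    ∃ z : Sq, Del T0 T1 z = M ∧ 0 < stepOmega T1 z (z.1 + 1, z.2) ∧
      0 < stepOmega T1 z (z.1 - 1, z.2) ∧ 0 < stepOmega T1 z (z.1, z.2 + 1) ∧
      0 < stepOmega T1 z (z.1, z.2 - 1) := by
  by_contra hno
  push_neg at hno
  have hstep : ∀ z : Sq, Del T0 T1 z = M →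
      ∃ w : Sq, Del T0 T1 w = M ∧ adj2 z w ∧ stepOmega T1 z w < 0 := by
    intro z hz
    apply bad_step hT0 hT1 hM z hz
    intro hcon
    obtain ⟨h1, h2, h3, h4⟩ := hcon
    have := hno z hz h1 h2 h3
    omega
  have hch : ∀ z : Sq, ∃ w : Sq, Del T0 T1 z = M →
      (Del T0 T1 w = M ∧ adj2 z w ∧ stepOmega T1 z w < 0) := by
    intro z
    by_cases h : Del T0 T1 z = M
    · obtain ⟨w, hw⟩ := hstep z h
      exact ⟨w, fun _ => hw⟩
    · exact ⟨z, fun hh => absurd hh h⟩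
  choose f hf using hch
  set seq : ℕ → Sq := fun n => f^[n] v0 with hseq
  have hseqM : ∀ n, Del T0 T1 (seq n) = M := by
    intro n
    induction n with
    | zero => exact hv0
    | succ k ih =>
      have : seq (k + 1) = f (seq k) := by
        rw [hseq]
        simp only
        rw [Function.iterate_succ_apply']
      rw [this]
      exact (hf (seq k) ih).1
  have hseqAdj : ∀ n, adj2 (seq n) (seq (n + 1)) ∧ stepOmega T1 (seq n) (seq (n + 1)) < 0 := by
    intro n
    have hit : seq (n + 1) = f (seq n) := by
      rw [hseq]
      simp only
      rw [Function.iterate_succ_apply']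
    rw [hit]
    exact ⟨(hf (seq n) (hseqM n)).2.1, (hf (seq n) (hseqM n)).2.2⟩
  have hseqD : ∀ n, seq n ∈ D := by
    intro n
    have := support_lemma hSC hT0 hT1 hc0 (v := seq n) (by rw [hseqM n]; omega)
    exact this.1
  -- pigeonhole
  obtain ⟨i, hi, j, hj, hij, hijeq⟩ :=
    Finset.exists_ne_map_eq_of_card_lt_of_maps_to
      (s := Finset.range (D.card + 1)) (t := D) (by simp) (fun n _ => hseqD n)
  wlog hlt : i < j generalizing i j
  · exact this j hj i hi (Ne.symm hij) hijeq.symm (by omega)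
  set n : ℕ := j - i with hn
  have hn1 : 1 ≤ n := by omega
  set g : ℕ → Sq := fun k => seq (i + k) with hg
  set L : List Sq := (List.range (n + 1)).map g with hL
  have hgadj : ∀ m, adj2 (g m) (g (m + 1)) ∧ stepOmega T1 (g m) (g (m + 1)) < 0 := by
    intro m
    have h := hseqAdj (i + m)
    have : i + m + 1 = i + (m + 1) := by omega
    rw [this] at h
    exact h
  have hLdecomp : L = g 0 :: (List.range n).map (g ∘ Nat.succ) := by
    rw [hL, List.range_succ_eq_map, List.map_cons, List.map_map]
  have hLlast : L.getLast (by rw [hLdecomp]; simp) = g n := by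
    have e : L = (List.range n).map g ++ [g n] := by
      rw [hL, List.range_succ, List.map_append]
      rfl
    rw [getLast_eq_of_eq e]
    exact getLast_append_single _ _
  have hclosed : L.getLast (by rw [hLdecomp]; simp) = g 0 := by
    rw [hLlast, hg]
    simp only
    rw [show i + n = j from by omega, show i + 0 = i from by omega, hijeq]
  have hchain : List.Chain' adj2 L := by
    rw [hL]; unfold List.Chain'; rw [List.isChain_map]
    rw [List.isChain_range_succ]
    intro m _
    exact (hgadj m).1
  have hneg : List.Chain' (fun x y => stepOmega T1 x y < 0) L := by
    rw [hL]; unfold List.Chain'; rw [List.isChain_map]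
    rw [List.isChain_range_succ]
    intro m _
    exact (hgadj m).2
  have hmemM : ∀ v ∈ L, Del T0 T1 v = M := by
    intro v hv
    rw [hL] at hv
    obtain ⟨k, -, rfl⟩ := List.mem_map.mp hv
    exact hseqM (i + k)
  have hint : ∀ v ∈ L, (v.1, v.2) ∈ D ∧ (v.1 - 1, v.2) ∈ D ∧ (v.1, v.2 - 1) ∈ D ∧
      (v.1 - 1, v.2 - 1) ∈ D := by
    intro v hv
    exact support_lemma hSC hT0 hT1 hc0 (by rw [hmemM v hv]; omega)
  -- contradiction between Green and negativity
  have hzero : stepSum (stepOmega T1) L = 0 := by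
    rw [hLdecomp] at hchain hint ⊢
    have hcl : ((g 0 :: (List.range n).map (g ∘ Nat.succ)).getLast (by simp)) = g 0 := by
      rw [getLast_eq_of_eq hLdecomp.symm]
      exact hclosed
    exact green hT1 hSC (g 0) ((List.range n).map (g ∘ Nat.succ)) hcl hchain hint
  have hlt0 : stepSum (stepOmega T1) L < 0 := by
    apply stepSum_neg_of L (by rw [hLdecomp]; simp; omega) hneg
  omega

/-- a cell strictly to the right of all of `D`. -/
def outside (D : Finset Sq) : Sq := (((D.sup fun c => c.1.natAbs : ℕ) : ℤ) + 1, 0)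

lemma outside_not_mem (D : Finset Sq) : outside D ∉ D := by
  intro h
  have h1 : (outside D).1.natAbs ≤ (D.sup fun c : Sq => c.1.natAbs) :=
    Finset.le_sup (f := fun c : Sq => c.1.natAbs) h
  have h2 : (outside D).1 = ((D.sup fun c : Sq => c.1.natAbs : ℕ) : ℤ) + 1 := rfl
  omega

/-- one step of the induction: a flip on `T1` decreasing the total height difference. -/
lemma decrease_step (hSC : SimplyConn D) (hT0 : IsTiling2 D T0) (hT1 : IsTiling2 D T1)
    {c0 : Sq} (hc0 : c0 ∉ D) {z0 : Sq} (hgt : Del T0 T1 c0 < Del T0 T1 z0) :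
    ∃ T1', (Flip2 T1 T1' ∨ Flip2 T1' T1) ∧ IsTiling2 D T1' ∧
      (∑ c ∈ D, (Del T0 T1' c - Del T0 T1' c0).natAbs) + 1
        = ∑ c ∈ D, (Del T0 T1 c - Del T0 T1 c0).natAbs := by
  classical
  set V := insert (Del T0 T1 c0) (D.image (Del T0 T1)) with hV
  have hVne : V.Nonempty := ⟨_, Finset.mem_insert_self _ _⟩
  set M := V.max' hVne with hMdef
  have hM : ∀ y : Sq, Del T0 T1 y ≤ M := by
    intro y
    by_cases hy : Del T0 T1 y = Del T0 T1 c0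
    · rw [hy]
      exact Finset.le_max' _ _ (Finset.mem_insert_self _ _)
    · have hyD := (support_lemma hSC hT0 hT1 hc0 hy).1
      rw [show ((y.1, y.2) : Sq) = y from rfl] at hyD
      exact Finset.le_max' _ _ (Finset.mem_insert_of_mem (Finset.mem_image_of_mem _ hyD))
  have hMK : Del T0 T1 c0 < M := lt_of_lt_of_le hgt (hM z0)
  have hMV : M ∈ insert (Del T0 T1 c0) (D.image (Del T0 T1)) := V.max'_mem hVne
  rcases Finset.mem_insert.mp hMV with hMc | hMi
  · rw [hMdef] at hMK
    omega
  · obtain ⟨v0, hv0D, hv0⟩ := Finset.mem_image.mp hMi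
    obtain ⟨z, hzM, h1, h2, h3, h4⟩ :=
      exists_good_vertex hSC hT0 hT1 hc0 hM hMK v0 hv0
    obtain ⟨T1', hflip, hT1', hDel⟩ := good_flip hT0 hT1 z h1 h2 h3 h4
    refine ⟨T1', hflip, hT1', ?_⟩
    have hzD : z ∈ D := by
      have := (support_lemma hSC hT0 hT1 hc0 (v := z) (by rw [hzM]; omega)).1
      rwa [show ((z.1, z.2) : Sq) = z from rfl] at this
    have hc0z : c0 ≠ z := fun h => hc0 (h ▸ hzD)
    have hK' : Del T0 T1' c0 = Del T0 T1 c0 + (if ((0, 0) : Sq) = z then 1 else 0) := by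
      rw [hDel c0, if_neg hc0z]
      ring
    have hptw : ∀ c, Del T0 T1' c - Del T0 T1' c0
        = Del T0 T1 c - Del T0 T1 c0 - (if c = z then 1 else 0) := by
      intro c
      rw [hDel c, hK']
      ring
    rw [← Finset.add_sum_erase _ (fun c => (Del T0 T1' c - Del T0 T1' c0).natAbs) hzD,
      ← Finset.add_sum_erase _ (fun c => (Del T0 T1 c - Del T0 T1 c0).natAbs) hzD]
    have herase : ∑ c ∈ D.erase z, (Del T0 T1' c - Del T0 T1' c0).natAbs
        = ∑ c ∈ D.erase z, (Del T0 T1 c - Del T0 T1 c0).natAbs := by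
      apply Finset.sum_congr rfl
      intro c hcz
      rw [hptw c, if_neg (Finset.ne_of_mem_erase hcz), sub_zero]
    have hzval : (Del T0 T1' z - Del T0 T1' c0).natAbs + 1
        = (Del T0 T1 z - Del T0 T1 c0).natAbs := by
      rw [hptw z, if_pos rfl, hzM]
      omega
    omega

lemma main_aux {D : Finset Sq} (hSC : SimplyConn D) :
    ∀ n : ℕ, ∀ T0 T1 : Finset (Sym2 Sq), IsTiling2 D T0 → IsTiling2 D T1 →
      (∑ c ∈ D, (Del T0 T1 c - Del T0 T1 (outside D)).natAbs) = n → FlipEquiv2 T0 T1 := by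
  intro n
  induction n using Nat.strong_induction_on with
  | _ n ih =>
    intro T0 T1 hT0 hT1 hμ
    by_cases heq : T0 = T1
    · rw [heq]
      exact Relation.ReflTransGen.refl
    · have hc0 := outside_not_mem D
      have hne : ∃ z : Sq, Del T0 T1 z ≠ Del T0 T1 (outside D) := by
        by_contra hcon
        push_neg at hcon
        exact heq (tilings_eq_of_Del_const hT0 hT1 hcon)
      obtain ⟨z0, hz0⟩ := hne
      rcases lt_or_gt_of_ne hz0 with hlt | hgt
      · -- minimum case : flip T0, via the swapped pair
        have hswap := Del_swap hT0 hT1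
        have hgt' : Del T1 T0 (outside D) < Del T1 T0 z0 := by
          rw [hswap, hswap]
          omega
        obtain ⟨T0', hflip, hT0', hmeas⟩ := decrease_step hSC hT1 hT0 hc0 hgt'
        have hswap' := Del_swap hT0' hT1
        have e1 : ∑ c ∈ D, (Del T1 T0 c - Del T1 T0 (outside D)).natAbs
            = ∑ c ∈ D, (Del T0 T1 c - Del T0 T1 (outside D)).natAbs := by
          apply Finset.sum_congr rfl
          intro c _
          rw [hswap, hswap]
          omega
        have e2 : ∑ c ∈ D, (Del T1 T0' c - Del T1 T0' (outside D)).natAbs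
            = ∑ c ∈ D, (Del T0' T1 c - Del T0' T1 (outside D)).natAbs := by
          apply Finset.sum_congr rfl
          intro c _
          rw [hswap', hswap']
          omega
        have hμ' : ∑ c ∈ D, (Del T0' T1 c - Del T0' T1 (outside D)).natAbs = n - 1 := by
          omega
        have hrec := ih (n - 1) (by omega) T0' T1 hT0' hT1 hμ'
        exact Relation.ReflTransGen.head hflip hrec
      · obtain ⟨T1', hflip, hT1', hmeas⟩ := decrease_step hSC hT0 hT1 hc0 hgt
        have hμ' : ∑ c ∈ D, (Del T0 T1' c - Del T0 T1' (outside D)).natAbs = n - 1 := by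
          omega
        have hrec := ih (n - 1) (by omega) T0 T1' hT0 hT1' hμ'
        exact Relation.ReflTransGen.tail hrec (Or.symm hflip)

end Descent

end Walks

end
end PFC


/-- in a simply connected planar quadriculated region, any two
domino tilings can be joined by a finite sequence of flips. -/
theorem planar_flip_connected (D : Finset Sq) (hD : IsQuadDisk D)
    (T0 T1 : Finset (Sym2 Sq))
    (h0 : IsTiling2 D T0) (h1 : IsTiling2 D T1) :
    FlipEquiv2 T0 T1 := by
  obtain ⟨-, -, hSC⟩ := hD
  exact PFC.main_aux hSC _ T0 T1 h0 h1 rfl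
end
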